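/- arXiv:2310.13493 — 7 statements merged into one kernel-verified Lean document; each statement's English description precedes it below -/
import Mathlib

section
/- Let m and n be even integers with m ≥ 4 and n ≥ 4. For each vertex (y,z) of C_m □ C_n, let C_4(y,z) denote the 4-cycle subgraph with vertices (y,z), (y+1,z), (y+1,z+1), and (y,z+1) (coordinates mod m and mod n respectively). Then the set of 4-cycles { C_4(y,z) : y + z is even } is a C_4-decomposition of C_m □ C_n. -/
open SimpleGraph

/-- `D` is a decomposition of the graph `G` into copies of the cycle graph `C_k`:
every subgraph in `D` is isomorphic to `C_k`, and every edge of `G` lies in the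
edge set of exactly one member of `D`. -/
def IsCycleDecomposition {V : Type*} (G : SimpleGraph V) (k : ℕ)
    (D : Set G.Subgraph) : Prop :=
  (∀ H ∈ D, Nonempty (H.coe ≃g cycleGraph k)) ∧
  ∀ e ∈ G.edgeSet, ∃! H : D, e ∈ (H : G.Subgraph).edgeSet

/-- The cycle `C_k` decomposes the graph `G`. -/
def CycleDecomposes (k : ℕ) {V : Type*} (G : SimpleGraph V) : Prop :=
  ∃ D : Set G.Subgraph, IsCycleDecomposition G k D

/-- The 4-cycle subgraph `C_4(y,z)` of the torus `C_m □ C_n`, with vertices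
`(y,z)`, `(y+1,z)`, `(y+1,z+1)`, `(y,z+1)` (coordinates mod `m` and mod `n`). -/
def checkerboardC4 (m n : ℕ) [NeZero m] [NeZero n] (y : Fin m) (z : Fin n) :
    (cycleGraph m □ cycleGraph n).Subgraph :=
  (⊤ : (cycleGraph m □ cycleGraph n).Subgraph).induce
    {(y, z), (y + 1, z), (y + 1, z + 1), (y, z + 1)}

/-!
The square `C_4(y,z)` is the image of `K₂ □ K₂ ≅ C_4` under the product of the edge embeddings
`{y, y+1} ↪ C_m` and `{z, z+1} ↪ C_n`, so it is a 4-cycle. A horizontal edge `(x,c)(x+1,c)` lies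
in `C_4(y,z)` exactly when `y = x` and `z ∈ {c, c-1}` (as `x - 1 ≠ x + 1` for `m ≥ 3`), and
because `n` is even the values `c` and `c - 1` have opposite parity even across the wrap-around
`0 ↦ n - 1`; so exactly one of the two squares has `y + z` even. Vertical edges are symmetric.
-/

namespace SimpleGraph

variable {α α' β β' V : Type*} {G : SimpleGraph α} {G' : SimpleGraph α'} {H : SimpleGraph β}
  {H' : SimpleGraph β'}

def Embedding.boxProd (f : G ↪g G') (g : H ↪g H') : (G □ H) ↪g (G' □ H') where
  toEmbedding := f.toEmbedding.prodMap g.toEmbedding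
  map_rel_iff' := by simp [boxProd_adj]

lemma Embedding.range_boxProd (f : G ↪g G') (g : H ↪g H') :
    Set.range (f.boxProd g) = Set.range f ×ˢ Set.range g :=
  Set.range_prodMap

def Adj.topEmbedding {G : SimpleGraph V} {u v : V} (h : G.Adj u v) :
    (⊤ : SimpleGraph (Fin 2)) ↪g G where
  toFun := ![u, v]
  inj' := by
    intro i j hij
    fin_cases i <;> fin_cases j <;> simp_all [h.ne, h.ne.symm]
  map_rel_iff' {i j} := by
    change G.Adj (![u, v] i) (![u, v] j) ↔ _
    fin_cases i <;> fin_cases j <;> simp [h, h.symm]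

lemma Adj.range_topEmbedding {G : SimpleGraph V} {u v : V} (h : G.Adj u v) :
    Set.range h.topEmbedding = {u, v} := by
  change Set.range ![u, v] = _
  rw [Matrix.range_cons, Matrix.range_cons, Matrix.range_empty, Set.union_empty,
    Set.singleton_union]

def cycleGraphFourIsoBoxProdTop :
    cycleGraph 4 ≃g (⊤ : SimpleGraph (Fin 2)) □ (⊤ : SimpleGraph (Fin 2)) where
  toFun := ![(0, 0), (1, 0), (1, 1), (0, 1)]
  invFun p := ![![0, 3], ![1, 2]] p.1 p.2
  left_inv := by decide
  right_inv := by decide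
  map_rel_iff' {i j} := by rw [boxProd_adj]; revert i j; decide

variable {m : ℕ} [NeZero m]

lemma cycleGraph_adj_iff_eq_add_one (hm : 2 ≤ m) {a b : Fin m} :
    (cycleGraph m).Adj a b ↔ b = a + 1 ∨ a = b + 1 := by
  obtain ⟨k, rfl⟩ : ∃ k, m = k + 2 := ⟨m - 2, by omega⟩
  rw [cycleGraph_adj, sub_eq_iff_eq_add', sub_eq_iff_eq_add', or_comm]

lemma cycleGraph_adj_add_one (hm : 2 ≤ m) (a : Fin m) : (cycleGraph m).Adj a (a + 1) :=
  (cycleGraph_adj_iff_eq_add_one hm).2 (Or.inl rfl)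

end SimpleGraph

namespace Fin

variable {m : ℕ} [NeZero m]

lemma sub_one_ne_add_one (hm : 3 ≤ m) (x : Fin m) : x - 1 ≠ x + 1 := by
  intro h
  have h2 : (1 : Fin m) + 1 = 0 := by
    rwa [sub_eq_iff_eq_add, add_assoc, left_eq_add] at h
  rw [Fin.ext_iff, Fin.val_add, Fin.val_one', Nat.one_mod_eq_one.2 (by omega), Fin.val_zero,
    Nat.mod_eq_of_lt (by omega)] at h2
  omega

lemma even_val_add_one_iff (hm : Even m) (x : Fin m) : Even (x + 1).val ↔ ¬Even x.val := by
  have h2 : 2 ≤ m := by obtain ⟨k, rfl⟩ := hm; have := NeZero.ne (k + k); omega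
  rw [Fin.val_add, Fin.val_one', Nat.one_mod_eq_one.2 (by omega), Nat.even_iff, Nat.even_iff,
    Nat.mod_mod_of_dvd _ (even_iff_two_dvd.1 hm), ← Nat.even_iff, ← Nat.even_iff,
    Nat.even_add_one]

lemma existsUnique_eq_or_eq_sub_one_and_even (hm : Even m) (k : ℕ) (c : Fin m) :
    ∃! z : Fin m, (z = c ∨ z = c - 1) ∧ Even (k + z.val) := by
  have hflip : Even (k + (c - 1).val) ↔ ¬Even (k + c.val) := by
    have := even_val_add_one_iff hm (c - 1)
    rw [sub_add_cancel] at this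
    rw [Nat.even_add, Nat.even_add, this]
    tauto
  by_cases hc : Even (k + c.val)
  · refine ⟨c, ⟨Or.inl rfl, hc⟩, ?_⟩
    rintro z ⟨rfl | rfl, hz⟩
    exacts [rfl, absurd hc (hflip.1 hz)]
  · refine ⟨c - 1, ⟨Or.inr rfl, hflip.2 hc⟩, ?_⟩
    rintro z ⟨rfl | rfl, hz⟩
    exacts [absurd hz hc, rfl]

end Fin

lemma existsUnique_setOf_of_existsUnique_prod {α β X : Type*} {P : α → β → Prop}
    {f : α → β → X} {Q : X → Prop} (h : ∃! p : α × β, P p.1 p.2 ∧ Q (f p.1 p.2)) :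
    ∃! x : {x | ∃ a b, P a b ∧ x = f a b}, Q x := by
  obtain ⟨⟨a, b⟩, ⟨hP, hQ⟩, huniq⟩ := h
  refine ⟨⟨f a b, a, b, hP, rfl⟩, hQ, ?_⟩
  rintro ⟨_, a', b', hP', rfl⟩ hQ'
  cases huniq (a', b') ⟨hP', hQ'⟩
  rfl

section Torus

variable {m n : ℕ} [NeZero m] [NeZero n] {y : Fin m} {z : Fin n}

lemma mem_checkerboardC4_verts {p : Fin m × Fin n} :
    p ∈ (checkerboardC4 m n y z).verts ↔ (y = p.1 ∨ y = p.1 - 1) ∧ (z = p.2 ∨ z = p.2 - 1) := by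
  simp only [checkerboardC4, Subgraph.induce_verts, Set.mem_insert_iff, Set.mem_singleton_iff,
    Prod.ext_iff, eq_sub_iff_add_eq]
  grind

lemma checkerboardC4_adj {p q : Fin m × Fin n} :
    (checkerboardC4 m n y z).Adj p q ↔ p ∈ (checkerboardC4 m n y z).verts ∧
      q ∈ (checkerboardC4 m n y z).verts ∧ (cycleGraph m □ cycleGraph n).Adj p q :=
  Iff.rfl

lemma nonempty_checkerboardC4_iso_cycleGraph (hm : 2 ≤ m) (hn : 2 ≤ n) (y : Fin m) (z : Fin n) :
    Nonempty ((checkerboardC4 m n y z).coe ≃g cycleGraph 4) := by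
  let φ := (cycleGraph_adj_add_one hm y).topEmbedding.boxProd
    (cycleGraph_adj_add_one hn z).topEmbedding
  have hφ : Set.range φ = {(y, z), (y + 1, z), (y + 1, z + 1), (y, z + 1)} := by
    rw [Embedding.range_boxProd, Adj.range_topEmbedding, Adj.range_topEmbedding]
    ext ⟨a, b⟩
    simp only [Set.mem_prod, Set.mem_insert_iff, Set.mem_singleton_iff, Prod.mk.injEq]
    tauto
  rw [checkerboardC4, ← hφ, ← induce_eq_coe_induce_top]
  exact ⟨(cycleGraphFourIsoBoxProdTop.trans φ.isoInduceRange).symm⟩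

lemma horizontal_mem_edgeSet_checkerboardC4_iff (hm : 3 ≤ m) {x : Fin m} {c : Fin n} :
    s((x, c), (x + 1, c)) ∈ (checkerboardC4 m n y z).edgeSet ↔ y = x ∧ (z = c ∨ z = c - 1) := by
  have hadj : (cycleGraph m □ cycleGraph n).Adj (x, c) (x + 1, c) :=
    boxProd_adj_left.2 (cycleGraph_adj_add_one (by omega) x)
  have hx : x - 1 ≠ x + 1 := Fin.sub_one_ne_add_one hm x
  rw [Subgraph.mem_edgeSet, checkerboardC4_adj, mem_checkerboardC4_verts,
    mem_checkerboardC4_verts, add_sub_cancel_right]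
  grind

lemma vertical_mem_edgeSet_checkerboardC4_iff (hn : 3 ≤ n) {x : Fin m} {c : Fin n} :
    s((x, c), (x, c + 1)) ∈ (checkerboardC4 m n y z).edgeSet ↔ (y = x ∨ y = x - 1) ∧ z = c := by
  have hadj : (cycleGraph m □ cycleGraph n).Adj (x, c) (x, c + 1) :=
    boxProd_adj_right.2 (cycleGraph_adj_add_one (by omega) c)
  have hc : c - 1 ≠ c + 1 := Fin.sub_one_ne_add_one hn c
  rw [Subgraph.mem_edgeSet, checkerboardC4_adj, mem_checkerboardC4_verts,
    mem_checkerboardC4_verts, add_sub_cancel_right]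
  grind

lemma existsUnique_checkerboardC4_horizontal (hm : 3 ≤ m) (hn : Even n) (x : Fin m) (c : Fin n) :
    ∃! p : Fin m × Fin n, Even (p.1.val + p.2.val) ∧
      s((x, c), (x + 1, c)) ∈ (checkerboardC4 m n p.1 p.2).edgeSet := by
  obtain ⟨z, ⟨hz, hpar⟩, huniq⟩ := Fin.existsUnique_eq_or_eq_sub_one_and_even hn x.val c
  refine ⟨(x, z), ⟨hpar, (horizontal_mem_edgeSet_checkerboardC4_iff hm).2 ⟨rfl, hz⟩⟩, ?_⟩
  rintro ⟨y', z'⟩ ⟨hpar', hmem⟩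
  obtain ⟨rfl, hz'⟩ := (horizontal_mem_edgeSet_checkerboardC4_iff hm).1 hmem
  rw [huniq z' ⟨hz', hpar'⟩]

lemma existsUnique_checkerboardC4_vertical (hn : 3 ≤ n) (hm : Even m) (x : Fin m) (c : Fin n) :
    ∃! p : Fin m × Fin n, Even (p.1.val + p.2.val) ∧
      s((x, c), (x, c + 1)) ∈ (checkerboardC4 m n p.1 p.2).edgeSet := by
  obtain ⟨y, ⟨hy, hpar⟩, huniq⟩ := Fin.existsUnique_eq_or_eq_sub_one_and_even hm c.val x
  refine ⟨(y, c), ⟨by rwa [add_comm], (vertical_mem_edgeSet_checkerboardC4_iff hn).2 ⟨hy, rfl⟩⟩, ?_⟩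
  rintro ⟨y', z'⟩ ⟨hpar', hmem⟩
  obtain ⟨hy', rfl⟩ := (vertical_mem_edgeSet_checkerboardC4_iff hn).1 hmem
  rw [huniq y' ⟨hy', by rwa [add_comm]⟩]

lemma boxProd_cycleGraph_edge_cases (hm : 2 ≤ m) (hn : 2 ≤ n) {e : Sym2 (Fin m × Fin n)}
    (he : e ∈ (cycleGraph m □ cycleGraph n).edgeSet) :
    (∃ x c, e = s((x, c), (x + 1, c))) ∨ ∃ x c, e = s((x, c), (x, c + 1)) := by
  induction e using Sym2.ind with
  | _ u v =>
    obtain ⟨a, b⟩ := u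
    obtain ⟨c, d⟩ := v
    rw [mem_edgeSet, boxProd_adj] at he
    rcases he with ⟨hadj, rfl : b = d⟩ | ⟨hadj, rfl : a = c⟩
    · rcases (cycleGraph_adj_iff_eq_add_one hm).1 hadj with rfl | rfl
      exacts [.inl ⟨a, b, rfl⟩, .inl ⟨c, b, Sym2.eq_swap⟩]
    · rcases (cycleGraph_adj_iff_eq_add_one hn).1 hadj with rfl | rfl
      exacts [.inr ⟨a, b, rfl⟩, .inr ⟨a, d, Sym2.eq_swap⟩]

end Torus

theorem checkerboard_is_c4_decomposition (m n : ℕ) [NeZero m] [NeZero n]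
    (hm : 4 ≤ m) (hn : 4 ≤ n) (hme : Even m) (hne : Even n) :
    IsCycleDecomposition (cycleGraph m □ cycleGraph n) 4
      {H | ∃ (y : Fin m) (z : Fin n), Even (y.val + z.val) ∧
        H = checkerboardC4 m n y z} := by
  refine ⟨?_, fun e he => ?_⟩
  · rintro H ⟨y, z, -, rfl⟩
    exact nonempty_checkerboardC4_iso_cycleGraph (by omega) (by omega) y z
  · refine existsUnique_setOf_of_existsUnique_prod (Q := fun H => e ∈ Subgraph.edgeSet H) ?_
    rcases boxProd_cycleGraph_edge_cases (by omega) (by omega) he with ⟨x, c, rfl⟩ | ⟨x, c, rfl⟩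
    exacts [existsUnique_checkerboardC4_horizontal (by omega) hne x c,
      existsUnique_checkerboardC4_vertical (by omega) hme x c]
end

section
/- The cycle C_6 decomposes the Cartesian product C_6 □ C_6. -/
open SimpleGraph

/-- The row subgraph at row `i`. -/
def rowSub (i : Fin 6) : (cycleGraph 6 □ cycleGraph 6).Subgraph where
  verts := {p | p.1 = i}
  Adj p q := p.1 = i ∧ q.1 = i ∧ (cycleGraph 6).Adj p.2 q.2
  adj_sub := fun ⟨hp, hq, h⟩ => Or.inr ⟨h, hp.trans hq.symm⟩
  edge_vert := fun ⟨hp, _, _⟩ => hp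
  symm := ⟨fun _ _ ⟨hp, hq, h⟩ => ⟨hq, hp, h.symm⟩⟩

/-- The column subgraph at column `j`. -/
def colSub (j : Fin 6) : (cycleGraph 6 □ cycleGraph 6).Subgraph where
  verts := {p | p.2 = j}
  Adj p q := p.2 = j ∧ q.2 = j ∧ (cycleGraph 6).Adj p.1 q.1
  adj_sub := fun ⟨hp, hq, h⟩ => Or.inl ⟨h, hp.trans hq.symm⟩
  edge_vert := fun ⟨hp, _, _⟩ => hp
  symm := ⟨fun _ _ ⟨hp, hq, h⟩ => ⟨hq, hp, h.symm⟩⟩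

noncomputable def rowIso (i : Fin 6) : (rowSub i).coe ≃g cycleGraph 6 where
  toFun p := p.1.2
  invFun j := ⟨(i, j), rfl⟩
  left_inv := fun ⟨p, hp⟩ => by
    apply Subtype.ext
    exact Prod.ext hp.symm rfl
  right_inv j := rfl
  map_rel_iff' := by
    rintro ⟨p, hp⟩ ⟨q, hq⟩
    exact ⟨fun h => ⟨hp, hq, h⟩, fun h => h.2.2⟩

noncomputable def colIso (j : Fin 6) : (colSub j).coe ≃g cycleGraph 6 where
  toFun p := p.1.1
  invFun i := ⟨(i, j), rfl⟩
  left_inv := fun ⟨p, hp⟩ => by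
    apply Subtype.ext
    exact Prod.ext rfl hp.symm
  right_inv i := rfl
  map_rel_iff' := by
    rintro ⟨p, hp⟩ ⟨q, hq⟩
    exact ⟨fun h => ⟨hp, hq, h⟩, fun h => h.2.2⟩

theorem c6_decomposes_C6_boxProd_C6 :
    CycleDecomposes 6 (cycleGraph 6 □ cycleGraph 6) := by
  refine ⟨(Set.range rowSub) ∪ (Set.range colSub), ?_, ?_⟩
  · rintro H (⟨i, rfl⟩ | ⟨j, rfl⟩)
    · exact ⟨rowIso i⟩
    · exact ⟨colIso j⟩
  · intro e he
    induction e with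
    | h p q =>
      rw [mem_edgeSet, boxProd_adj] at he
      rcases he with ⟨h1, h2⟩ | ⟨h1, h2⟩
      · -- horizontal: column p.2
        refine ⟨⟨colSub p.2, Or.inr ⟨p.2, rfl⟩⟩, ?_, ?_⟩
        · exact Subgraph.mem_edgeSet.mpr ⟨rfl, h2.symm, h1⟩
        · rintro ⟨H, (⟨i, rfl⟩ | ⟨j, rfl⟩)⟩ hmem
          · rcases Subgraph.mem_edgeSet.mp hmem with ⟨_, _, hadj⟩
            exact absurd (h2 ▸ hadj) ((cycleGraph 6).irrefl).elim
          · rcases Subgraph.mem_edgeSet.mp hmem with ⟨ha, _, _⟩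
            exact Subtype.ext (congrArg colSub ha.symm)
      · -- vertical: row p.1
        refine ⟨⟨rowSub p.1, Or.inl ⟨p.1, rfl⟩⟩, ?_, ?_⟩
        · exact Subgraph.mem_edgeSet.mpr ⟨rfl, h2.symm, h1⟩
        · rintro ⟨H, (⟨i, rfl⟩ | ⟨j, rfl⟩)⟩ hmem
          · rcases Subgraph.mem_edgeSet.mp hmem with ⟨ha, _, _⟩
            exact Subtype.ext (congrArg rowSub ha.symm)
          · rcases Subgraph.mem_edgeSet.mp hmem with ⟨_, _, hadj⟩
            exact absurd (h2 ▸ hadj) ((cycleGraph 6).irrefl).elim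
end

section
/- For every positive integer N, the cycle C_6 decomposes the Cartesian product C_6 □ C_{4N}. -/
open SimpleGraph

set_option linter.unusedSectionVars false

namespace C6Decomp

variable {W : Type*} {G : SimpleGraph W}

/-- The subgraph given by a closed hexagonal walk. -/
def hexSub (G : SimpleGraph W) (f : Fin 6 → W)
    (hadj : ∀ k, G.Adj (f k) (f (k + 1))) : G.Subgraph where
  verts := Set.range f
  Adj u v := ∃ k, (u = f k ∧ v = f (k + 1)) ∨ (u = f (k + 1) ∧ v = f k)
  adj_sub := by rintro u v ⟨k, ⟨rfl, rfl⟩ | ⟨rfl, rfl⟩⟩; exacts [hadj k, (hadj k).symm]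
  edge_vert := by rintro u v ⟨k, ⟨rfl, _⟩ | ⟨rfl, _⟩⟩ <;> exact Set.mem_range_self _
  symm := ⟨by rintro u v ⟨k, h | h⟩; exacts [⟨k, .inr h.symm⟩, ⟨k, .inl h.symm⟩]⟩

lemma hexSub_iso (f : Fin 6 → W) (hinj : Function.Injective f)
    (hadj : ∀ k, G.Adj (f k) (f (k + 1))) :
    Nonempty ((hexSub G f hadj).coe ≃g cycleGraph 6) := by
  have key : ∀ x y : Fin 6,
      (∃ k : Fin 6, (x = k ∧ y = k + 1) ∨ (x = k + 1 ∧ y = k)) ↔ (cycleGraph 6).Adj x y := by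
    decide
  refine ⟨(Iso.symm ⟨Equiv.ofInjective f hinj, ?_⟩ : _)⟩
  intro x y
  show (hexSub G f hadj).Adj (f x) (f y) ↔ _
  rw [← key x y]
  unfold hexSub
  simp only [hinj.eq_iff]

lemma hexSub_adj (f : Fin 6 → W) (hadj : ∀ k, G.Adj (f k) (f (k + 1))) (u v : W) :
    (hexSub G f hadj).Adj u v ↔
      ∃ k, (u = f k ∧ v = f (k + 1)) ∨ (u = f (k + 1) ∧ v = f k) := Iff.rfl

variable (N : ℕ) [NeZero (4 * N)]

lemma hm4 : 4 ≤ 4 * N := by have := NeZero.ne (4 * N); omega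

lemma val_one' : (1 : Fin (4 * N)).val = 1 := by
  rw [Fin.val_one']; exact Nat.mod_eq_of_lt (by have := hm4 N; omega)

lemma val_add_one (j : Fin (4 * N)) : (j + 1).val = (j.val + 1) % (4 * N) := by
  rw [Fin.add_def, val_one']

open Fin.CommRing in
lemma val_two : (2 : Fin (4 * N)).val = 2 := by
  have : (2 : Fin (4 * N)) = 1 + 1 := by norm_num
  rw [this, Fin.add_def, val_one']
  exact Nat.mod_eq_of_lt (by have := hm4 N; omega)

lemma val_add_two (j : Fin (4 * N)) : (j + 2).val = (j.val + 2) % (4 * N) := by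
  rw [Fin.add_def, val_two]

lemma mod4_add_one (j : Fin (4 * N)) : (j + 1).val % 4 = (j.val % 4 + 1) % 4 := by
  rw [val_add_one, Nat.mod_mod_of_dvd _ ⟨N, rfl⟩]; omega

lemma mod4_add_two (j : Fin (4 * N)) : (j + 2).val % 4 = (j.val % 4 + 2) % 4 := by
  rw [val_add_two, Nat.mod_mod_of_dvd _ ⟨N, rfl⟩]; omega

lemma mod4_sub_one (c : Fin (4 * N)) : (c - 1).val % 4 = (c.val % 4 + 3) % 4 := by
  have h := mod4_add_one N (c - 1)
  rw [sub_add_cancel] at h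
  omega

lemma mod4_sub_two (c : Fin (4 * N)) : (c - 2).val % 4 = (c.val % 4 + 2) % 4 := by
  have h := mod4_add_two N (c - 2)
  rw [sub_add_cancel] at h
  omega

lemma adj_succ (j : Fin (4 * N)) : (cycleGraph (4 * N)).Adj j (j + 1) := by
  rw [cycleGraph_adj']
  right
  rw [add_sub_cancel_left, val_one']

lemma fin6_succ_ne : ∀ a : Fin 6, ¬(a + 1 = a) := by decide
lemma val6_add_one : ∀ a : Fin 6, (a + 1).val = (a.val + 1) % 6 := by decide
lemma val6_sub_one : ∀ a : Fin 6, (a - 1).val = (a.val + 5) % 6 := by decide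

abbrev GG := cycleGraph 6 □ cycleGraph (4 * N)

def colF (j : Fin (4 * N)) : Fin 6 → Fin 6 × Fin (4 * N) := fun k => (k, j)

def rectF (i : Fin 6) (j : Fin (4 * N)) : Fin 6 → Fin 6 × Fin (4 * N) :=
  ![(i, j), (i, j + 1), (i, j + 2), (i + 1, j + 2), (i + 1, j + 1), (i + 1, j)]

lemma colF_adj (j : Fin (4 * N)) : ∀ k, (GG N).Adj (colF N j k) (colF N j (k + 1)) := by
  intro k
  exact (boxProd_adj_left).2 (by revert k; decide)

open Fin.CommRing in
lemma rectF_adj (i : Fin 6) (j : Fin (4 * N)) :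
    ∀ k, (GG N).Adj (rectF N i j k) (rectF N i j (k + 1)) := by
  have h2 : j + 2 = (j + 1) + 1 := by ring
  intro k
  fin_cases k
  · exact (boxProd_adj_right).2 (adj_succ N j)
  · exact (boxProd_adj_right).2 (h2 ▸ adj_succ N (j + 1))
  · exact (boxProd_adj_left).2 (by revert i; decide)
  · exact (boxProd_adj_right).2 (h2 ▸ adj_succ N (j + 1)).symm
  · exact (boxProd_adj_right).2 (adj_succ N j).symm
  · exact (boxProd_adj_left).2 (by revert i; decide)

lemma col_inj (j : Fin (4 * N)) : Function.Injective (colF N j) := by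
  intro a b h
  exact (Prod.mk.injEq _ _ _ _ ▸ h).1

lemma fone_ne : (1 : Fin (4 * N)) ≠ 0 := by
  intro h; have := congrArg Fin.val h; rw [val_one'] at this; simp at this

lemma ftwo_ne : (2 : Fin (4 * N)) ≠ 0 := by
  intro h; have := congrArg Fin.val h; rw [val_two] at this; simp at this

lemma add_one_ne (j : Fin (4 * N)) : j + 1 ≠ j := by
  intro h
  exact fone_ne N (add_eq_left.mp h)

lemma add_two_ne (j : Fin (4 * N)) : j + 2 ≠ j := by
  intro h
  exact ftwo_ne N (add_eq_left.mp h)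

lemma add_two_ne_one (j : Fin (4 * N)) : j + 2 ≠ j + 1 := by
  intro h
  have h21 : (2 : Fin (4 * N)) = 1 := add_left_cancel h
  have := congrArg Fin.val h21
  rw [val_two, val_one'] at this
  exact absurd this (by norm_num)

@[simp] lemma rectF_0 (i : Fin 6) (j : Fin (4 * N)) : rectF N i j 0 = (i, j) := rfl
@[simp] lemma rectF_1 (i : Fin 6) (j : Fin (4 * N)) : rectF N i j 1 = (i, j + 1) := rfl
@[simp] lemma rectF_2 (i : Fin 6) (j : Fin (4 * N)) : rectF N i j 2 = (i, j + 2) := rfl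
@[simp] lemma rectF_3 (i : Fin 6) (j : Fin (4 * N)) : rectF N i j 3 = (i + 1, j + 2) := rfl
@[simp] lemma rectF_4 (i : Fin 6) (j : Fin (4 * N)) : rectF N i j 4 = (i + 1, j + 1) := rfl
@[simp] lemma rectF_5 (i : Fin 6) (j : Fin (4 * N)) : rectF N i j 5 = (i + 1, j) := rfl

lemma rect_inj (i : Fin 6) (j : Fin (4 * N)) : Function.Injective (rectF N i j) := by
  have hi : ∀ a : Fin 6, a + 1 ≠ a := by decide
  have h1 := add_one_ne N j
  have h2 := add_two_ne N j
  have h21 := add_two_ne_one N j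
  intro a b h
  fin_cases a <;> fin_cases b <;> simp_all [Prod.ext_iff]

def colHex (j : Fin (4 * N)) : (GG N).Subgraph := hexSub _ (colF N j) (colF_adj N j)

def rectHex (i : Fin 6) (j : Fin (4 * N)) : (GG N).Subgraph :=
  hexSub _ (rectF N i j) (rectF_adj N i j)

def DD : Set ((GG N).Subgraph) :=
  { H | (∃ j : Fin (4 * N), j.val % 4 % 2 = 0 ∧ H = colHex N j) ∨
        (∃ (i : Fin 6) (j : Fin (4 * N)),
          ((j.val % 4 = 1 ∧ i.val % 2 = 0) ∨ (j.val % 4 = 3 ∧ i.val % 2 = 1)) ∧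
          H = rectHex N i j) }

lemma ex6 (P : Fin 6 → Prop) : (∃ k, P k) ↔ P 0 ∨ P 1 ∨ P 2 ∨ P 3 ∨ P 4 ∨ P 5 := by
  constructor
  · rintro ⟨k, h⟩
    fin_cases k <;> tauto
  · rintro (h | h | h | h | h | h) <;> exact ⟨_, h⟩

lemma colHex_adj (j : Fin (4 * N)) (u v : Fin 6 × Fin (4 * N)) :
    (colHex N j).Adj u v ↔
      ∃ k : Fin 6, (u = (k, j) ∧ v = (k + 1, j)) ∨ (u = (k + 1, j) ∧ v = (k, j)) := Iff.rfl

lemma rectHex_adj (i : Fin 6) (j : Fin (4 * N)) (u v : Fin 6 × Fin (4 * N)) :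
    (rectHex N i j).Adj u v ↔
      ((u = (i, j) ∧ v = (i, j + 1)) ∨ (u = (i, j + 1) ∧ v = (i, j))) ∨
      ((u = (i, j + 1) ∧ v = (i, j + 2)) ∨ (u = (i, j + 2) ∧ v = (i, j + 1))) ∨
      ((u = (i, j + 2) ∧ v = (i + 1, j + 2)) ∨ (u = (i + 1, j + 2) ∧ v = (i, j + 2))) ∨
      ((u = (i + 1, j + 2) ∧ v = (i + 1, j + 1)) ∨ (u = (i + 1, j + 1) ∧ v = (i + 1, j + 2))) ∨
      ((u = (i + 1, j + 1) ∧ v = (i + 1, j)) ∨ (u = (i + 1, j) ∧ v = (i + 1, j + 1))) ∨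
      ((u = (i + 1, j) ∧ v = (i, j)) ∨ (u = (i, j) ∧ v = (i + 1, j))) := by
  rw [rectHex, hexSub_adj, ex6]
  simp only [show (0 : Fin 6) + 1 = 1 from rfl, show (1 : Fin 6) + 1 = 2 from rfl,
    show (2 : Fin 6) + 1 = 3 from rfl, show (3 : Fin 6) + 1 = 4 from rfl,
    show (4 : Fin 6) + 1 = 5 from rfl, show (5 : Fin 6) + 1 = 0 from rfl,
    rectF_0, rectF_1, rectF_2, rectF_3, rectF_4, rectF_5]

lemma row_unique_even (i : Fin 6) (c : Fin (4 * N)) (hR : c.val % 4 % 2 = 0)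
    (H' : (GG N).Subgraph) (hm : H' ∈ DD N) (h : H'.Adj (i, c) (i + 1, c)) :
    H' = colHex N c := by
  rcases hm with ⟨j', hr', rfl⟩ | ⟨i'', j'', hc', rfl⟩
  · obtain ⟨k, ⟨h1, h2⟩ | ⟨h1, h2⟩⟩ := (colHex_adj N j' _ _).1 h <;>
      rw [Prod.mk.injEq] at h1 <;> rw [← h1.2]
  · exfalso
    rw [rectHex_adj] at h
    rcases h with (⟨h1, h2⟩ | ⟨h1, h2⟩) | (⟨h1, h2⟩ | ⟨h1, h2⟩) | (⟨h1, h2⟩ | ⟨h1, h2⟩) |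
      (⟨h1, h2⟩ | ⟨h1, h2⟩) | (⟨h1, h2⟩ | ⟨h1, h2⟩) | (⟨h1, h2⟩ | ⟨h1, h2⟩) <;>
      rw [Prod.mk.injEq] at h1 h2 <;>
      first
      | exact absurd (h2.1.trans h1.1.symm) (fin6_succ_ne _)
      | (have r1 := congrArg Fin.val h1.1
         have r2 := congrArg Fin.val h2.1
         have q1 := congrArg (fun x : Fin (4 * N) => x.val % 4) h1.2
         have q2 := congrArg (fun x : Fin (4 * N) => x.val % 4) h2.2
         try simp only [mod4_add_one, mod4_add_two] at q1 q2
         try simp only [val6_add_one] at r1 r2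
         omega)

lemma row_unique_same (i : Fin 6) (c : Fin (4 * N))
    (hcond : (c.val % 4 = 1 ∧ i.val % 2 = 0) ∨ (c.val % 4 = 3 ∧ i.val % 2 = 1))
    (H' : (GG N).Subgraph) (hm : H' ∈ DD N) (h : H'.Adj (i, c) (i + 1, c)) :
    H' = rectHex N i c := by
  rcases hm with ⟨j', hr', rfl⟩ | ⟨i'', j'', hc', rfl⟩
  · exfalso
    obtain ⟨k, ⟨h1, h2⟩ | ⟨h1, h2⟩⟩ := (colHex_adj N j' _ _).1 h <;>
      rw [Prod.mk.injEq] at h1 <;>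
      · have q1 := congrArg (fun x : Fin (4 * N) => x.val % 4) h1.2
        omega
  · rw [rectHex_adj] at h
    rcases h with (⟨h1, h2⟩ | ⟨h1, h2⟩) | (⟨h1, h2⟩ | ⟨h1, h2⟩) | (⟨h1, h2⟩ | ⟨h1, h2⟩) |
      (⟨h1, h2⟩ | ⟨h1, h2⟩) | (⟨h1, h2⟩ | ⟨h1, h2⟩) | (⟨h1, h2⟩ | ⟨h1, h2⟩) <;>
      rw [Prod.mk.injEq] at h1 h2 <;>
      first
      | exact absurd (h2.1.trans h1.1.symm) (fin6_succ_ne _)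
      | (exfalso
         have r1 := congrArg Fin.val h1.1
         have r2 := congrArg Fin.val h2.1
         have q1 := congrArg (fun x : Fin (4 * N) => x.val % 4) h1.2
         have q2 := congrArg (fun x : Fin (4 * N) => x.val % 4) h2.2
         try simp only [mod4_add_one, mod4_add_two] at q1 q2
         try simp only [val6_add_one] at r1 r2
         omega)
      | (obtain rfl : i'' = i := h1.1.symm
         obtain rfl : j'' = c := h1.2.symm
         rfl)

lemma row_unique_shift (i : Fin 6) (c : Fin (4 * N))
    (hcond : (c.val % 4 = 1 ∧ i.val % 2 = 1) ∨ (c.val % 4 = 3 ∧ i.val % 2 = 0))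
    (H' : (GG N).Subgraph) (hm : H' ∈ DD N) (h : H'.Adj (i, c) (i + 1, c)) :
    H' = rectHex N i (c - 2) := by
  rcases hm with ⟨j', hr', rfl⟩ | ⟨i'', j'', hc', rfl⟩
  · exfalso
    obtain ⟨k, ⟨h1, h2⟩ | ⟨h1, h2⟩⟩ := (colHex_adj N j' _ _).1 h <;>
      rw [Prod.mk.injEq] at h1 <;>
      · have q1 := congrArg (fun x : Fin (4 * N) => x.val % 4) h1.2
        omega
  · rw [rectHex_adj] at h
    rcases h with (⟨h1, h2⟩ | ⟨h1, h2⟩) | (⟨h1, h2⟩ | ⟨h1, h2⟩) | (⟨h1, h2⟩ | ⟨h1, h2⟩) |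
      (⟨h1, h2⟩ | ⟨h1, h2⟩) | (⟨h1, h2⟩ | ⟨h1, h2⟩) | (⟨h1, h2⟩ | ⟨h1, h2⟩) <;>
      rw [Prod.mk.injEq] at h1 h2 <;>
      first
      | exact absurd (h2.1.trans h1.1.symm) (fin6_succ_ne _)
      | (exfalso
         have r1 := congrArg Fin.val h1.1
         have r2 := congrArg Fin.val h2.1
         have q1 := congrArg (fun x : Fin (4 * N) => x.val % 4) h1.2
         have q2 := congrArg (fun x : Fin (4 * N) => x.val % 4) h2.2
         try simp only [mod4_add_one, mod4_add_two] at q1 q2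
         try simp only [val6_add_one] at r1 r2
         omega)
      | (obtain rfl : i'' = i := h1.1.symm
         obtain rfl : j'' = c - 2 := eq_sub_of_add_eq h1.2.symm
         rfl)

lemma col_unique_A (i : Fin 6) (c : Fin (4 * N))
    (hcond : (c.val % 4 = 1 ∧ i.val % 2 = 0) ∨ (c.val % 4 = 3 ∧ i.val % 2 = 1))
    (H' : (GG N).Subgraph) (hm : H' ∈ DD N) (h : H'.Adj (i, c) (i, c + 1)) :
    H' = rectHex N i c := by
  rcases hm with ⟨j', hr', rfl⟩ | ⟨i'', j'', hc', rfl⟩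
  · exfalso
    obtain ⟨k, ⟨h1, h2⟩ | ⟨h1, h2⟩⟩ := (colHex_adj N j' _ _).1 h <;>
      rw [Prod.mk.injEq] at h1 h2 <;>
      exact absurd (h2.2.trans h1.2.symm) (add_one_ne N c)
  · rw [rectHex_adj] at h
    rcases h with (⟨h1, h2⟩ | ⟨h1, h2⟩) | (⟨h1, h2⟩ | ⟨h1, h2⟩) | (⟨h1, h2⟩ | ⟨h1, h2⟩) |
      (⟨h1, h2⟩ | ⟨h1, h2⟩) | (⟨h1, h2⟩ | ⟨h1, h2⟩) | (⟨h1, h2⟩ | ⟨h1, h2⟩) <;>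
      rw [Prod.mk.injEq] at h1 h2 <;>
      first
      | (exfalso
         have r1 := congrArg Fin.val h1.1
         have r2 := congrArg Fin.val h2.1
         have q1 := congrArg (fun x : Fin (4 * N) => x.val % 4) h1.2
         have q2 := congrArg (fun x : Fin (4 * N) => x.val % 4) h2.2
         try simp only [mod4_add_one, mod4_add_two] at q1 q2
         try simp only [val6_add_one] at r1 r2
         omega)
      | (obtain rfl : i'' = i := h1.1.symm
         obtain rfl : j'' = c := h1.2.symm
         rfl)

lemma col_unique_B (i : Fin 6) (c : Fin (4 * N))
    (hcond : (c.val % 4 = 1 ∧ i.val % 2 = 1) ∨ (c.val % 4 = 3 ∧ i.val % 2 = 0))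
    (H' : (GG N).Subgraph) (hm : H' ∈ DD N) (h : H'.Adj (i, c) (i, c + 1)) :
    H' = rectHex N (i - 1) c := by
  rcases hm with ⟨j', hr', rfl⟩ | ⟨i'', j'', hc', rfl⟩
  · exfalso
    obtain ⟨k, ⟨h1, h2⟩ | ⟨h1, h2⟩⟩ := (colHex_adj N j' _ _).1 h <;>
      rw [Prod.mk.injEq] at h1 h2 <;>
      exact absurd (h2.2.trans h1.2.symm) (add_one_ne N c)
  · rw [rectHex_adj] at h
    rcases h with (⟨h1, h2⟩ | ⟨h1, h2⟩) | (⟨h1, h2⟩ | ⟨h1, h2⟩) | (⟨h1, h2⟩ | ⟨h1, h2⟩) |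
      (⟨h1, h2⟩ | ⟨h1, h2⟩) | (⟨h1, h2⟩ | ⟨h1, h2⟩) | (⟨h1, h2⟩ | ⟨h1, h2⟩) <;>
      rw [Prod.mk.injEq] at h1 h2 <;>
      first
      | (exfalso
         have r1 := congrArg Fin.val h1.1
         have r2 := congrArg Fin.val h2.1
         have q1 := congrArg (fun x : Fin (4 * N) => x.val % 4) h1.2
         have q2 := congrArg (fun x : Fin (4 * N) => x.val % 4) h2.2
         try simp only [mod4_add_one, mod4_add_two] at q1 q2
         try simp only [val6_add_one] at r1 r2
         omega)
      | (obtain rfl : i'' = i - 1 := eq_sub_of_add_eq h1.1.symm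
         obtain rfl : j'' = c := h1.2.symm
         rfl)

lemma col_unique_C (i : Fin 6) (c : Fin (4 * N))
    (hcond : (c.val % 4 = 2 ∧ i.val % 2 = 0) ∨ (c.val % 4 = 0 ∧ i.val % 2 = 1))
    (H' : (GG N).Subgraph) (hm : H' ∈ DD N) (h : H'.Adj (i, c) (i, c + 1)) :
    H' = rectHex N i (c - 1) := by
  rcases hm with ⟨j', hr', rfl⟩ | ⟨i'', j'', hc', rfl⟩
  · exfalso
    obtain ⟨k, ⟨h1, h2⟩ | ⟨h1, h2⟩⟩ := (colHex_adj N j' _ _).1 h <;>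
      rw [Prod.mk.injEq] at h1 h2 <;>
      exact absurd (h2.2.trans h1.2.symm) (add_one_ne N c)
  · rw [rectHex_adj] at h
    rcases h with (⟨h1, h2⟩ | ⟨h1, h2⟩) | (⟨h1, h2⟩ | ⟨h1, h2⟩) | (⟨h1, h2⟩ | ⟨h1, h2⟩) |
      (⟨h1, h2⟩ | ⟨h1, h2⟩) | (⟨h1, h2⟩ | ⟨h1, h2⟩) | (⟨h1, h2⟩ | ⟨h1, h2⟩) <;>
      rw [Prod.mk.injEq] at h1 h2 <;>
      first
      | (exfalso
         have r1 := congrArg Fin.val h1.1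
         have r2 := congrArg Fin.val h2.1
         have q1 := congrArg (fun x : Fin (4 * N) => x.val % 4) h1.2
         have q2 := congrArg (fun x : Fin (4 * N) => x.val % 4) h2.2
         try simp only [mod4_add_one, mod4_add_two] at q1 q2
         try simp only [val6_add_one] at r1 r2
         omega)
      | (obtain rfl : i'' = i := h1.1.symm
         obtain rfl : j'' = c - 1 := eq_sub_of_add_eq h1.2.symm
         rfl)

lemma col_unique_D (i : Fin 6) (c : Fin (4 * N))
    (hcond : (c.val % 4 = 2 ∧ i.val % 2 = 1) ∨ (c.val % 4 = 0 ∧ i.val % 2 = 0))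
    (H' : (GG N).Subgraph) (hm : H' ∈ DD N) (h : H'.Adj (i, c) (i, c + 1)) :
    H' = rectHex N (i - 1) (c - 1) := by
  rcases hm with ⟨j', hr', rfl⟩ | ⟨i'', j'', hc', rfl⟩
  · exfalso
    obtain ⟨k, ⟨h1, h2⟩ | ⟨h1, h2⟩⟩ := (colHex_adj N j' _ _).1 h <;>
      rw [Prod.mk.injEq] at h1 h2 <;>
      exact absurd (h2.2.trans h1.2.symm) (add_one_ne N c)
  · rw [rectHex_adj] at h
    rcases h with (⟨h1, h2⟩ | ⟨h1, h2⟩) | (⟨h1, h2⟩ | ⟨h1, h2⟩) | (⟨h1, h2⟩ | ⟨h1, h2⟩) |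
      (⟨h1, h2⟩ | ⟨h1, h2⟩) | (⟨h1, h2⟩ | ⟨h1, h2⟩) | (⟨h1, h2⟩ | ⟨h1, h2⟩) <;>
      rw [Prod.mk.injEq] at h1 h2 <;>
      first
      | (exfalso
         have r1 := congrArg Fin.val h1.1
         have r2 := congrArg Fin.val h2.1
         have q1 := congrArg (fun x : Fin (4 * N) => x.val % 4) h1.2
         have q2 := congrArg (fun x : Fin (4 * N) => x.val % 4) h2.2
         try simp only [mod4_add_one, mod4_add_two] at q1 q2
         try simp only [val6_add_one] at r1 r2
         omega)
      | (obtain rfl : i'' = i - 1 := eq_sub_of_add_eq h1.1.symm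
         obtain rfl : j'' = c - 1 := eq_sub_of_add_eq h1.2.symm
         rfl)

open Fin.CommRing in
lemma cover_row (i : Fin 6) (c : Fin (4 * N)) :
    ∃! K : ↥(DD N), s((i, c), (i + 1, c)) ∈ (K : (GG N).Subgraph).edgeSet := by
  have hRc : c.val % 4 = 0 ∨ c.val % 4 = 1 ∨ c.val % 4 = 2 ∨ c.val % 4 = 3 := by omega
  have hsi : i.val % 2 = 0 ∨ i.val % 2 = 1 := by omega
  have hc2 : c - 2 + 2 = c := by ring
  have hadjc : (colHex N c).Adj (i, c) (i + 1, c) := ⟨i, .inl ⟨rfl, rfl⟩⟩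
  have hadjs : (rectHex N i c).Adj (i, c) (i + 1, c) := by
    rw [rectHex_adj]
    exact Or.inr (Or.inr (Or.inr (Or.inr (Or.inr (Or.inr ⟨rfl, rfl⟩)))))
  have hadjt : (rectHex N i (c - 2)).Adj (i, c) (i + 1, c) := by
    rw [rectHex_adj]
    refine Or.inr (Or.inr (Or.inl (Or.inl ⟨?_, ?_⟩))) <;> rw [hc2]
  rcases hRc with hR | hR | hR | hR
  · refine ⟨⟨colHex N c, Or.inl ⟨c, by omega, rfl⟩⟩, Subgraph.mem_edgeSet.2 hadjc, ?_⟩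
    rintro ⟨H', hm'⟩ he'
    exact Subtype.ext (row_unique_even N i c (by omega) H' hm' (Subgraph.mem_edgeSet.1 he'))
  · rcases hsi with hs | hs
    · refine ⟨⟨rectHex N i c, Or.inr ⟨i, c, Or.inl ⟨hR, hs⟩, rfl⟩⟩,
        Subgraph.mem_edgeSet.2 hadjs, ?_⟩
      rintro ⟨H', hm'⟩ he'
      exact Subtype.ext (row_unique_same N i c (Or.inl ⟨hR, hs⟩) H' hm'
        (Subgraph.mem_edgeSet.1 he'))
    · refine ⟨⟨rectHex N i (c - 2), Or.inr ⟨i, c - 2,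
        Or.inr ⟨by rw [mod4_sub_two]; omega, hs⟩, rfl⟩⟩,
        Subgraph.mem_edgeSet.2 hadjt, ?_⟩
      rintro ⟨H', hm'⟩ he'
      exact Subtype.ext (row_unique_shift N i c (Or.inl ⟨hR, hs⟩) H' hm'
        (Subgraph.mem_edgeSet.1 he'))
  · refine ⟨⟨colHex N c, Or.inl ⟨c, by omega, rfl⟩⟩, Subgraph.mem_edgeSet.2 hadjc, ?_⟩
    rintro ⟨H', hm'⟩ he'
    exact Subtype.ext (row_unique_even N i c (by omega) H' hm' (Subgraph.mem_edgeSet.1 he'))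
  · rcases hsi with hs | hs
    · refine ⟨⟨rectHex N i (c - 2), Or.inr ⟨i, c - 2,
        Or.inl ⟨by rw [mod4_sub_two]; omega, hs⟩, rfl⟩⟩,
        Subgraph.mem_edgeSet.2 hadjt, ?_⟩
      rintro ⟨H', hm'⟩ he'
      exact Subtype.ext (row_unique_shift N i c (Or.inr ⟨hR, hs⟩) H' hm'
        (Subgraph.mem_edgeSet.1 he'))
    · refine ⟨⟨rectHex N i c, Or.inr ⟨i, c, Or.inr ⟨hR, hs⟩, rfl⟩⟩,
        Subgraph.mem_edgeSet.2 hadjs, ?_⟩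
      rintro ⟨H', hm'⟩ he'
      exact Subtype.ext (row_unique_same N i c (Or.inr ⟨hR, hs⟩) H' hm'
        (Subgraph.mem_edgeSet.1 he'))

open Fin.CommRing in
lemma cover_col (i : Fin 6) (c : Fin (4 * N)) :
    ∃! K : ↥(DD N), s((i, c), (i, c + 1)) ∈ (K : (GG N).Subgraph).edgeSet := by
  have hRc : c.val % 4 = 0 ∨ c.val % 4 = 1 ∨ c.val % 4 = 2 ∨ c.val % 4 = 3 := by omega
  have hsi : i.val % 2 = 0 ∨ i.val % 2 = 1 := by omega
  have hc1 : c - 1 + 1 = c := by ring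
  have hc1' : c - 1 + 2 = c + 1 := by ring
  have hi1 : i - 1 + 1 = i := by ring
  have hadjA : (rectHex N i c).Adj (i, c) (i, c + 1) := by
    rw [rectHex_adj]
    exact Or.inl (Or.inl ⟨rfl, rfl⟩)
  have hadjB : (rectHex N (i - 1) c).Adj (i, c) (i, c + 1) := by
    rw [rectHex_adj]
    refine Or.inr (Or.inr (Or.inr (Or.inr (Or.inl (Or.inr ⟨?_, ?_⟩))))) <;> rw [hi1]
  have hadjC : (rectHex N i (c - 1)).Adj (i, c) (i, c + 1) := by
    rw [rectHex_adj]
    refine Or.inr (Or.inl (Or.inl ⟨?_, ?_⟩))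
    · rw [hc1]
    · rw [hc1']
  have hadjD : (rectHex N (i - 1) (c - 1)).Adj (i, c) (i, c + 1) := by
    rw [rectHex_adj]
    refine Or.inr (Or.inr (Or.inr (Or.inl (Or.inr ⟨?_, ?_⟩))))
    · rw [hi1, hc1]
    · rw [hi1, hc1']
  rcases hRc with hR | hR | hR | hR
  · rcases hsi with hs | hs
    · refine ⟨⟨rectHex N (i - 1) (c - 1), Or.inr ⟨i - 1, c - 1,
        Or.inr ⟨by rw [mod4_sub_one]; omega, by rw [val6_sub_one]; omega⟩, rfl⟩⟩,
        Subgraph.mem_edgeSet.2 hadjD, ?_⟩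
      rintro ⟨H', hm'⟩ he'
      exact Subtype.ext (col_unique_D N i c (Or.inr ⟨hR, hs⟩) H' hm'
        (Subgraph.mem_edgeSet.1 he'))
    · refine ⟨⟨rectHex N i (c - 1), Or.inr ⟨i, c - 1,
        Or.inr ⟨by rw [mod4_sub_one]; omega, hs⟩, rfl⟩⟩,
        Subgraph.mem_edgeSet.2 hadjC, ?_⟩
      rintro ⟨H', hm'⟩ he'
      exact Subtype.ext (col_unique_C N i c (Or.inr ⟨hR, hs⟩) H' hm'
        (Subgraph.mem_edgeSet.1 he'))
  · rcases hsi with hs | hs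
    · refine ⟨⟨rectHex N i c, Or.inr ⟨i, c, Or.inl ⟨hR, hs⟩, rfl⟩⟩,
        Subgraph.mem_edgeSet.2 hadjA, ?_⟩
      rintro ⟨H', hm'⟩ he'
      exact Subtype.ext (col_unique_A N i c (Or.inl ⟨hR, hs⟩) H' hm'
        (Subgraph.mem_edgeSet.1 he'))
    · refine ⟨⟨rectHex N (i - 1) c, Or.inr ⟨i - 1, c,
        Or.inl ⟨hR, by rw [val6_sub_one]; omega⟩, rfl⟩⟩,
        Subgraph.mem_edgeSet.2 hadjB, ?_⟩
      rintro ⟨H', hm'⟩ he'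
      exact Subtype.ext (col_unique_B N i c (Or.inl ⟨hR, hs⟩) H' hm'
        (Subgraph.mem_edgeSet.1 he'))
  · rcases hsi with hs | hs
    · refine ⟨⟨rectHex N i (c - 1), Or.inr ⟨i, c - 1,
        Or.inl ⟨by rw [mod4_sub_one]; omega, hs⟩, rfl⟩⟩,
        Subgraph.mem_edgeSet.2 hadjC, ?_⟩
      rintro ⟨H', hm'⟩ he'
      exact Subtype.ext (col_unique_C N i c (Or.inl ⟨hR, hs⟩) H' hm'
        (Subgraph.mem_edgeSet.1 he'))
    · refine ⟨⟨rectHex N (i - 1) (c - 1), Or.inr ⟨i - 1, c - 1,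
        Or.inl ⟨by rw [mod4_sub_one]; omega, by rw [val6_sub_one]; omega⟩, rfl⟩⟩,
        Subgraph.mem_edgeSet.2 hadjD, ?_⟩
      rintro ⟨H', hm'⟩ he'
      exact Subtype.ext (col_unique_D N i c (Or.inl ⟨hR, hs⟩) H' hm'
        (Subgraph.mem_edgeSet.1 he'))
  · rcases hsi with hs | hs
    · refine ⟨⟨rectHex N (i - 1) c, Or.inr ⟨i - 1, c,
        Or.inr ⟨hR, by rw [val6_sub_one]; omega⟩, rfl⟩⟩,
        Subgraph.mem_edgeSet.2 hadjB, ?_⟩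
      rintro ⟨H', hm'⟩ he'
      exact Subtype.ext (col_unique_B N i c (Or.inr ⟨hR, hs⟩) H' hm'
        (Subgraph.mem_edgeSet.1 he'))
    · refine ⟨⟨rectHex N i c, Or.inr ⟨i, c, Or.inr ⟨hR, hs⟩, rfl⟩⟩,
        Subgraph.mem_edgeSet.2 hadjA, ?_⟩
      rintro ⟨H', hm'⟩ he'
      exact Subtype.ext (col_unique_A N i c (Or.inr ⟨hR, hs⟩) H' hm'
        (Subgraph.mem_edgeSet.1 he'))

lemma adjm_cases (x y : Fin (4 * N)) (h : (cycleGraph (4 * N)).Adj x y) :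
    y = x + 1 ∨ x = y + 1 := by
  rw [cycleGraph_adj'] at h
  rcases h with h | h
  · right
    have hxy : x - y = 1 := by rw [Fin.ext_iff, val_one']; exact h
    have := sub_eq_iff_eq_add.mp hxy
    rw [this, add_comm]
  · left
    have hxy : y - x = 1 := by rw [Fin.ext_iff, val_one']; exact h
    have := sub_eq_iff_eq_add.mp hxy
    rw [this, add_comm]

lemma cover_edge (e : Sym2 (Fin 6 × Fin (4 * N))) (he : e ∈ (GG N).edgeSet) :
    ∃! K : ↥(DD N), e ∈ (K : (GG N).Subgraph).edgeSet := by
  have hc6 : ∀ x y : Fin 6, (cycleGraph 6).Adj x y → (y = x + 1 ∨ x = y + 1) := by decide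
  induction e using Sym2.ind with
  | _ a b =>
    obtain ⟨a1, a2⟩ := a
    obtain ⟨b1, b2⟩ := b
    rw [mem_edgeSet, boxProd_adj] at he
    rcases he with ⟨h6, heq⟩ | ⟨hmm, heq⟩ <;> dsimp only at *
    · subst heq
      rcases hc6 _ _ h6 with rfl | rfl
      · exact cover_row N a1 a2
      · rw [Sym2.eq_swap]
        exact cover_row N b1 a2
    · subst heq
      rcases adjm_cases N _ _ hmm with rfl | rfl
      · exact cover_col N a1 a2
      · rw [Sym2.eq_swap]
        exact cover_col N a1 b2

end C6Decomp

theorem c6_decomposes_C6_boxProd_C4N (N : ℕ) (hN : 0 < N) :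
    CycleDecomposes 6 (cycleGraph 6 □ cycleGraph (4 * N)) := by
  haveI : NeZero (4 * N) := ⟨by omega⟩
  refine ⟨C6Decomp.DD N, ?_, fun e he => C6Decomp.cover_edge N e he⟩
  rintro H (⟨j, _, rfl⟩ | ⟨i, j, _, rfl⟩)
  · exact C6Decomp.hexSub_iso _ (C6Decomp.col_inj N j) _
  · exact C6Decomp.hexSub_iso _ (C6Decomp.rect_inj N i j) _
end

section
/- For every integer n > 3, the Cartesian product C_3 □ C_n admits no C_6-decomposition. -/
open SimpleGraph

open SimpleGraph Finset

open Fin.CommRing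

namespace NoC6

-- step enumeration helpers
lemma fin6_enum : ∀ x : Fin 6, x = 0 ∨ x = 1 ∨ x = 2 ∨ x = 3 ∨ x = 4 ∨ x = 5 := by decide

lemma fin3_pigeon (a b c d : Fin 3) (h1 : a ≠ b) (h2 : a ≠ c) (h3 : a ≠ d) (h4 : b ≠ c)
    (h5 : b ≠ d) (h6 : c ≠ d) : False := by
  have : ∀ a b c d : Fin 3, a = b ∨ a = c ∨ a = d ∨ b = c ∨ b = d ∨ c = d := by decide
  rcases this a b c d with h|h|h|h|h|h <;> tauto

lemma shift6 {M : Type*} [AddCommMonoid M] (g : Fin 6 → M) (a : Fin 6) :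
    ∑ i, g i = g a + g (a+1) + g (a+2) + g (a+3) + g (a+4) + g (a+5) := by
  have := Fintype.sum_equiv (Equiv.addLeft a) (fun i => g (a + i)) g (fun i => rfl)
  rw [← this, Fin.sum_univ_six]
  norm_num

variable {m : ℕ}

lemma intCast_fin_eq_zero {k : ℤ} (h : (k : Fin (m+4)) = 0) : ((m:ℤ)+4) ∣ k := by
  have : ((k : ZMod (m+4)) : ZMod (m+4)) = 0 := h
  have := (ZMod.intCast_zmod_eq_zero_iff_dvd k (m+4)).mp this
  exact_mod_cast this

lemma small_cast_ne {k : ℤ} (h1 : k ≠ 0) (h2 : |k| ≤ 3) : (k : Fin (m+4)) ≠ 0 := by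
  intro h
  have h4 : ((m:ℤ)+4) ∣ |k| := (dvd_abs _ _).mpr (intCast_fin_eq_zero h)
  have := Int.le_of_dvd (abs_pos.mpr h1) h4
  omega

lemma intCast_fin3_eq_zero {k : ℤ} (h : (k : Fin 3) = 0) : (3:ℤ) ∣ k := by
  have : ((k : ZMod 3) : ZMod 3) = 0 := h
  have := (ZMod.intCast_zmod_eq_zero_iff_dvd k 3).mp this
  exact_mod_cast this

lemma cg3_adj {u v : Fin 3} (h : (cycleGraph 3).Adj u v) : u - v = 1 ∨ v - u = 1 := by
  have : (cycleGraph (1+2)).Adj u v := h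
  rwa [cycleGraph_adj] at this

lemma cgn_adj {u v : Fin (m+4)} (h : (cycleGraph (m+4)).Adj u v) : u - v = 1 ∨ v - u = 1 := by
  have : (cycleGraph (m+2+2)).Adj u v := h
  rwa [cycleGraph_adj] at this

lemma cgn_adj_succ (p : Fin (m+4)) : (cycleGraph (m+4)).Adj p (p+1) := by
  have : (cycleGraph (m+2+2)).Adj p (p+1) := by
    rw [cycleGraph_adj]; right; ring
  exact this


variable (m : ℕ)

abbrev VG := Fin 3 × Fin (m+4)

abbrev Gm : SimpleGraph (VG m) := cycleGraph 3 □ cycleGraph (m+4)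

def Vfin (j : Fin (m+4)) : Finset (Sym2 (VG m)) :=
  {s(((0:Fin 3),j),((1:Fin 3),j)), s(((1:Fin 3),j),((2:Fin 3),j)), s(((0:Fin 3),j),((2:Fin 3),j))}

def Hfin (p : Fin (m+4)) : Finset (Sym2 (VG m)) :=
  {s(((0:Fin 3),p),((0:Fin 3),p+1)), s(((1:Fin 3),p),((1:Fin 3),p+1)),
    s(((2:Fin 3),p),((2:Fin 3),p+1))}

variable {m}

lemma Vfin_card (j : Fin (m+4)) : (Vfin m j).card = 3 := by
  rw [Vfin, Finset.card_insert_of_notMem, Finset.card_insert_of_notMem,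
    Finset.card_singleton]
  · simp [Sym2.eq_iff, Prod.ext_iff]
  · simp [Sym2.eq_iff, Prod.ext_iff]

lemma Hfin_card (p : Fin (m+4)) : (Hfin m p).card = 3 := by
  rw [Hfin, Finset.card_insert_of_notMem, Finset.card_insert_of_notMem,
    Finset.card_singleton]
  · simp [Sym2.eq_iff, Prod.ext_iff]
  · simp [Sym2.eq_iff, Prod.ext_iff]

lemma Vfin_sub (j : Fin (m+4)) : ∀ e ∈ Vfin m j, e ∈ (Gm m).edgeSet := by
  intro e he
  rw [Vfin] at he
  simp only [Finset.mem_insert, Finset.mem_singleton] at he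
  rcases he with rfl|rfl|rfl
  · exact (SimpleGraph.mem_edgeSet _).mpr (SimpleGraph.boxProd_adj.mpr
      (Or.inl ⟨(by decide : (cycleGraph 3).Adj 0 1), rfl⟩))
  · exact (SimpleGraph.mem_edgeSet _).mpr (SimpleGraph.boxProd_adj.mpr
      (Or.inl ⟨(by decide : (cycleGraph 3).Adj 1 2), rfl⟩))
  · exact (SimpleGraph.mem_edgeSet _).mpr (SimpleGraph.boxProd_adj.mpr
      (Or.inl ⟨(by decide : (cycleGraph 3).Adj 0 2), rfl⟩))

lemma Hfin_sub (p : Fin (m+4)) : ∀ e ∈ Hfin m p, e ∈ (Gm m).edgeSet := by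
  intro e he
  rw [Hfin] at he
  simp only [Finset.mem_insert, Finset.mem_singleton] at he
  rcases he with rfl|rfl|rfl <;>
    exact (SimpleGraph.mem_edgeSet _).mpr (SimpleGraph.boxProd_adj.mpr
      (Or.inr ⟨cgn_adj_succ p, rfl⟩))

lemma vmem_aux (j : Fin (m+4)) (r1 r2 : Fin 3) (h : r1 ≠ r2) :
    s((r1,j),(r2,j)) ∈ Vfin m j := by
  fin_cases r1 <;> fin_cases r2 <;>
    simp_all [Vfin, Sym2.eq_iff, Prod.ext_iff] <;> decide

lemma hmem_aux (p : Fin (m+4)) (a : Fin 3) :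
    s((a,p),(a,p+1)) ∈ Hfin m p := by
  fin_cases a <;> simp [Hfin]

end NoC6

namespace NoC6

structure CycData (m : ℕ) where
  f : Fin 6 → Fin 3 × Fin (m+4)
  s : Fin 6 → ℤ
  t : Fin 6 → ℤ
  inj : Function.Injective f
  hs : ∀ i, s i = 0 ∨ s i = 1 ∨ s i = -1
  ht : ∀ i, t i = 0 ∨ t i = 1 ∨ t i = -1
  hst : ∀ i, s i = 0 ↔ ¬ t i = 0
  hcol : ∀ i, (f (i+1)).2 = (f i).2 + ((s i : Fin (m+4)))
  hrow : ∀ i, (f (i+1)).1 = (f i).1 + ((t i : Fin 3))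

namespace CycData
variable {m : ℕ} (d : CycData m)

lemma no_small_dvd {S : ℤ} (hd : ((m:ℤ)+4) ∣ S) (h1 : S ≠ 0) (h2 : |S| ≤ 3) : False := by
  have h4 : ((m:ℤ)+4) ∣ |S| := (dvd_abs _ _).mpr hd
  have := Int.le_of_dvd (abs_pos.mpr h1) h4
  omega

lemma idx_add (i : Fin 6) (a b c : Fin 6) (h : a + b = c) : i + a + b = i + c := by
  rw [add_assoc, h]

lemma idx_ne (i : Fin 6) {a b : Fin 6} (h : a ≠ b) : i + a ≠ i + b := by
  intro hh; exact h (add_left_cancel hh)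

lemma f_ne (i : Fin 6) {a b : Fin 6} (h : a ≠ b) : d.f (i + a) ≠ d.f (i + b) := by
  intro hh; exact idx_ne i h (d.inj hh)

lemma sum_s_cast : ((∑ i, d.s i : ℤ) : Fin (m+4)) = 0 := by
  push_cast
  have h1 : ∀ i : Fin 6, ((d.s i : Fin (m+4))) = (d.f (i+1)).2 - (d.f i).2 := by
    intro i; rw [d.hcol i]; ring
  rw [Finset.sum_congr rfl (fun i _ => h1 i), Finset.sum_sub_distrib]
  rw [Fintype.sum_equiv (Equiv.addRight (1 : Fin 6)) (fun i => (d.f (i+1)).2) (fun i => (d.f i).2)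
    (fun i => rfl)]
  ring

lemma sum_t_cast : ((∑ i, d.t i : ℤ) : Fin 3) = 0 := by
  push_cast
  have h1 : ∀ i : Fin 6, ((d.t i : Fin 3)) = (d.f (i+1)).1 - (d.f i).1 := by
    intro i; rw [d.hrow i]; ring
  rw [Finset.sum_congr rfl (fun i _ => h1 i), Finset.sum_sub_distrib]
  rw [Fintype.sum_equiv (Equiv.addRight (1 : Fin 6)) (fun i => (d.f (i+1)).1) (fun i => (d.f i).1)
    (fun i => rfl)]
  ring

lemma dvd_sum_s : ((m:ℤ)+4) ∣ ∑ i, d.s i := intCast_fin_eq_zero d.sum_s_cast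

lemma dvd_sum_t : (3:ℤ) ∣ ∑ i, d.t i := by
  have : (((∑ i, d.t i : ℤ) : ZMod 3)) = 0 := d.sum_t_cast
  exact_mod_cast (ZMod.intCast_zmod_eq_zero_iff_dvd _ 3).mp this

lemma tz (i : Fin 6) (h : ¬ d.s i = 0) : d.t i = 0 := by
  have := d.hst i; tauto

lemma spm (i : Fin 6) (h : ¬ d.s i = 0) : d.s i = 1 ∨ d.s i = -1 := by
  have := d.hs i; tauto

lemma hcolz (i : Fin 6) (h : d.s i = 0) : (d.f (i+1)).2 = (d.f i).2 := by
  rw [d.hcol i, h]; push_cast; ring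

/-- two adjacent steps that cancel in both coordinates force a repeated vertex -/
lemma no_cancel (i : Fin 6) (hss : d.s i + d.s (i+1) = 0) (htt : d.t i + d.t (i+1) = 0) :
    False := by
  have hc : (d.f (i+1+1)).2 = (d.f i).2 := by
    rw [d.hcol (i+1), d.hcol i]
    have : ((d.s (i+1) : Fin (m+4))) = -((d.s i : Fin (m+4))) := by
      have : d.s (i+1) = -d.s i := by omega
      rw [this]; push_cast; ring
    rw [this]; ring
  have hr : (d.f (i+1+1)).1 = (d.f i).1 := by
    rw [d.hrow (i+1), d.hrow i]
    have : ((d.t (i+1) : Fin 3)) = -((d.t i : Fin 3)) := by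
      have : d.t (i+1) = -d.t i := by omega
      rw [this]; push_cast; ring
    rw [this]; ring
  have h1 : d.f (i+1+1) = d.f i := Prod.ext hr hc
  have h2 : i + 1 + 1 = i + 2 := idx_add i 1 1 2 (by decide)
  rw [h2] at h1
  have h3 := d.inj h1
  have h4 : (2 : Fin 6) = 0 := by
    have h5 : i + 2 = i + 0 := by rw [h3, add_zero]
    exact add_left_cancel h5
  exact absurd h4 (by decide)

/-- three consecutive vertical steps: four vertices in one column, impossible -/
lemma no_three_vert (i : Fin 6) (h1 : d.s i = 0) (h2 : d.s (i+1) = 0) (h3 : d.s (i+2) = 0) :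
    False := by
  have e1 : (d.f (i+1)).2 = (d.f i).2 := d.hcolz i h1
  have e2 : (d.f (i+2)).2 = (d.f i).2 := by
    rw [← idx_add i 1 1 2 (by decide)]; rw [d.hcolz (i+1) h2]; exact e1
  have e3 : (d.f (i+3)).2 = (d.f i).2 := by
    rw [← idx_add i 2 1 3 (by decide)]; rw [d.hcolz (i+2) h3]; exact e2
  have key : ∀ a b : Fin 6, a ≠ b → (d.f (i+a)).2 = (d.f i).2 → (d.f (i+b)).2 = (d.f i).2 →
      (d.f (i+a)).1 ≠ (d.f (i+b)).1 := by
    intro a b hab ha hb hr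
    exact d.f_ne i hab (Prod.ext hr (ha.trans hb.symm))
  have e0 : (d.f (i+0)).2 = (d.f i).2 := by rw [add_zero]
  refine fin3_pigeon (d.f (i+0)).1 (d.f (i+1)).1 (d.f (i+2)).1 (d.f (i+3)).1 ?_ ?_ ?_ ?_ ?_ ?_ <;>
    apply key <;> first
      | decide
      | assumption


lemma hcol1 (i : Fin 6) (h : d.s i = 1) : (d.f (i+1)).2 = (d.f i).2 + 1 := by
  rw [d.hcol i, h]; push_cast; ring

lemma hcoln1 (i : Fin 6) (h : d.s i = -1) : (d.f (i+1)).2 = (d.f i).2 - 1 := by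
  rw [d.hcol i, h]; push_cast; ring

def vcount (j : Fin (m+4)) : ℕ :=
  (Finset.univ.filter fun i => d.s i = 0 ∧ (d.f i).2 = j).card

def pos (i : Fin 6) : Fin (m+4) := if d.s i = 1 then (d.f i).2 else (d.f i).2 - 1

def hcount (p : Fin (m+4)) : ℕ :=
  (Finset.univ.filter fun i => ¬ d.s i = 0 ∧ d.pos i = p).card

def vtot : ℕ := (Finset.univ.filter fun i => d.s i = 0).card

def StrucA : Prop := ∃ c : Fin (m+4),
  (∀ j, d.vcount j = (if c = j then 2 else 0) + (if c+1 = j then 2 else 0)) ∧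
  (∀ p, d.hcount p = if c = p then 2 else 0)

def StrucB : Prop := (∀ j, d.vcount j ≤ 1) ∧ d.vtot = 2 ∧ ∃ x y : Fin (m+4),
  ∀ p, d.hcount p = ((if x = p then 1 else 0) + (if x+1 = p then 1 else 0))
    + ((if y = p then 1 else 0) + (if y+1 = p then 1 else 0))

def StrucR : Prop := ∀ j : Fin (m+4), d.vcount j = 0

lemma one_ne' {m : ℕ} : (1 : Fin (m+4)) ≠ 0 := by
  have : (((1:ℤ) : Fin (m+4))) ≠ 0 := small_cast_ne (by norm_num) (by norm_num)
  simpa using this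

lemma vcount_eq (j : Fin (m+4)) (a : Fin 6) :
    d.vcount j = (if d.s a = 0 ∧ (d.f a).2 = j then 1 else 0)
      + (if d.s (a+1) = 0 ∧ (d.f (a+1)).2 = j then 1 else 0)
      + (if d.s (a+2) = 0 ∧ (d.f (a+2)).2 = j then 1 else 0)
      + (if d.s (a+3) = 0 ∧ (d.f (a+3)).2 = j then 1 else 0)
      + (if d.s (a+4) = 0 ∧ (d.f (a+4)).2 = j then 1 else 0)
      + (if d.s (a+5) = 0 ∧ (d.f (a+5)).2 = j then 1 else 0) := by
  rw [vcount, Finset.card_filter]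
  exact shift6 _ a

lemma hcount_eq (p : Fin (m+4)) (a : Fin 6) :
    d.hcount p = (if ¬ d.s a = 0 ∧ d.pos a = p then 1 else 0)
      + (if ¬ d.s (a+1) = 0 ∧ d.pos (a+1) = p then 1 else 0)
      + (if ¬ d.s (a+2) = 0 ∧ d.pos (a+2) = p then 1 else 0)
      + (if ¬ d.s (a+3) = 0 ∧ d.pos (a+3) = p then 1 else 0)
      + (if ¬ d.s (a+4) = 0 ∧ d.pos (a+4) = p then 1 else 0)
      + (if ¬ d.s (a+5) = 0 ∧ d.pos (a+5) = p then 1 else 0) := by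
  rw [hcount, Finset.card_filter]
  exact shift6 _ a

lemma vtot_eq (a : Fin 6) :
    d.vtot = (if d.s a = 0 then 1 else 0)
      + (if d.s (a+1) = 0 then 1 else 0)
      + (if d.s (a+2) = 0 then 1 else 0)
      + (if d.s (a+3) = 0 then 1 else 0)
      + (if d.s (a+4) = 0 then 1 else 0)
      + (if d.s (a+5) = 0 then 1 else 0) := by
  rw [vtot, Finset.card_filter]
  exact shift6 _ a

lemma sum_s_eq (a : Fin 6) :
    ∑ i, d.s i = d.s a + d.s (a+1) + d.s (a+2) + d.s (a+3) + d.s (a+4) + d.s (a+5) :=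
  shift6 _ a

lemma strucA_of (a : Fin 6) (h0 : ¬ d.s a = 0) (h3 : ¬ d.s (a+3) = 0)
    (h1 : d.s (a+1) = 0) (h2 : d.s (a+2) = 0) (h4 : d.s (a+4) = 0) (h5 : d.s (a+5) = 0) :
    d.StrucA := by
  have hS : ∑ i, d.s i = d.s a + d.s (a+3) := by
    rw [d.sum_s_eq a, h1, h2, h4, h5]; ring
  have hs0 := d.spm a h0
  have hs3 := d.spm (a+3) h3
  have hSz : ∑ i, d.s i = 0 := by
    by_contra hne
    exact no_small_dvd d.dvd_sum_s hne (by rw [hS]; rcases hs0 with h|h <;> rcases hs3 with h'|h' <;>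
      rw [h, h'] <;> norm_num)
  have hopp : d.s (a+3) = - d.s a := by omega
  -- column chain
  have e1 := d.hcol a
  have e2 : (d.f (a+2)).2 = (d.f (a+1)).2 := by
    rw [← idx_add a 1 1 2 (by decide)]; exact d.hcolz (a+1) h1
  have e3 : (d.f (a+3)).2 = (d.f (a+1)).2 := by
    rw [← idx_add a 2 1 3 (by decide)]; rw [d.hcolz (a+2) h2]; exact e2
  have e4 : (d.f (a+4)).2 = (d.f a).2 := by
    rw [← idx_add a 3 1 4 (by decide), d.hcol (a+3), hopp, e3, e1]
    push_cast; ring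
  have e5 : (d.f (a+5)).2 = (d.f a).2 := by
    rw [← idx_add a 4 1 5 (by decide), d.hcolz (a+4) h4]; exact e4
  have hne1 : ∀ c : Fin (m+4), ¬ (c = c + 1) := by
    intro c hc
    exact one_ne' (left_eq_add.mp hc)
  rcases hs0 with hsa | hsa
  · -- s a = 1
    have hsa3 : d.s (a+3) = -1 := by omega
    refine ⟨(d.f a).2, fun j => ?_, fun p => ?_⟩
    · rw [d.vcount_eq j a]
      have c1 : (d.f (a+1)).2 = (d.f a).2 + 1 := by rw [e1, hsa]; push_cast; ring
      simp only [h0, h1, h2, h3, h4, h5, e2, e3, e4, e5, c1, hsa, hsa3,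
        true_and, false_and, if_false, if_true, not_false_iff]
      by_cases hc : (d.f a).2 = j <;> by_cases hc1 : (d.f a).2 + 1 = j
      · exact absurd (hc.trans hc1.symm) (hne1 _)
      · simp [hc, hc1]
      · simp [hc, hc1]
      · simp [hc, hc1]
    · rw [d.hcount_eq p a]
      have p0 : d.pos a = (d.f a).2 := by rw [pos, if_pos hsa]
      have p3 : d.pos (a+3) = (d.f a).2 := by
        rw [pos, if_neg (by rw [hsa3]; norm_num), e3, e1, hsa]
        push_cast; ring
      simp only [h0, h1, h2, h3, h4, h5, p0, p3, true_and, false_and, not_false_iff,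
        if_false, not_true, if_true]
      by_cases hc : (d.f a).2 = p <;> simp [hc]
  · -- s a = -1
    have hsa3 : d.s (a+3) = 1 := by omega
    have cc : (d.f a).2 - 1 + 1 = (d.f a).2 := by ring
    have c1 : (d.f (a+1)).2 = (d.f a).2 - 1 := by rw [e1, hsa]; push_cast; ring
    refine ⟨(d.f a).2 - 1, fun j => ?_, fun p => ?_⟩
    · rw [d.vcount_eq j a, cc]
      simp only [h0, h1, h2, h3, h4, h5, e2, e3, e4, e5, c1,
        true_and, false_and, if_false, if_true, not_false_iff]
      by_cases hc : (d.f a).2 - 1 = j <;> by_cases hc1 : (d.f a).2 = j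
      · exact absurd (sub_eq_self.mp ((hc.trans hc1.symm) : (d.f a).2 - 1 = (d.f a).2)) one_ne'
      · simp [hc, hc1]
      · simp [hc, hc1]
      · simp [hc, hc1]
    · rw [d.hcount_eq p a]
      have p0 : d.pos a = (d.f a).2 - 1 := by rw [pos, if_neg (by rw [hsa]; norm_num)]
      have p3 : d.pos (a+3) = (d.f a).2 - 1 := by
        rw [pos, if_pos hsa3, e3, c1]
      simp only [h0, h1, h2, h3, h4, h5, p0, p3, true_and, false_and, not_false_iff,
        if_false, not_true, if_true]
      by_cases hc : (d.f a).2 - 1 = p <;> simp [hc]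

lemma two_cast_ne {m : ℕ} {σ : ℤ} (hσ : σ = 1 ∨ σ = -1) :
    ((σ : Fin (m+4))) + ((σ : Fin (m+4))) ≠ 0 := by
  have : ((σ : Fin (m+4))) + ((σ : Fin (m+4))) = (((2*σ : ℤ) : Fin (m+4))) := by push_cast; ring
  rw [this]
  exact small_cast_ne (by omega) (by rcases hσ with h|h <;> rw [h] <;> norm_num)

lemma strucB_d3 (a : Fin 6) (hz0 : d.s a = 0) (hz3 : d.s (a+3) = 0)
    (h1 : ¬ d.s (a+1) = 0) (h2 : ¬ d.s (a+2) = 0) (h4 : ¬ d.s (a+4) = 0)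
    (h5 : ¬ d.s (a+5) = 0) : d.StrucB := by
  have hs12 : d.s (a+2) = d.s (a+1) := by
    by_contra hc
    refine d.no_cancel (a+1) ?_ ?_
    · rw [idx_add a 1 1 2 (by decide)]
      rcases d.spm _ h1 with e|e <;> rcases d.spm _ h2 with e'|e' <;> omega
    · rw [idx_add a 1 1 2 (by decide), d.tz _ h1, d.tz _ h2]; norm_num
  have hs45 : d.s (a+5) = d.s (a+4) := by
    by_contra hc
    refine d.no_cancel (a+4) ?_ ?_
    · rw [idx_add a 4 1 5 (by decide)]
      rcases d.spm _ h4 with e|e <;> rcases d.spm _ h5 with e'|e' <;> omega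
    · rw [idx_add a 4 1 5 (by decide), d.tz _ h4, d.tz _ h5]; norm_num
  set b0 := (d.f a).2 with hb0
  have c1 : (d.f (a+1)).2 = b0 := d.hcolz a hz0
  have c2 : (d.f (a+2)).2 = b0 + ((d.s (a+1) : Fin (m+4))) := by
    rw [← idx_add a 1 1 2 (by decide), d.hcol (a+1), c1]
  have c3 : (d.f (a+3)).2 = b0 + ((d.s (a+1) : Fin (m+4))) + ((d.s (a+1) : Fin (m+4))) := by
    rw [← idx_add a 2 1 3 (by decide), d.hcol (a+2), c2, hs12]
  have c4 : (d.f (a+4)).2 = b0 + ((d.s (a+1) : Fin (m+4))) + ((d.s (a+1) : Fin (m+4))) := by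
    rw [← idx_add a 3 1 4 (by decide), d.hcolz (a+3) hz3, c3]
  have c5 : (d.f (a+5)).2 = (d.f (a+4)).2 + ((d.s (a+4) : Fin (m+4))) := by
    rw [← idx_add a 4 1 5 (by decide), d.hcol (a+4)]
  have hnecol : ¬ (b0 = b0 + ((d.s (a+1) : Fin (m+4))) + ((d.s (a+1) : Fin (m+4)))) := by
    intro hc
    refine two_cast_ne (m := m) (d.spm _ h1) ?_
    have : b0 + (((d.s (a+1) : Fin (m+4))) + ((d.s (a+1) : Fin (m+4)))) = b0 + 0 := by
      rw [← add_assoc, ← hc, add_zero]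
    exact add_left_cancel this
  refine ⟨fun j => ?_, ?_, ?_⟩
  · rw [d.vcount_eq j a]
    simp only [hz0, hz3, h1, h2, h4, h5, c3, eq_self_iff_true, true_and, false_and,
      if_false, not_false_iff]
    split_ifs with u v v
    · exact absurd (u.trans v.symm) hnecol
    · norm_num
    · norm_num
    · norm_num
  · rw [d.vtot_eq a]
    simp [hz0, hz3, h1, h2, h4, h5]
  · rcases d.spm _ h1 with e1|e1 <;> rcases d.spm _ h4 with e4|e4
    · -- both +1
      refine ⟨b0, b0 + 1 + 1, fun p => ?_⟩
      have p1 : d.pos (a+1) = b0 := by rw [pos, if_pos e1, c1]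
      have p2 : d.pos (a+2) = b0 + 1 := by rw [pos, if_pos (hs12.trans e1), c2, e1]; push_cast; ring
      have p4 : d.pos (a+4) = b0 + 1 + 1 := by
        rw [pos, if_pos e4, c4, e1]; push_cast; ring
      have p5 : d.pos (a+5) = b0 + 1 + 1 + 1 := by
        rw [pos, if_pos (hs45.trans e4), c5, c4, e1, e4]; push_cast; ring
      rw [d.hcount_eq p a]
      simp only [hz0, hz3, h1, h2, h4, h5, p1, p2, p4, p5, not_true, not_false_iff,
        false_and, true_and, if_false]
      ring
    · -- σ1 = 1, σ2 = -1
      refine ⟨b0, b0 + 1 + 1 - 2, fun p => ?_⟩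
      have p1 : d.pos (a+1) = b0 := by rw [pos, if_pos e1, c1]
      have p2 : d.pos (a+2) = b0 + 1 := by rw [pos, if_pos (hs12.trans e1), c2, e1]; push_cast; ring
      have p4 : d.pos (a+4) = b0 + 1 + 1 - 2 + 1 := by
        rw [pos, if_neg (by rw [e4]; norm_num), c4, e1]; push_cast; ring
      have p5 : d.pos (a+5) = b0 + 1 + 1 - 2 := by
        rw [pos, if_neg (by rw [hs45, e4]; norm_num), c5, c4, e1, e4]; push_cast; ring
      rw [d.hcount_eq p a]
      simp only [hz0, hz3, h1, h2, h4, h5, p1, p2, p4, p5, not_true, not_false_iff,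
        false_and, true_and, if_false]
      ring
    · -- σ1 = -1, σ2 = 1
      refine ⟨b0 - 2, b0 - 1 - 1, fun p => ?_⟩
      have p1 : d.pos (a+1) = b0 - 2 + 1 := by
        rw [pos, if_neg (by rw [e1]; norm_num), c1]; ring
      have p2 : d.pos (a+2) = b0 - 2 := by
        rw [pos, if_neg (by rw [hs12, e1]; norm_num), c2, e1]; push_cast; ring
      have p4 : d.pos (a+4) = b0 - 1 - 1 := by
        rw [pos, if_pos e4, c4, e1]; push_cast; ring
      have p5 : d.pos (a+5) = b0 - 1 - 1 + 1 := by
        rw [pos, if_pos (hs45.trans e4), c5, c4, e1, e4]; push_cast; ring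
      rw [d.hcount_eq p a]
      simp only [hz0, hz3, h1, h2, h4, h5, p1, p2, p4, p5, not_true, not_false_iff,
        false_and, true_and, if_false]
      ring
    · -- both -1
      refine ⟨b0 - 2, b0 - 1 - 1 - 2, fun p => ?_⟩
      have p1 : d.pos (a+1) = b0 - 2 + 1 := by
        rw [pos, if_neg (by rw [e1]; norm_num), c1]; ring
      have p2 : d.pos (a+2) = b0 - 2 := by
        rw [pos, if_neg (by rw [hs12, e1]; norm_num), c2, e1]; push_cast; ring
      have p4 : d.pos (a+4) = b0 - 1 - 1 - 2 + 1 := by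
        rw [pos, if_neg (by rw [e4]; norm_num), c4, e1]; push_cast; ring
      have p5 : d.pos (a+5) = b0 - 1 - 1 - 2 := by
        rw [pos, if_neg (by rw [hs45, e4]; norm_num), c5, c4, e1, e4]; push_cast; ring
      rw [d.hcount_eq p a]
      simp only [hz0, hz3, h1, h2, h4, h5, p1, p2, p4, p5, not_true, not_false_iff,
        false_and, true_and, if_false]
      ring
lemma strucB_d2 (a : Fin 6) (hz0 : d.s a = 0) (hz2 : d.s (a+2) = 0)
    (h1 : ¬ d.s (a+1) = 0) (h3 : ¬ d.s (a+3) = 0) (h4 : ¬ d.s (a+4) = 0)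
    (h5 : ¬ d.s (a+5) = 0) : d.StrucB := by
  have hs34 : d.s (a+4) = d.s (a+3) := by
    by_contra hc
    refine d.no_cancel (a+3) ?_ ?_
    · rw [idx_add a 3 1 4 (by decide)]
      rcases d.spm _ h3 with e|e <;> rcases d.spm _ h4 with e'|e' <;> omega
    · rw [idx_add a 3 1 4 (by decide), d.tz _ h3, d.tz _ h4]; norm_num
  have hs45 : d.s (a+5) = d.s (a+4) := by
    by_contra hc
    refine d.no_cancel (a+4) ?_ ?_
    · rw [idx_add a 4 1 5 (by decide)]
      rcases d.spm _ h4 with e|e <;> rcases d.spm _ h5 with e'|e' <;> omega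
    · rw [idx_add a 4 1 5 (by decide), d.tz _ h4, d.tz _ h5]; norm_num
  have hS : ∑ i, d.s i = d.s (a+1) + 3 * d.s (a+3) := by
    rw [d.sum_s_eq a, hz0, hz2, hs45, hs34]; ring
  have hs1eq : d.s (a+1) = d.s (a+3) := by
    by_contra hc
    refine no_small_dvd (m := m) d.dvd_sum_s ?_ ?_
    · rw [hS]
      rcases d.spm _ h1 with e|e <;> rcases d.spm _ h3 with e'|e' <;> omega
    · rw [hS]
      rcases d.spm _ h1 with e|e <;> rcases d.spm _ h3 with e'|e' <;>
        first
          | exact absurd (e.trans e'.symm) hc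
          | (rw [e, e']; norm_num)
  set b0 := (d.f a).2 with hb0
  have c1 : (d.f (a+1)).2 = b0 := d.hcolz a hz0
  have c2 : (d.f (a+2)).2 = b0 + ((d.s (a+3) : Fin (m+4))) := by
    rw [← idx_add a 1 1 2 (by decide), d.hcol (a+1), c1, hs1eq]
  have c3 : (d.f (a+3)).2 = b0 + ((d.s (a+3) : Fin (m+4))) := by
    rw [← idx_add a 2 1 3 (by decide), d.hcolz (a+2) hz2, c2, idx_add a 2 1 3 (by decide)]
  have c4 : (d.f (a+4)).2 = b0 + ((d.s (a+3) : Fin (m+4))) + ((d.s (a+3) : Fin (m+4))) := by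
    rw [← idx_add a 3 1 4 (by decide), d.hcol (a+3), c3]
  have c5 : (d.f (a+5)).2 = b0 + ((d.s (a+3) : Fin (m+4))) + ((d.s (a+3) : Fin (m+4)))
      + ((d.s (a+3) : Fin (m+4))) := by
    rw [← idx_add a 4 1 5 (by decide), d.hcol (a+4), c4, hs34]
  have hnecol : ¬ (b0 = b0 + ((d.s (a+3) : Fin (m+4)))) := by
    intro hc
    refine small_cast_ne (m := m) (k := d.s (a+3)) ?_ ?_ ?_
    · rcases d.spm _ h3 with e|e <;> omega
    · rcases d.spm _ h3 with e|e <;> rw [e] <;> norm_num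
    · exact (add_left_cancel (a := b0) (by rw [← hc, add_zero])).symm
  refine ⟨fun j => ?_, ?_, ?_⟩
  · rw [d.vcount_eq j a]
    simp only [hz0, hz2, h1, h3, h4, h5, c2, eq_self_iff_true, true_and, false_and,
      if_false, not_false_iff]
    split_ifs with u v v
    · exact absurd (u.trans v.symm) hnecol
    · norm_num
    · norm_num
    · norm_num
  · rw [d.vtot_eq a]
    simp [hz0, hz2, h1, h3, h4, h5]
  · rcases d.spm _ h3 with e3|e3
    · refine ⟨b0, b0 + 1 + 1, fun p => ?_⟩
      have p1 : d.pos (a+1) = b0 := by rw [pos, if_pos (hs1eq.trans e3), c1]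
      have p3 : d.pos (a+3) = b0 + 1 := by rw [pos, if_pos e3, c3, e3]; push_cast; ring
      have p4 : d.pos (a+4) = b0 + 1 + 1 := by
        rw [pos, if_pos (hs34.trans e3), c4, e3]; push_cast; ring
      have p5 : d.pos (a+5) = b0 + 1 + 1 + 1 := by
        rw [pos, if_pos (hs45.trans (hs34.trans e3)), c5, e3]; push_cast; ring
      rw [d.hcount_eq p a]
      simp only [hz0, hz2, h1, h3, h4, h5, p1, p3, p4, p5, not_true, not_false_iff,
        false_and, true_and, if_false]
      ring
    · refine ⟨b0 - 2, b0 - 4, fun p => ?_⟩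
      have p1 : d.pos (a+1) = b0 - 2 + 1 := by
        rw [pos, if_neg (by rw [hs1eq, e3]; norm_num), c1]; ring
      have p3 : d.pos (a+3) = b0 - 2 := by
        rw [pos, if_neg (by rw [e3]; norm_num), c3, e3]; push_cast; ring
      have p4 : d.pos (a+4) = b0 - 4 + 1 := by
        rw [pos, if_neg (by rw [hs34, e3]; norm_num), c4, e3]; push_cast; ring
      have p5 : d.pos (a+5) = b0 - 4 := by
        rw [pos, if_neg (by rw [hs45, hs34, e3]; norm_num), c5, e3]; push_cast; ring
      rw [d.hcount_eq p a]
      simp only [hz0, hz2, h1, h3, h4, h5, p1, p3, p4, p5, not_true, not_false_iff,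
        false_and, true_and, if_false]
      ring
theorem classify : d.StrucA ∨ d.StrucB ∨ d.StrucR := by
  classical
  have hZN : (Finset.univ.filter fun i => d.s i = 0).card
      + (Finset.univ.filter fun i => ¬ d.s i = 0).card = 6 := by
    rw [Finset.card_filter_add_card_filter_not]
    simp
  have hv6 : d.vtot ≤ 6 := by rw [vtot]; omega
  have hcases : d.vtot = 0 ∨ d.vtot = 1 ∨ d.vtot = 2 ∨ d.vtot = 3 ∨ d.vtot = 4 ∨ d.vtot = 5
      ∨ d.vtot = 6 := by omega
  rcases hcases with hv|hv|hv|hv|hv|hv|hv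
  · -- v = 0 : type R
    right; right
    have hall : ∀ i, ¬ d.s i = 0 := by
      intro i
      have : (Finset.univ.filter fun i => d.s i = 0) = ∅ := Finset.card_eq_zero.mp hv
      intro hc
      have : i ∈ (Finset.univ.filter fun i => d.s i = 0) := by simp [hc]
      simp_all
    intro j
    rw [vcount, Finset.card_eq_zero, Finset.filter_eq_empty_iff]
    exact fun i _ hc => hall i hc.1
  · -- v = 1 : impossible via t
    exfalso
    obtain ⟨a, ha⟩ := Finset.card_eq_one.mp (hv ▸ rfl :
      (Finset.univ.filter fun i => d.s i = 0).card = 1)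
    have hch : ∀ i, d.s i = 0 ↔ i = a := by
      intro i
      constructor
      · intro h
        have : i ∈ (Finset.univ.filter fun i => d.s i = 0) := by simp [h]
        rw [ha] at this; simpa using this
      · intro h
        rw [h]
        have : a ∈ (Finset.univ.filter fun i => d.s i = 0) := by rw [ha]; simp
        simpa using this
    have hz : ∀ o : Fin 6, o ≠ 0 → d.t (a + o) = 0 := by
      intro o ho
      refine d.tz _ (fun hc => ho ?_)
      have := (hch _).mp hc
      exact add_left_cancel ((this.trans (add_zero a).symm))
    have hsum : ∑ i, d.t i = d.t a := by
      rw [shift6 d.t a, hz 1 (by decide), hz 2 (by decide), hz 3 (by decide),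
        hz 4 (by decide), hz 5 (by decide)]
      ring
    have hta : ¬ d.t a = 0 := (d.hst a).mp ((hch a).mpr rfl)
    have hdvd := d.dvd_sum_t
    rw [hsum] at hdvd
    have := d.ht a
    omega
  · -- v = 2 : type B or impossible
    obtain ⟨a1, a2, hne, hset⟩ := Finset.card_eq_two.mp (hv ▸ rfl :
      (Finset.univ.filter fun i => d.s i = 0).card = 2)
    have hch : ∀ i, d.s i = 0 ↔ (i = a1 ∨ i = a2) := by
      intro i
      constructor
      · intro h
        have : i ∈ (Finset.univ.filter fun i => d.s i = 0) := by simp [h]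
        rw [hset] at this; simpa using this
      · intro h
        have : i ∈ ({a1, a2} : Finset (Fin 6)) := by simpa using h
        rw [← hset] at this; simpa using this
    have hoff : ∀ (b : Fin 6) (o : Fin 6), b + o = b → o = 0 := by
      intro b o h
      exact add_left_cancel ((h.trans (add_zero b).symm))
    have hb2 : a2 = a1 + (a2 - a1) := by ring
    have hk0 : a2 - a1 ≠ 0 := fun h => hne.symm (by
      have : a2 = a1 + 0 := by rw [← h]; ring
      simpa using this)
    rcases fin6_enum (a2 - a1) with hk|hk|hk|hk|hk|hk
    · exact absurd hk hk0
    · -- a2 = a1 + 1 : impossible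
      exfalso
      rw [hk] at hb2
      have hz : ∀ o : Fin 6, o ≠ 0 → o ≠ 1 → d.t (a1 + o) = 0 := by
        intro o h0 h1
        refine d.tz _ (fun hc => ?_)
        rcases (hch _).mp hc with h|h
        · exact h0 (hoff _ _ h)
        · rw [hb2] at h; exact h1 (add_left_cancel h)
      have hsum : ∑ i, d.t i = d.t a1 + d.t (a1+1) := by
        rw [shift6 d.t a1, hz 2 (by decide) (by decide), hz 3 (by decide) (by decide),
          hz 4 (by decide) (by decide), hz 5 (by decide) (by decide)]
        ring
      have hdvd := d.dvd_sum_t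
      rw [hsum] at hdvd
      have ht1 : ¬ d.t a1 = 0 := (d.hst a1).mp ((hch a1).mpr (Or.inl rfl))
      have ht2 : ¬ d.t (a1+1) = 0 := (d.hst (a1+1)).mp ((hch (a1+1)).mpr (Or.inr hb2.symm))
      have e1 := d.ht a1
      have e2 := d.ht (a1+1)
      refine d.no_cancel a1 ?_ (by omega)
      rw [(hch a1).mpr (Or.inl rfl), (hch (a1+1)).mpr (Or.inr hb2.symm)]; norm_num
    · -- a2 = a1 + 2 : type B
      right; left
      rw [hk] at hb2
      have hnz : ∀ o : Fin 6, o ≠ 0 → o ≠ 2 → ¬ d.s (a1 + o) = 0 := by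
        intro o h0 h2 hc
        rcases (hch _).mp hc with h|h
        · exact h0 (hoff _ _ h)
        · rw [hb2] at h; exact h2 (add_left_cancel h)
      exact d.strucB_d2 a1 ((hch a1).mpr (Or.inl rfl)) ((hch (a1+2)).mpr (Or.inr hb2.symm))
        (hnz 1 (by decide) (by decide)) (hnz 3 (by decide) (by decide))
        (hnz 4 (by decide) (by decide)) (hnz 5 (by decide) (by decide))
    · -- a2 = a1 + 3 : type B
      right; left
      rw [hk] at hb2
      have hnz : ∀ o : Fin 6, o ≠ 0 → o ≠ 3 → ¬ d.s (a1 + o) = 0 := by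
        intro o h0 h3 hc
        rcases (hch _).mp hc with h|h
        · exact h0 (hoff _ _ h)
        · rw [hb2] at h; exact h3 (add_left_cancel h)
      exact d.strucB_d3 a1 ((hch a1).mpr (Or.inl rfl)) ((hch (a1+3)).mpr (Or.inr hb2.symm))
        (hnz 1 (by decide) (by decide)) (hnz 2 (by decide) (by decide))
        (hnz 4 (by decide) (by decide)) (hnz 5 (by decide) (by decide))
    · -- a2 = a1 + 4 : type B with roles swapped
      right; left
      rw [hk] at hb2
      have hb1 : a1 = a2 + 2 := by rw [hb2, idx_add a1 4 2 0 (by decide), add_zero]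
      have hnz : ∀ o : Fin 6, o ≠ 0 → o ≠ 2 → ¬ d.s (a2 + o) = 0 := by
        intro o h0 h2 hc
        rcases (hch _).mp hc with h|h
        · rw [hb1] at h; exact h2 (add_left_cancel h)
        · exact h0 (hoff _ _ h)
      exact d.strucB_d2 a2 ((hch a2).mpr (Or.inr rfl)) ((hch (a2+2)).mpr (Or.inl hb1.symm))
        (hnz 1 (by decide) (by decide)) (hnz 3 (by decide) (by decide))
        (hnz 4 (by decide) (by decide)) (hnz 5 (by decide) (by decide))
    · -- a2 = a1 + 5 : impossible
      exfalso
      rw [hk] at hb2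
      have hb1 : a1 = a2 + 1 := by rw [hb2, idx_add a1 5 1 0 (by decide), add_zero]
      have hz : ∀ o : Fin 6, o ≠ 0 → o ≠ 1 → d.t (a2 + o) = 0 := by
        intro o h0 h1
        refine d.tz _ (fun hc => ?_)
        rcases (hch _).mp hc with h|h
        · rw [hb1] at h; exact h1 (add_left_cancel h)
        · exact h0 (hoff _ _ h)
      have hsum : ∑ i, d.t i = d.t a2 + d.t (a2+1) := by
        rw [shift6 d.t a2, hz 2 (by decide) (by decide), hz 3 (by decide) (by decide),
          hz 4 (by decide) (by decide), hz 5 (by decide) (by decide)]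
        ring
      have hdvd := d.dvd_sum_t
      rw [hsum] at hdvd
      have ht1 : ¬ d.t a2 = 0 := (d.hst a2).mp ((hch a2).mpr (Or.inr rfl))
      have ht2 : ¬ d.t (a2+1) = 0 := (d.hst (a2+1)).mp ((hch (a2+1)).mpr (Or.inl hb1.symm))
      have e1 := d.ht a2
      have e2 := d.ht (a2+1)
      refine d.no_cancel a2 ?_ (by omega)
      rw [(hch a2).mpr (Or.inr rfl), (hch (a2+1)).mpr (Or.inl hb1.symm)]; norm_num
    all_goals norm_num
  · -- v = 3 : impossible
    exfalso
    have hvz : (Finset.univ.filter fun i => d.s i = 0).card = 3 := hv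
    have hnz3 : (Finset.univ.filter fun i => ¬ d.s i = 0).card = 3 := by omega
    obtain ⟨x, y, z, hxy, hxz, hyz, hset⟩ := Finset.card_eq_three.mp hnz3
    have hmem : ∀ w, w ∈ ({x, y, z} : Finset (Fin 6)) → ¬ d.s w = 0 := by
      intro w hw
      rw [← hset] at hw
      simpa using hw
    have hS : ∑ i, d.s i = d.s x + d.s y + d.s z := by
      rw [← Finset.sum_subset (Finset.subset_univ ({x,y,z} : Finset (Fin 6)))
        (fun i _ hi => by
          by_contra hc
          exact hi (by rw [← hset]; simp [hc]))]
      rw [Finset.sum_insert (by simp [hxy, hxz]), Finset.sum_insert (by simp [hyz]),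
        Finset.sum_singleton]
      ring
    refine no_small_dvd (m := m) d.dvd_sum_s ?_ ?_ <;>
      rw [hS] <;>
      rcases d.spm x (hmem x (by simp)) with e1|e1 <;>
      rcases d.spm y (hmem y (by simp)) with e2|e2 <;>
      rcases d.spm z (hmem z (by simp)) with e3|e3 <;>
      rw [e1, e2, e3] <;> norm_num
  · -- v = 4 : type A or impossible
    have hvz : (Finset.univ.filter fun i => d.s i = 0).card = 4 := hv
    have hnz2 : (Finset.univ.filter fun i => ¬ d.s i = 0).card = 2 := by omega
    obtain ⟨b1, b2, hne, hset⟩ := Finset.card_eq_two.mp hnz2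
    have hch : ∀ i, ¬ d.s i = 0 ↔ (i = b1 ∨ i = b2) := by
      intro i
      constructor
      · intro h
        have : i ∈ (Finset.univ.filter fun i => ¬ d.s i = 0) := by simp [h]
        rw [hset] at this; simpa using this
      · intro h
        have : i ∈ ({b1, b2} : Finset (Fin 6)) := by simpa using h
        rw [← hset] at this; simpa using this
    have hoff : ∀ (b : Fin 6) (o : Fin 6), b + o = b → o = 0 := by
      intro b o h
      exact add_left_cancel ((h.trans (add_zero b).symm))
    have hb2 : b2 = b1 + (b2 - b1) := by ring
    have hk0 : b2 - b1 ≠ 0 := fun h => hne.symm (by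
      have : b2 = b1 + 0 := by rw [← h]; ring
      simpa using this)
    rcases fin6_enum (b2 - b1) with hk|hk|hk|hk|hk|hk
    · exact absurd hk hk0
    · -- b2 = b1 + 1 : impossible
      exfalso
      rw [hk] at hb2
      have h1 : ¬ d.s b1 = 0 := (hch b1).mpr (Or.inl rfl)
      have h2 : ¬ d.s (b1+1) = 0 := (hch (b1+1)).mpr (Or.inr hb2.symm)
      have hz : ∀ o : Fin 6, o ≠ 0 → o ≠ 1 → d.s (b1 + o) = 0 := by
        intro o h0 h1' 
        by_contra hc
        rcases (hch _).mp hc with h|h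
        · exact h0 (hoff _ _ h)
        · rw [hb2] at h; exact h1' (add_left_cancel h)
      have hS : ∑ i, d.s i = d.s b1 + d.s (b1+1) := by
        rw [shift6 d.s b1, hz 2 (by decide) (by decide), hz 3 (by decide) (by decide),
          hz 4 (by decide) (by decide), hz 5 (by decide) (by decide)]
        ring
      have hSz : d.s b1 + d.s (b1+1) = 0 := by
        by_contra hc
        refine no_small_dvd (m := m) d.dvd_sum_s (by rwa [hS]) ?_
        rw [hS]
        rcases d.spm _ h1 with e|e <;> rcases d.spm _ h2 with e'|e' <;>
          rw [e, e'] <;> norm_num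
      exact d.no_cancel b1 hSz (by rw [d.tz _ h1, d.tz _ h2]; norm_num)
    · -- b2 = b1 + 2 : impossible (three consecutive verticals)
      exfalso
      rw [hk] at hb2
      have hz : ∀ o : Fin 6, o ≠ 0 → o ≠ 2 → d.s (b1 + o) = 0 := by
        intro o h0 h2
        by_contra hc
        rcases (hch _).mp hc with h|h
        · exact h0 (hoff _ _ h)
        · rw [hb2] at h; exact h2 (add_left_cancel h)
      refine d.no_three_vert (b1+3) (hz 3 (by decide) (by decide)) ?_ ?_
      · rw [idx_add b1 3 1 4 (by decide)]; exact hz 4 (by decide) (by decide)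
      · rw [idx_add b1 3 2 5 (by decide)]; exact hz 5 (by decide) (by decide)
    · -- b2 = b1 + 3 : type A
      left
      rw [hk] at hb2
      have hz : ∀ o : Fin 6, o ≠ 0 → o ≠ 3 → d.s (b1 + o) = 0 := by
        intro o h0 h3
        by_contra hc
        rcases (hch _).mp hc with h|h
        · exact h0 (hoff _ _ h)
        · rw [hb2] at h; exact h3 (add_left_cancel h)
      exact d.strucA_of b1 ((hch b1).mpr (Or.inl rfl)) ((hch (b1+3)).mpr (Or.inr hb2.symm))
        (hz 1 (by decide) (by decide)) (hz 2 (by decide) (by decide))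
        (hz 4 (by decide) (by decide)) (hz 5 (by decide) (by decide))
    · -- b2 = b1 + 4 : impossible
      exfalso
      rw [hk] at hb2
      have hz : ∀ o : Fin 6, o ≠ 0 → o ≠ 4 → d.s (b1 + o) = 0 := by
        intro o h0 h4
        by_contra hc
        rcases (hch _).mp hc with h|h
        · exact h0 (hoff _ _ h)
        · rw [hb2] at h; exact h4 (add_left_cancel h)
      refine d.no_three_vert (b1+1) (hz 1 (by decide) (by decide)) ?_ ?_
      · rw [idx_add b1 1 1 2 (by decide)]; exact hz 2 (by decide) (by decide)
      · rw [idx_add b1 1 2 3 (by decide)]; exact hz 3 (by decide) (by decide)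
    · -- b2 = b1 + 5 : impossible
      exfalso
      rw [hk] at hb2
      have hb1 : b1 = b2 + 1 := by rw [hb2, idx_add b1 5 1 0 (by decide), add_zero]
      have h1 : ¬ d.s b2 = 0 := (hch b2).mpr (Or.inr rfl)
      have h2 : ¬ d.s (b2+1) = 0 := (hch (b2+1)).mpr (Or.inl hb1.symm)
      have hz : ∀ o : Fin 6, o ≠ 0 → o ≠ 1 → d.s (b2 + o) = 0 := by
        intro o h0 h1'
        by_contra hc
        rcases (hch _).mp hc with h|h
        · rw [hb1] at h; exact h1' (add_left_cancel h)
        · exact h0 (hoff _ _ h)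
      have hS : ∑ i, d.s i = d.s b2 + d.s (b2+1) := by
        rw [shift6 d.s b2, hz 2 (by decide) (by decide), hz 3 (by decide) (by decide),
          hz 4 (by decide) (by decide), hz 5 (by decide) (by decide)]
        ring
      have hSz : d.s b2 + d.s (b2+1) = 0 := by
        by_contra hc
        refine no_small_dvd (m := m) d.dvd_sum_s (by rwa [hS]) ?_
        rw [hS]
        rcases d.spm _ h1 with e|e <;> rcases d.spm _ h2 with e'|e' <;>
          rw [e, e'] <;> norm_num
      exact d.no_cancel b2 hSz (by rw [d.tz _ h1, d.tz _ h2]; norm_num)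
  · -- v = 5 : impossible
    exfalso
    have hvz : (Finset.univ.filter fun i => d.s i = 0).card = 5 := hv
    have hnz1 : (Finset.univ.filter fun i => ¬ d.s i = 0).card = 1 := by omega
    obtain ⟨b, hb⟩ := Finset.card_eq_one.mp hnz1
    have hch : ∀ i, ¬ d.s i = 0 ↔ i = b := by
      intro i
      constructor
      · intro h
        have : i ∈ (Finset.univ.filter fun i => ¬ d.s i = 0) := by simp [h]
        rw [hb] at this; simpa using this
      · intro h
        rw [h]
        have : b ∈ (Finset.univ.filter fun i => ¬ d.s i = 0) := by rw [hb]; simp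
        simpa using this
    have hz : ∀ o : Fin 6, o ≠ 0 → d.s (b + o) = 0 := by
      intro o ho
      by_contra hc
      exact ho (add_left_cancel (((hch _).mp hc).trans (add_zero b).symm))
    have hS : ∑ i, d.s i = d.s b := by
      rw [shift6 d.s b, hz 1 (by decide), hz 2 (by decide), hz 3 (by decide),
        hz 4 (by decide), hz 5 (by decide)]
      ring
    refine no_small_dvd (m := m) d.dvd_sum_s ?_ ?_ <;> rw [hS] <;>
      rcases d.spm b ((hch b).mpr rfl) with e|e <;> rw [e] <;> norm_num
  · -- v = 6 : impossible
    exfalso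
    have hall : ∀ i, d.s i = 0 := by
      intro i
      have hvz : (Finset.univ.filter fun i => d.s i = 0).card = 6 := hv
      have huniv : (Finset.univ.filter fun i => d.s i = 0) = Finset.univ := by
        apply Finset.eq_univ_of_card
        rw [hvz]; simp
      have : i ∈ (Finset.univ.filter fun i => d.s i = 0) := by rw [huniv]; simp
      simpa using this
    exact d.no_three_vert 0 (hall _) (hall _) (hall _)
end CycData




end NoC6

namespace NoC6
namespace CycData
variable {m : ℕ} (d : CycData m)

lemma cast_pm1_fin3_ne {t : ℤ} (h : t = 1 ∨ t = -1) : ((t : Fin 3)) ≠ 0 := by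
  rcases h with rfl|rfl <;> decide

lemma mem_Vfin_iff (i : Fin 6) (j : Fin (m+4)) :
    s(d.f i, d.f (i+1)) ∈ Vfin m j ↔ (d.s i = 0 ∧ (d.f i).2 = j) := by
  constructor
  · intro h
    simp only [Vfin, Finset.mem_insert, Finset.mem_singleton, Sym2.eq_iff, Prod.ext_iff] at h
    have h2 : (d.f i).2 = j ∧ (d.f (i+1)).2 = j := by tauto
    refine ⟨?_, h2.1⟩
    have hc := d.hcol i
    rw [h2.1, h2.2] at hc
    have hcast : ((d.s i : Fin (m+4))) = 0 := by
      have : j + ((d.s i : Fin (m+4))) = j + 0 := by rw [← hc, add_zero]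
      exact add_left_cancel this
    by_contra hnz
    exact small_cast_ne hnz (by rcases d.spm i hnz with e|e <;> rw [e] <;> norm_num) hcast
  · rintro ⟨hs0, hcolj⟩
    have ht := (d.hst i).mp hs0
    have htv : d.t i = 1 ∨ d.t i = -1 := by have := d.ht i; tauto
    have hr : (d.f (i+1)).1 ≠ (d.f i).1 := by
      rw [d.hrow i]
      intro hc
      refine cast_pm1_fin3_ne htv ?_
      have : (d.f i).1 + ((d.t i : Fin 3)) = (d.f i).1 + 0 := by rw [hc, add_zero]
      exact add_left_cancel this
    have hc2 : (d.f (i+1)).2 = j := by rw [d.hcolz i hs0]; exact hcolj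
    have e1 : ((d.f i).1, j) = d.f i := by rw [← hcolj]
    have e2 : ((d.f (i+1)).1, j) = d.f (i+1) := by rw [← hc2]
    have hv := vmem_aux j (d.f i).1 (d.f (i+1)).1 (Ne.symm hr)
    rw [e1, e2] at hv
    exact hv

lemma mem_Hfin_iff (i : Fin 6) (p : Fin (m+4)) :
    s(d.f i, d.f (i+1)) ∈ Hfin m p ↔ (¬ d.s i = 0 ∧ d.pos i = p) := by
  constructor
  · intro h
    simp only [Hfin, Finset.mem_insert, Finset.mem_singleton, Sym2.eq_iff, Prod.ext_iff] at h
    have h2 : ((d.f i).2 = p ∧ (d.f (i+1)).2 = p + 1)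
        ∨ ((d.f i).2 = p + 1 ∧ (d.f (i+1)).2 = p) := by tauto
    rcases h2 with ⟨ha, hb⟩|⟨ha, hb⟩
    · have hc := d.hcol i
      rw [ha, hb] at hc
      have hcast : ((d.s i : Fin (m+4))) = 1 :=
        (add_left_cancel (hc.trans rfl : p + 1 = p + ((d.s i : Fin (m+4))))).symm
      have hs1 : d.s i = 1 := by
        rcases d.hs i with e|e|e
        · exfalso
          rw [e] at hcast
          push_cast at hcast
          exact one_ne' hcast.symm
        · exact e
        · exfalso
          rw [e] at hcast
          push_cast at hcast
          refine small_cast_ne (m := m) (k := 2) (by norm_num) (by norm_num) ?_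
          push_cast
          linear_combination -hcast
      refine ⟨by rw [hs1]; norm_num, ?_⟩
      rw [pos, if_pos hs1, ha]
    · have hc := d.hcol i
      rw [ha, hb] at hc
      have hcast : p + 1 + ((d.s i : Fin (m+4))) = p + 1 + (-1) := by
        rw [← hc]; ring
      have hcast2 : ((d.s i : Fin (m+4))) = -1 := add_left_cancel hcast
      have hs1 : d.s i = -1 := by
        rcases d.hs i with e|e|e
        · exfalso
          rw [e] at hcast2
          push_cast at hcast2
          refine one_ne' (m := m) ?_
          linear_combination hcast2
        · exfalso
          rw [e] at hcast2
          push_cast at hcast2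
          refine small_cast_ne (m := m) (k := 2) (by norm_num) (by norm_num) ?_
          push_cast
          linear_combination hcast2
        · exact e
      refine ⟨by rw [hs1]; norm_num, ?_⟩
      rw [pos, if_neg (by rw [hs1]; norm_num), ha]
      ring
  · rintro ⟨hnz, hp⟩
    have ht0' : d.t i = 0 := d.tz i hnz
    have hreq : (d.f (i+1)).1 = (d.f i).1 := by rw [d.hrow i, ht0']; push_cast; ring
    rcases d.spm i hnz with e|e
    · have hcp : (d.f i).2 = p := by rw [← hp, pos, if_pos e]
      have hcp1 : (d.f (i+1)).2 = p + 1 := by rw [d.hcol i, e, hcp]; push_cast; ring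
      have e1 : ((d.f i).1, p) = d.f i := by rw [← hcp]
      have e2 : ((d.f i).1, p+1) = d.f (i+1) := by rw [← hcp1, ← hreq]
      have hv := hmem_aux p (d.f i).1
      rw [e1, e2] at hv
      exact hv
    · have hcp : (d.f i).2 = p + 1 := by
        have hpe : d.pos i = (d.f i).2 - 1 := by rw [pos, if_neg (by rw [e]; norm_num)]
        rw [hpe] at hp
        rw [← hp]; ring
      have hcp1 : (d.f (i+1)).2 = p := by rw [d.hcol i, e, hcp]; push_cast; ring
      have e1 : ((d.f i).1, p+1) = d.f i := by rw [← hcp]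
      have e2 : ((d.f i).1, p) = d.f (i+1) := by rw [← hcp1, ← hreq]
      have hv := hmem_aux p (d.f i).1
      rw [e1, e2] at hv
      rw [Sym2.eq_swap] at hv
      exact hv

end CycData
end NoC6

namespace NoC6
open SimpleGraph

lemma exists_cyc {m : ℕ} (Hs : (Gm m).Subgraph) (hiso : Nonempty (Hs.coe ≃g cycleGraph 6)) :
    ∃ d : CycData m, ∀ e, e ∈ Hs.edgeSet ↔ ∃ i : Fin 6, s(d.f i, d.f (i+1)) = e := by
  obtain ⟨ψ⟩ := hiso
  set f : Fin 6 → VG m := fun i => ((ψ.symm i : Hs.verts) : VG m) with hf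
  have hinj : Function.Injective f := by
    intro i k h
    exact ψ.symm.toEquiv.injective (Subtype.ext h)
  have hadjC : ∀ i : Fin 6, (cycleGraph 6).Adj i (i+1) := by
    intro i
    have : (cycleGraph (4+2)).Adj i (i+1) := by
      rw [cycleGraph_adj]; right; ring
    exact this
  have hadj : ∀ i, Hs.Adj (f i) (f (i+1)) := by
    intro i
    have h1 : Hs.coe.Adj (ψ.symm i) (ψ.symm (i+1)) := ψ.symm.map_rel_iff.mpr (hadjC i)
    exact h1
  have hstep : ∀ i : Fin 6, ∃ si ti : ℤ,
      (si = 0 ∨ si = 1 ∨ si = -1) ∧ (ti = 0 ∨ ti = 1 ∨ ti = -1) ∧ (si = 0 ↔ ¬ ti = 0)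
      ∧ (f (i+1)).2 = (f i).2 + ((si : Fin (m+4))) ∧ (f (i+1)).1 = (f i).1 + ((ti : Fin 3)) := by
    intro i
    have hG : (Gm m).Adj (f i) (f (i+1)) := Hs.adj_sub (hadj i)
    rw [Gm, SimpleGraph.boxProd_adj] at hG
    rcases hG with ⟨hr, hcst⟩|⟨hcadj, hrow⟩
    · rcases cg3_adj hr with h|h
      · refine ⟨0, -1, by norm_num, by norm_num, by norm_num, ?_, ?_⟩
        · push_cast
          rw [add_zero, hcst]
        · push_cast
          linear_combination -h
      · refine ⟨0, 1, by norm_num, by norm_num, by norm_num, ?_, ?_⟩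
        · push_cast
          rw [add_zero, hcst]
        · push_cast
          linear_combination h
    · rcases cgn_adj hcadj with h|h
      · refine ⟨-1, 0, by norm_num, by norm_num, by norm_num, ?_, ?_⟩
        · push_cast
          linear_combination -h
        · push_cast
          rw [add_zero, hrow]
      · refine ⟨1, 0, by norm_num, by norm_num, by norm_num, ?_, ?_⟩
        · push_cast
          linear_combination h
        · push_cast
          rw [add_zero, hrow]
  choose sfun tfun hprop using hstep
  refine ⟨⟨f, sfun, tfun, hinj, fun i => (hprop i).1, fun i => (hprop i).2.1,
    fun i => (hprop i).2.2.1, fun i => (hprop i).2.2.2.1, fun i => (hprop i).2.2.2.2⟩, ?_⟩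
  intro e
  constructor
  · intro he
    induction e with
    | _ u v =>
      have hadjuv : Hs.Adj u v := Subgraph.mem_edgeSet.mp he
      have hu : u ∈ Hs.verts := hadjuv.fst_mem
      have hv : v ∈ Hs.verts := hadjuv.snd_mem
      have hcoe : Hs.coe.Adj ⟨u, hu⟩ ⟨v, hv⟩ := hadjuv
      have hxy : (cycleGraph 6).Adj (ψ ⟨u, hu⟩) (ψ ⟨v, hv⟩) := ψ.map_rel_iff.mpr hcoe
      have hxy' : (cycleGraph (4+2)).Adj (ψ ⟨u, hu⟩) (ψ ⟨v, hv⟩) := hxy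
      rw [cycleGraph_adj] at hxy'
      have hfx : f (ψ ⟨u, hu⟩) = u := by rw [hf]; simp
      have hfy : f (ψ ⟨v, hv⟩) = v := by rw [hf]; simp
      rcases hxy' with h|h
      · refine ⟨ψ ⟨v, hv⟩, ?_⟩
        have hx : ψ ⟨u, hu⟩ = ψ ⟨v, hv⟩ + 1 := by linear_combination h
        show s(f (ψ ⟨v, hv⟩), f (ψ ⟨v, hv⟩ + 1)) = s(u, v)
        rw [← hx, hfx, hfy, Sym2.eq_swap]
      · refine ⟨ψ ⟨u, hu⟩, ?_⟩
        have hx : ψ ⟨v, hv⟩ = ψ ⟨u, hu⟩ + 1 := by linear_combination h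
        show s(f (ψ ⟨u, hu⟩), f (ψ ⟨u, hu⟩ + 1)) = s(u, v)
        rw [← hx, hfx, hfy]
  · rintro ⟨i, rfl⟩
    exact Subgraph.mem_edgeSet.mpr (hadj i)

end NoC6

namespace NoC6
namespace CycData
variable {m : ℕ} (d : CycData m)

lemma sum_vcount : ∑ j, d.vcount j = d.vtot := by
  rw [vtot, Finset.card_eq_sum_card_fiberwise
    (f := fun i => (d.f i).2) (t := Finset.univ) (fun x _ => Finset.mem_univ _)]
  apply Finset.sum_congr rfl
  intro j _
  rw [vcount, Finset.filter_filter]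

lemma sum_hcount : d.vtot + ∑ p, d.hcount p = 6 := by
  have h1 : ∑ p, d.hcount p = (Finset.univ.filter fun i => ¬ d.s i = 0).card := by
    rw [Finset.card_eq_sum_card_fiberwise
      (f := fun i => d.pos i) (t := Finset.univ) (fun x _ => Finset.mem_univ _)]
    apply Finset.sum_congr rfl
    intro p _
    rw [hcount, Finset.filter_filter]
  rw [h1, vtot, Finset.card_filter_add_card_filter_not]
  simp

end CycData

open scoped Classical in
lemma bridge {m : ℕ} (d : CycData m) (Hs : (Gm m).Subgraph)
    (hedge : ∀ e, e ∈ Hs.edgeSet ↔ ∃ i : Fin 6, s(d.f i, d.f (i+1)) = e)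
    (X : Finset (Sym2 (VG m))) :
    (X.filter (· ∈ Hs.edgeSet)).card
      = (Finset.univ.filter fun i => s(d.f i, d.f (i+1)) ∈ X).card := by
  classical
  have hinj : ∀ i k : Fin 6, s(d.f i, d.f (i+1)) = s(d.f k, d.f (k+1)) → i = k := by
    intro i k h
    rw [Sym2.eq_iff] at h
    rcases h with ⟨h1, _⟩|⟨h1, h2⟩
    · exact d.inj h1
    · exfalso
      have hik : i = k + 1 := d.inj h1
      have hki : i + 1 = k := d.inj h2
      rw [hik] at hki
      have : k + (1 + 1) = k + 0 := by rw [← add_assoc, hki, add_zero]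
      exact absurd (add_left_cancel this) (by decide)
  have himg : X.filter (· ∈ Hs.edgeSet)
      = (Finset.univ.filter fun i => s(d.f i, d.f (i+1)) ∈ X).image
        (fun i => s(d.f i, d.f (i+1))) := by
    ext e
    simp only [Finset.mem_filter, Finset.mem_image, Finset.mem_univ, true_and]
    constructor
    · rintro ⟨hX, hE⟩
      obtain ⟨i, hi⟩ := (hedge e).mp hE
      exact ⟨i, by rw [hi]; exact hX, hi⟩
    · rintro ⟨i, hiX, rfl⟩
      exact ⟨hiX, (hedge _).mpr ⟨i, rfl⟩⟩
  rw [himg, Finset.card_image_of_injOn (fun i _ k _ h => hinj i k h)]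

end NoC6

namespace NoC6
open SimpleGraph

lemma fin_ne_succ {m : ℕ} (c : Fin (m+4)) : ¬ (c = c + 1) :=
  fun hc => CycData.one_ne' (left_eq_add.mp hc)

open scoped Classical in
noncomputable def VCount {m : ℕ} (Hs : (Gm m).Subgraph) (j : Fin (m+4)) : ℕ :=
  ((Vfin m j).filter (· ∈ Hs.edgeSet)).card

open scoped Classical in
noncomputable def HCount {m : ℕ} (Hs : (Gm m).Subgraph) (p : Fin (m+4)) : ℕ :=
  ((Hfin m p).filter (· ∈ Hs.edgeSet)).card

theorem classify_graph {m : ℕ} (Hs : (Gm m).Subgraph)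
    (h : Nonempty (Hs.coe ≃g cycleGraph 6)) :
    ((∃ c : Fin (m+4),
        (∀ j, VCount Hs j = (if c = j then 2 else 0) + (if c+1 = j then 2 else 0))
        ∧ (∀ p, HCount Hs p = if c = p then 2 else 0))
      ∨ ((∀ j, VCount Hs j ≤ 1) ∧ (∑ j, VCount Hs j = 2) ∧ ∃ x y : Fin (m+4), ∀ p,
          HCount Hs p = ((if x = p then 1 else 0) + (if x+1 = p then 1 else 0))
            + ((if y = p then 1 else 0) + (if y+1 = p then 1 else 0)))
      ∨ (∀ j, VCount Hs j = 0))
    ∧ (∑ j, VCount Hs j) + (∑ p, HCount Hs p) = 6 := by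
  classical
  obtain ⟨d, hd⟩ := exists_cyc Hs h
  have hVCd : ∀ j, VCount Hs j = d.vcount j := by
    intro j
    rw [VCount, bridge d Hs hd, CycData.vcount]
    congr 1
    apply Finset.filter_congr
    intro i _
    exact d.mem_Vfin_iff i j
  have hHCd : ∀ p, HCount Hs p = d.hcount p := by
    intro p
    rw [HCount, bridge d Hs hd, CycData.hcount]
    congr 1
    apply Finset.filter_congr
    intro i _
    exact d.mem_Hfin_iff i p
  constructor
  · rcases d.classify with ⟨c, hA1, hA2⟩|⟨hB1, hB2, x, y, hB3⟩|hR
    · exact Or.inl ⟨c, fun j => by rw [hVCd j]; exact hA1 j,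
        fun p => by rw [hHCd p]; exact hA2 p⟩
    · refine Or.inr (Or.inl ⟨fun j => by rw [hVCd j]; exact hB1 j, ?_,
        x, y, fun p => by rw [hHCd p]; exact hB3 p⟩)
      rw [Finset.sum_congr rfl (fun j _ => hVCd j), d.sum_vcount]
      exact hB2
    · exact Or.inr (Or.inr (fun j => by rw [hVCd j]; exact hR j))
  · rw [Finset.sum_congr rfl (fun j (_ : j ∈ Finset.univ) => hVCd j),
      Finset.sum_congr rfl (fun p (_ : p ∈ Finset.univ) => hHCd p),
      d.sum_vcount]
    exact d.sum_hcount

end NoC6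

theorem no_c6_decomposition_C3_boxProd_Cn (n : ℕ) (hn : 3 < n) :
    ¬ CycleDecomposes 6 (cycleGraph 3 □ cycleGraph n) := by
  obtain ⟨m, rfl⟩ : ∃ m, n = m + 4 := ⟨n - 4, by omega⟩
  rintro ⟨D, hiso, huniq⟩
  classical
  -- finiteness of the decomposition
  have hex : ∀ H : D, ∃ e : Sym2 (NoC6.VG m), e ∈ (H : (NoC6.Gm m).Subgraph).edgeSet := by
    rintro ⟨H, hH⟩
    obtain ⟨d, hd⟩ := NoC6.exists_cyc H (hiso H hH)
    exact ⟨s(d.f 0, d.f (0+1)), (hd _).mpr ⟨0, rfl⟩⟩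
  choose ed hed using hex
  have hedinj : Function.Injective ed := by
    intro H1 H2 h
    have h1 := hed H1
    have h2 := hed H2
    rw [h] at h1
    have hGe : ed H2 ∈ (cycleGraph 3 □ cycleGraph (m+4)).edgeSet :=
      (H2 : (NoC6.Gm m).Subgraph).edgeSet_subset h2
    obtain ⟨Hu, hu, huu⟩ := huniq _ hGe
    exact (huu H1 h1).trans (huu H2 h2).symm
  have hDfin : D.Finite := Set.finite_coe_iff.mp (Finite.of_injective ed hedinj)
  set DF : Finset ((NoC6.Gm m).Subgraph) := hDfin.toFinset with hDF
  -- master counting lemma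
  have M1 : ∀ X : Finset (Sym2 (NoC6.VG m)),
      (∀ e ∈ X, e ∈ (cycleGraph 3 □ cycleGraph (m+4)).edgeSet) →
      ∑ H ∈ DF, (X.filter (· ∈ H.edgeSet)).card = X.card := by
    intro X hX
    have h1 : ∀ H ∈ DF, (X.filter (· ∈ H.edgeSet)).card
        = ∑ e ∈ X, if e ∈ H.edgeSet then 1 else 0 := fun H _ => Finset.card_filter _ _
    rw [Finset.sum_congr rfl h1, Finset.sum_comm]
    have h2 : ∀ e ∈ X, (∑ H ∈ DF, if e ∈ H.edgeSet then 1 else 0) = 1 := by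
      intro e he
      obtain ⟨Hu, hu, huu⟩ := huniq e (hX e he)
      have hfe : DF.filter (fun H => e ∈ H.edgeSet) = {(Hu : (NoC6.Gm m).Subgraph)} := by
        ext H
        simp only [Finset.mem_filter, Finset.mem_singleton, hDF, Set.Finite.mem_toFinset]
        constructor
        · rintro ⟨hHD, hHe⟩
          exact congrArg Subtype.val (huu ⟨H, hHD⟩ hHe)
        · rintro rfl
          exact ⟨Hu.2, hu⟩
      rw [← Finset.card_filter, hfe, Finset.card_singleton]
    rw [Finset.sum_congr rfl h2, Finset.sum_const, smul_eq_mul, mul_one]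
  -- classification for members of DF
  have hmemD : ∀ H ∈ DF, H ∈ D := fun H hH => hDfin.mem_toFinset.mp hH
  have hclass := fun (H : (NoC6.Gm m).Subgraph) (hH : H ∈ DF) =>
    NoC6.classify_graph H (hiso H (hmemD H hH))
  -- global sums
  have E1 : ∀ j, ∑ H ∈ DF, NoC6.VCount H j = 3 := by
    intro j
    have := M1 (NoC6.Vfin m j) (NoC6.Vfin_sub j)
    rw [NoC6.Vfin_card] at this
    exact this
  have E2 : ∀ p, ∑ H ∈ DF, NoC6.HCount H p = 3 := by
    intro p
    have := M1 (NoC6.Hfin m p) (NoC6.Hfin_sub p)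
    rw [NoC6.Hfin_card] at this
    exact this
  have hvsumtot : ∑ H ∈ DF, (∑ j, NoC6.VCount H j) = 3 * (m+4) := by
    rw [Finset.sum_comm, Finset.sum_congr rfl (fun j _ => E1 j)]
    simp [Finset.card_univ, mul_comm]
  have hhsumtot : ∑ H ∈ DF, (∑ p, NoC6.HCount H p) = 3 * (m+4) := by
    rw [Finset.sum_comm, Finset.sum_congr rfl (fun p _ => E2 p)]
    simp [Finset.card_univ, mul_comm]
  have hDFcard : DF.card = m + 4 := by
    have h6 : ∑ H ∈ DF, ((∑ j, NoC6.VCount H j) + (∑ p, NoC6.HCount H p)) = 6 * DF.card := by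
      rw [Finset.sum_congr rfl (fun H hH => (hclass H hH).2), Finset.sum_const, smul_eq_mul,
        mul_comm]
    rw [Finset.sum_add_distrib, hvsumtot, hhsumtot] at h6
    omega
  -- the three types
  set AF := DF.filter (fun H => ∑ j, NoC6.VCount H j = 4) with hAF
  set BF := DF.filter (fun H => ∑ j, NoC6.VCount H j = 2) with hBF
  set RF := DF.filter (fun H => ∑ j, NoC6.VCount H j = 0) with hRF
  have hA_struct : ∀ H ∈ AF, ∃ c : Fin (m+4),
      (∀ j, NoC6.VCount H j = (if c = j then 2 else 0) + (if c+1 = j then 2 else 0))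
      ∧ (∀ p, NoC6.HCount H p = if c = p then 2 else 0) := by
    intro H hH
    obtain ⟨hHD, h4⟩ := Finset.mem_filter.mp hH
    rcases (hclass H hHD).1 with h|⟨_, hB2, _⟩|hR
    · exact h
    · omega
    · rw [Finset.sum_congr rfl (fun j _ => hR j)] at h4
      simp at h4
  have hAval : ∀ H ∈ AF, ∑ j, NoC6.VCount H j = 4 := fun H hH => (Finset.mem_filter.mp hH).2
  have hstructsum : ∀ H ∈ DF, (∃ c : Fin (m+4),
      (∀ j, NoC6.VCount H j = (if c = j then 2 else 0) + (if c+1 = j then 2 else 0))) →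
      ∑ j, NoC6.VCount H j = 4 := by
    rintro H hH ⟨c, hc⟩
    rw [Finset.sum_congr rfl (fun j _ => hc j), Finset.sum_add_distrib,
      Finset.sum_ite_eq, Finset.sum_ite_eq]
    simp
  have hB_struct : ∀ H ∈ BF, (∀ j, NoC6.VCount H j ≤ 1) ∧ ∃ x y : Fin (m+4), ∀ p,
      NoC6.HCount H p = ((if x = p then 1 else 0) + (if x+1 = p then 1 else 0))
        + ((if y = p then 1 else 0) + (if y+1 = p then 1 else 0)) := by
    intro H hH
    obtain ⟨hHD, h2⟩ := Finset.mem_filter.mp hH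
    rcases (hclass H hHD).1 with ⟨c, hc, _⟩|⟨hB1, _, x, y, hB3⟩|hR
    · exfalso
      have := hstructsum H hHD ⟨c, hc⟩
      omega
    · exact ⟨hB1, x, y, hB3⟩
    · rw [Finset.sum_congr rfl (fun j _ => hR j)] at h2
      simp at h2
  have hcover : ∀ H ∈ DF, (∑ j, NoC6.VCount H j = 4) ∨ (∑ j, NoC6.VCount H j = 2)
      ∨ (∑ j, NoC6.VCount H j = 0) := by
    intro H hH
    rcases (hclass H hH).1 with ⟨c, hc, _⟩|⟨_, hB2, _⟩|hR
    · exact Or.inl (hstructsum H hH ⟨c, hc⟩)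
    · exact Or.inr (Or.inl hB2)
    · refine Or.inr (Or.inr ?_)
      rw [Finset.sum_congr rfl (fun j _ => hR j)]
      simp
  have hdisjAB : Disjoint AF BF := by
    rw [Finset.disjoint_left]
    intro H hA hB
    have := (Finset.mem_filter.mp hA).2
    have := (Finset.mem_filter.mp hB).2
    omega
  have hdisjABR : Disjoint (AF ∪ BF) RF := by
    rw [Finset.disjoint_left]
    intro H hA hB
    have h0 := (Finset.mem_filter.mp hB).2
    rcases Finset.mem_union.mp hA with h|h
    · have := (Finset.mem_filter.mp h).2
      omega
    · have := (Finset.mem_filter.mp h).2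
      omega
  have hunion : AF ∪ BF ∪ RF = DF := by
    ext H
    simp only [Finset.mem_union, hAF, hBF, hRF, Finset.mem_filter]
    constructor
    · rintro ((⟨h,_⟩|⟨h,_⟩)|⟨h,_⟩) <;> exact h
    · intro hH
      rcases hcover H hH with h|h|h
      · exact Or.inl (Or.inl ⟨hH, h⟩)
      · exact Or.inl (Or.inr ⟨hH, h⟩)
      · exact Or.inr ⟨hH, h⟩
  have hABR : AF.card + BF.card + RF.card = DF.card := by
    rw [← hunion, Finset.card_union_of_disjoint hdisjABR, Finset.card_union_of_disjoint hdisjAB]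
  have h4A2B : 4 * AF.card + 2 * BF.card = 3 * (m+4) := by
    have hsplit : ∑ H ∈ DF, (∑ j, NoC6.VCount H j)
        = ∑ H ∈ AF, (∑ j, NoC6.VCount H j) + ∑ H ∈ BF, (∑ j, NoC6.VCount H j)
          + ∑ H ∈ RF, (∑ j, NoC6.VCount H j) := by
      rw [← hunion, Finset.sum_union hdisjABR, Finset.sum_union hdisjAB]
    rw [hvsumtot] at hsplit
    rw [Finset.sum_congr rfl hAval] at hsplit
    rw [Finset.sum_congr rfl (fun H hH => (Finset.mem_filter.mp hH).2 :
      ∀ H ∈ BF, ∑ j, NoC6.VCount H j = 2)] at hsplit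
    rw [Finset.sum_congr rfl (fun H hH => (Finset.mem_filter.mp hH).2 :
      ∀ H ∈ RF, ∑ j, NoC6.VCount H j = 0)] at hsplit
    simp only [Finset.sum_const, smul_eq_mul] at hsplit
    omega
  -- each column is hit by at most one A-cycle
  have hAval2 : ∀ j, ∀ H ∈ AF.filter (fun H => NoC6.VCount H j ≠ 0), NoC6.VCount H j = 2 := by
    intro j H hH
    obtain ⟨hHA, hnz⟩ := Finset.mem_filter.mp hH
    obtain ⟨c, hA1, _⟩ := hA_struct H hHA
    have hval := hA1 j
    by_cases h1 : c = j <;> by_cases h2 : c + 1 = j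
    · exact absurd (h1.trans h2.symm) (NoC6.fin_ne_succ c)
    · rw [if_pos h1, if_neg h2] at hval; omega
    · rw [if_neg h1, if_pos h2] at hval; omega
    · rw [if_neg h1, if_neg h2] at hval; omega
  have haj : ∀ j, (AF.filter fun H => NoC6.VCount H j ≠ 0).card ≤ 1 := by
    intro j
    by_contra hgt
    push_neg at hgt
    obtain ⟨H1, hH1, H2, hH2, hne⟩ := Finset.one_lt_card.mp hgt
    have hsub : ({H1, H2} : Finset _) ⊆ DF := by
      intro H hH
      rcases Finset.mem_insert.mp hH with rfl|hH
      · exact Finset.filter_subset _ _ ((Finset.filter_subset _ _) hH1)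
      · rw [Finset.mem_singleton.mp hH]
        exact Finset.filter_subset _ _ ((Finset.filter_subset _ _) hH2)
    have hpair : ∑ H ∈ ({H1, H2} : Finset _), NoC6.VCount H j = 4 := by
      rw [Finset.sum_pair hne, hAval2 j H1 hH1, hAval2 j H2 hH2]
    have hle : (4:ℕ) ≤ ∑ H ∈ DF, NoC6.VCount H j := by
      rw [← hpair]
      exact Finset.sum_le_sum_of_subset hsub
    rw [E1 j] at hle
    omega
  have hajsum : ∑ j, (AF.filter fun H => NoC6.VCount H j ≠ 0).card = 2 * AF.card := by
    have hterm : ∀ j, (AF.filter fun H => NoC6.VCount H j ≠ 0).card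
        = ∑ H ∈ AF, if NoC6.VCount H j ≠ 0 then 1 else 0 := fun j => Finset.card_filter _ _
    rw [Finset.sum_congr rfl (fun j _ => hterm j), Finset.sum_comm]
    have hper : ∀ H ∈ AF, (∑ j, if NoC6.VCount H j ≠ 0 then 1 else 0) = 2 := by
      intro H hH
      obtain ⟨c, hA1, _⟩ := hA_struct H hH
      have hstep : ∀ j, (if NoC6.VCount H j ≠ 0 then 1 else 0)
          = (if c = j then 1 else 0) + (if c + 1 = j then 1 else 0) := by
        intro j
        by_cases h1 : c = j <;> by_cases h2 : c + 1 = j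
        · exact absurd (h1.trans h2.symm) (NoC6.fin_ne_succ c)
        · rw [hA1 j, if_pos h1, if_neg h2]; simp [h1, h2]
        · rw [hA1 j, if_neg h1, if_pos h2]; simp [h1, h2]
        · rw [hA1 j, if_neg h1, if_neg h2]; simp [h1, h2]
      rw [Finset.sum_congr rfl (fun j _ => hstep j), Finset.sum_add_distrib,
        Finset.sum_ite_eq, Finset.sum_ite_eq]
      simp
    rw [Finset.sum_congr rfl hper, Finset.sum_const, smul_eq_mul, mul_comm]
  have hAle : 2 * AF.card ≤ m + 4 := by
    rw [← hajsum]
    calc ∑ j, (AF.filter fun H => NoC6.VCount H j ≠ 0).card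
        ≤ ∑ _j : Fin (m+4), 1 := Finset.sum_le_sum (fun j _ => haj j)
      _ = m + 4 := by simp
  have hsolve : RF.card = 0 ∧ 2 * AF.card = m + 4 ∧ BF.card = AF.card := by
    rw [hDFcard] at hABR
    omega
  obtain ⟨hRF0, h2A, hBA⟩ := hsolve
  have haj1 : ∀ j, (AF.filter fun H => NoC6.VCount H j ≠ 0).card = 1 := by
    by_contra hc
    push_neg at hc
    obtain ⟨j0, hj0⟩ := hc
    have hlt : ∑ j, (AF.filter fun H => NoC6.VCount H j ≠ 0).card
        < ∑ _j : Fin (m+4), 1 := by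
      refine Finset.sum_lt_sum (fun j _ => haj j) ⟨j0, Finset.mem_univ _, ?_⟩
      have := haj j0
      omega
    simp only [Finset.sum_const, Finset.card_univ, Fintype.card_fin, smul_eq_mul,
      mul_one] at hlt
    rw [hajsum] at hlt
    omega
  -- the base columns of the A-cycles
  set Pc : (NoC6.Gm m).Subgraph → Fin (m+4) → Prop := fun H c =>
    (∀ j, NoC6.VCount H j = (if c = j then 2 else 0) + (if c+1 = j then 2 else 0))
    ∧ (∀ p, NoC6.HCount H p = if c = p then 2 else 0) with hPc
  set cF : (NoC6.Gm m).Subgraph → Fin (m+4) := fun H =>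
    if h : ∃ c, Pc H c then h.choose else 0 with hcF
  have hcF_spec : ∀ H ∈ AF, Pc H (cF H) := by
    intro H hH
    have hex2 : ∃ c, Pc H c := hA_struct H hH
    rw [hcF]
    dsimp only
    rw [dif_pos hex2]
    exact hex2.choose_spec
  set S := AF.image cF with hS
  set w : Fin (m+4) → ℕ := fun p => if p ∈ S then 0 else 1 with hw
  have halt : ∀ p : Fin (m+4), w p + w (p+1) = 1 := by
    intro p
    by_cases h1 : p ∈ S <;> by_cases h2 : p + 1 ∈ S
    · exfalso
      obtain ⟨H1, hH1, hc1⟩ := Finset.mem_image.mp h1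
      obtain ⟨H2, hH2, hc2⟩ := Finset.mem_image.mp h2
      have hne12 : H1 ≠ H2 := by
        rintro rfl
        exact NoC6.fin_ne_succ p (hc1.symm.trans hc2 ▸ (by rw [← hc1, hc2]))
      have hm1 : H1 ∈ AF.filter (fun H => NoC6.VCount H (p+1) ≠ 0) := by
        refine Finset.mem_filter.mpr ⟨hH1, ?_⟩
        rw [((hcF_spec H1 hH1).1 (p+1) : _), hc1, if_pos rfl]
        omega
      have hm2 : H2 ∈ AF.filter (fun H => NoC6.VCount H (p+1) ≠ 0) := by
        refine Finset.mem_filter.mpr ⟨hH2, ?_⟩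
        rw [((hcF_spec H2 hH2).1 (p+1) : _), hc2, if_pos rfl]
        omega
      have : 1 < (AF.filter fun H => NoC6.VCount H (p+1) ≠ 0).card :=
        Finset.one_lt_card.mpr ⟨H1, hm1, H2, hm2, hne12⟩
      rw [haj1 (p+1)] at this
      omega
    · rw [hw]; dsimp only; rw [if_pos h1, if_neg h2]
    · rw [hw]; dsimp only; rw [if_neg h1, if_pos h2]
    · exfalso
      obtain ⟨H0, hH0⟩ := Finset.card_eq_one.mp (haj1 (p+1))
      have hmem0 : H0 ∈ AF.filter (fun H => NoC6.VCount H (p+1) ≠ 0) := by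
        rw [hH0]; exact Finset.mem_singleton_self H0
      obtain ⟨hH0A, hnz0⟩ := Finset.mem_filter.mp hmem0
      have hval := (hcF_spec H0 hH0A).1 (p+1)
      by_cases hc1 : cF H0 = p + 1
      · exact h2 (Finset.mem_image.mpr ⟨H0, hH0A, hc1⟩)
      · by_cases hc2 : cF H0 + 1 = p + 1
        · exact h1 (Finset.mem_image.mpr ⟨H0, hH0A, add_right_cancel hc2⟩)
        · rw [if_neg hc1, if_neg hc2] at hval
          omega
  have hsumw : 2 * ∑ p, w p = m + 4 := by
    have h1 : ∑ p : Fin (m+4), (w p + w (p+1)) = m + 4 := by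
      rw [Finset.sum_congr rfl (fun p _ => halt p)]
      simp
    rw [Finset.sum_add_distrib] at h1
    have h2 : ∑ p : Fin (m+4), w (p+1) = ∑ p, w p :=
      Fintype.sum_equiv (Equiv.addRight 1) _ _ (fun p => rfl)
    omega
  -- the weighted horizontal count
  have hT1 : ∑ p, w p * (∑ H ∈ DF, NoC6.HCount H p) = 3 * ∑ p, w p := by
    rw [Finset.sum_congr rfl (fun p _ => by rw [E2 p])]
    rw [← Finset.sum_mul]
    ring
  have hswap : ∑ p, w p * (∑ H ∈ DF, NoC6.HCount H p)
      = ∑ H ∈ DF, (∑ p, w p * NoC6.HCount H p) := by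
    rw [Finset.sum_congr rfl (fun p (_ : p ∈ Finset.univ) => Finset.mul_sum _ _ _)]
    rw [Finset.sum_comm]
  have hperA : ∀ H ∈ AF, (∑ p, w p * NoC6.HCount H p) = 0 := by
    intro H hH
    have hP := (hcF_spec H hH).2
    have hstep : ∀ p, w p * NoC6.HCount H p = if cF H = p then w p * 2 else 0 := by
      intro p
      rw [hP p]
      split_ifs <;> simp
    rw [Finset.sum_congr rfl (fun p _ => hstep p), Finset.sum_ite_eq]
    simp only [Finset.mem_univ, if_true]
    have hw0 : w (cF H) = 0 := by
      rw [hw]; dsimp only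
      rw [if_pos (Finset.mem_image.mpr ⟨H, hH, rfl⟩)]
    rw [hw0]
  have hperB : ∀ H ∈ BF, (∑ p, w p * NoC6.HCount H p) = 2 := by
    intro H hH
    obtain ⟨x, y, hxy⟩ := (hB_struct H hH).2
    have hstep : ∀ p, w p * NoC6.HCount H p
        = ((if x = p then w p else 0) + (if x+1 = p then w p else 0))
          + ((if y = p then w p else 0) + (if y+1 = p then w p else 0)) := by
      intro p
      rw [hxy p]
      split_ifs <;> ring
    rw [Finset.sum_congr rfl (fun p _ => hstep p), Finset.sum_add_distrib,
      Finset.sum_add_distrib, Finset.sum_add_distrib,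
      Finset.sum_ite_eq, Finset.sum_ite_eq, Finset.sum_ite_eq, Finset.sum_ite_eq]
    simp only [Finset.mem_univ, if_true]
    have hx := halt x
    have hy := halt y
    omega
  have hsplitDF : ∑ H ∈ DF, (∑ p, w p * NoC6.HCount H p) = 2 * BF.card := by
    have hRFe : RF = ∅ := Finset.card_eq_zero.mp hRF0
    rw [← hunion, Finset.sum_union hdisjABR, Finset.sum_union hdisjAB, hRFe,
      Finset.sum_empty, Finset.sum_congr rfl hperA, Finset.sum_congr rfl hperB]
    simp only [Finset.sum_const, smul_eq_mul, mul_one, mul_zero]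
    omega
  rw [hswap, hsplitDF] at hT1
  -- 2 * BF.card = 3 * ∑ w ; 2*∑w = m+4 ; 2*AF.card = m+4 ; BF.card = AF.card
  omega
end

section
/- For all integers m ≥ 7 and n ≥ 7, the Cartesian product C_m □ C_n admits no C_6-decomposition. -/
open SimpleGraph

namespace NoC6Aux

open Fin.CommRing

instance (a : ℕ) : NeZero (a+7) := ⟨by omega⟩

abbrev Pt (a b : ℕ) := Fin (a+7) × Fin (b+7)

def psi (a b : ℕ) (d : ℤ × ℤ) : Pt a b := ((d.1 : Fin (a+7)), (d.2 : Fin (b+7)))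

def UnitVec (d : ℤ × ℤ) : Prop :=
  (d.2 = 0 ∧ (d.1 = 1 ∨ d.1 = -1)) ∨ (d.1 = 0 ∧ (d.2 = 1 ∨ d.2 = -1))

def Perp (d e : ℤ × ℤ) : Prop := (d.2 = 0 ∧ e.1 = 0) ∨ (d.1 = 0 ∧ e.2 = 0)

def G (a b : ℕ) : SimpleGraph (Pt a b) := cycleGraph (a+7) □ cycleGraph (b+7)

lemma psi_add (a b : ℕ) (d e : ℤ × ℤ) : psi a b (d + e) = psi a b d + psi a b e := by
  simp [psi, Prod.ext_iff]

lemma psi_neg (a b : ℕ) (d : ℤ × ℤ) : psi a b (-d) = - psi a b d := by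
  simp [psi, Prod.ext_iff]

lemma psi_zero_iff (a b : ℕ) (d : ℤ × ℤ) (h1 : -6 ≤ d.1 ∧ d.1 ≤ 6) (h2 : -6 ≤ d.2 ∧ d.2 ≤ 6) :
    psi a b d = 0 ↔ d = 0 := by
  constructor
  · intro h
    rw [Prod.ext_iff] at h ⊢
    obtain ⟨h1', h2'⟩ := h
    have d1 : ((a:ℤ)+7) ∣ d.1 := by
      have := (ZMod.intCast_zmod_eq_zero_iff_dvd d.1 (a+7)).mp h1'
      exact_mod_cast this
    have d2 : ((b:ℤ)+7) ∣ d.2 := by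
      have := (ZMod.intCast_zmod_eq_zero_iff_dvd d.2 (b+7)).mp h2'
      exact_mod_cast this
    exact ⟨Int.eq_zero_of_abs_lt_dvd d1 (by rw [abs_lt]; omega),
      Int.eq_zero_of_abs_lt_dvd d2 (by rw [abs_lt]; omega)⟩
  · rintro rfl; simp [psi]

lemma psi_inj (a b : ℕ) (d e : ℤ × ℤ) (h1 : -3 ≤ d.1 ∧ d.1 ≤ 3) (h2 : -3 ≤ d.2 ∧ d.2 ≤ 3)
    (h3 : -3 ≤ e.1 ∧ e.1 ≤ 3) (h4 : -3 ≤ e.2 ∧ e.2 ≤ 3) (h : psi a b d = psi a b e) : d = e := by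
  have hh := psi_add a b (d - e) e
  rw [sub_add_cancel, h] at hh
  have h0 : psi a b (d - e) = 0 := right_eq_add.mp hh
  have b1 : -6 ≤ (d - e).1 ∧ (d - e).1 ≤ 6 := by simp only [Prod.fst_sub]; omega
  have b2 : -6 ≤ (d - e).2 ∧ (d - e).2 ≤ 6 := by simp only [Prod.snd_sub]; omega
  have := (psi_zero_iff a b (d - e) b1 b2).mp h0
  exact sub_eq_zero.mp this

lemma adj_iff (a b : ℕ) (u v : Pt a b) :
    (G a b).Adj u v ↔ ∃ d, UnitVec d ∧ v = u + psi a b d := by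
  rw [G, boxProd_adj]
  constructor
  · rintro (⟨h, h2⟩ | ⟨h, h2⟩)
    · have : (cycleGraph (a+5+2)).Adj u.1 v.1 := h
      rw [cycleGraph_adj] at this
      rcases this with h1 | h1
      · exact ⟨(-1, 0), Or.inl (by norm_num), by
          rw [Prod.ext_iff]; constructor
          · show v.1 = u.1 + ((-1 : ℤ) : Fin (a+7))
            push_cast
            linear_combination -h1
          · show v.2 = u.2 + ((0 : ℤ) : Fin (b+7))
            push_cast
            linear_combination h2.symm⟩
      · exact ⟨(1, 0), Or.inl (by norm_num), by
          rw [Prod.ext_iff]; constructor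
          · show v.1 = u.1 + ((1 : ℤ) : Fin (a+7))
            push_cast
            linear_combination h1
          · show v.2 = u.2 + ((0 : ℤ) : Fin (b+7))
            push_cast
            linear_combination h2.symm⟩
    · have : (cycleGraph (b+5+2)).Adj u.2 v.2 := h
      rw [cycleGraph_adj] at this
      rcases this with h1 | h1
      · exact ⟨(0, -1), Or.inr (by norm_num), by
          rw [Prod.ext_iff]; constructor
          · show v.1 = u.1 + ((0 : ℤ) : Fin (a+7))
            push_cast
            linear_combination h2.symm
          · show v.2 = u.2 + ((-1 : ℤ) : Fin (b+7))
            push_cast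
            linear_combination -h1⟩
      · exact ⟨(0, 1), Or.inr (by norm_num), by
          rw [Prod.ext_iff]; constructor
          · show v.1 = u.1 + ((0 : ℤ) : Fin (a+7))
            push_cast
            linear_combination h2.symm
          · show v.2 = u.2 + ((1 : ℤ) : Fin (b+7))
            push_cast
            linear_combination h1⟩
  · rintro ⟨d, hd | hd, rfl⟩
    · left
      constructor
      · show (cycleGraph (a+5+2)).Adj u.1 (u.1 + (d.1 : Fin (a+7)))
        rw [cycleGraph_adj]
        rcases hd.2 with h | h
        · right; rw [h]; push_cast; ring
        · left; rw [h]; push_cast; ring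
      · show u.2 = u.2 + (d.2 : Fin (b+7))
        rw [hd.1]; push_cast; ring
    · right
      constructor
      · show (cycleGraph (b+5+2)).Adj u.2 (u.2 + (d.2 : Fin (b+7)))
        rw [cycleGraph_adj]
        rcases hd.2 with h | h
        · right; rw [h]; push_cast; ring
        · left; rw [h]; push_cast; ring
      · show u.1 = u.1 + (d.1 : Fin (a+7))
        rw [hd.1]; push_cast; ring

def Hexdata (a b : ℕ) (H : (G a b).Subgraph) (g : ZMod 6 → Pt a b)
    (η : ZMod 6 → ℤ × ℤ) : Prop :=
  Function.Injective g ∧ (∀ i, UnitVec (η i)) ∧ (∀ i, g (i+1) = g i + psi a b (η i)) ∧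
  (∀ e, e ∈ H.edgeSet ↔ ∃ i, e = s(g i, g (i+1)))

lemma exists_hex (a b : ℕ) (H : (G a b).Subgraph) (hiso : Nonempty (H.coe ≃g cycleGraph 6)) :
    ∃ g η, Hexdata a b H g η := by
  obtain ⟨φ⟩ := hiso
  set f : ZMod 6 → Pt a b := fun i => (φ.symm i : Pt a b) with hf
  have finj : Function.Injective f := fun i j h => by
    exact φ.symm.toEquiv.injective (Subtype.val_injective h)
  have hadj : ∀ i : ZMod 6, H.Adj (f i) (f (i+1)) := by
    intro i
    have c6 : (cycleGraph (4+2)).Adj i ((i+1 : ZMod 6)) := by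
      refine cycleGraph_adj.mpr ?_
      right
      show i + 1 - i = 1
      ring
    have := φ.symm.map_adj_iff.mpr c6
    rw [Subgraph.coe_adj] at this
    exact this
  have hstep : ∀ i : ZMod 6, ∃ d, UnitVec d ∧ f (i+1) = f i + psi a b d := by
    intro i
    have := (hadj i).adj_sub
    rwa [adj_iff] at this
  choose η hη1 hη2 using hstep
  refine ⟨f, η, finj, hη1, hη2, ?_⟩
  intro e
  constructor
  · intro he
    induction e with
    | _ x y =>
      rw [Subgraph.mem_edgeSet] at he
      have hx : x ∈ H.verts := he.fst_mem
      have hy : y ∈ H.verts := he.snd_mem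
      set i : ZMod 6 := φ ⟨x, hx⟩ with hi
      set j : ZMod 6 := φ ⟨y, hy⟩ with hj
      have hfi : f i = x := by rw [hf]; simp [hi]
      have hfj : f j = y := by rw [hf]; simp [hj]
      have c6 : (cycleGraph (4+2)).Adj i j := by
        rw [hi, hj]
        rw [φ.map_adj_iff]
        rw [Subgraph.coe_adj]
        exact he
      replace c6 := cycleGraph_adj.mp c6
      rcases c6 with h | h
      · refine ⟨j, ?_⟩
        have : i = j + 1 := by rw [add_comm]; exact eq_add_of_sub_eq h
        rw [← hfi, ← hfj, this, Sym2.eq_swap]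
      · refine ⟨i, ?_⟩
        have : j = i + 1 := by rw [add_comm]; exact eq_add_of_sub_eq h
        rw [← hfi, ← hfj, this]
  · rintro ⟨i, rfl⟩
    rw [Subgraph.mem_edgeSet]
    exact hadj i


lemma zmod6_6 (i : ZMod 6) : i + 6 = i := by
  have : (6 : ZMod 6) = 0 := by decide
  rw [this, add_zero]

lemma unit_bound {d : ℤ × ℤ} (h : UnitVec d) :
    -1 ≤ d.1 ∧ d.1 ≤ 1 ∧ -1 ≤ d.2 ∧ d.2 ≤ 1 := by
  unfold UnitVec at h; omega

variable {a b : ℕ} {H : (G a b).Subgraph} {g : ZMod 6 → Pt a b} {η : ZMod 6 → ℤ × ℤ}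

lemma hex_backtrack (hx : Hexdata a b H g η) (k : ZMod 6) (h : η (k+1) = -η k) : False := by
  have h1 : g (k+2) = g (k+1) + psi a b (η (k+1)) := by
    have := hx.2.2.1 (k+1); rwa [show k+1+1 = k+2 by ring] at this
  rw [h, psi_neg, hx.2.2.1 k] at h1
  have h2 : g (k+2) = g k := by rw [h1]; abel
  have h3 := hx.1 h2
  have h4 : (2 : ZMod 6) = 0 :=
    add_left_cancel (a := k) (b := (2:ZMod 6)) (c := 0) (by rw [add_zero]; exact h3)
  exact absurd h4 (by decide)

lemma hex_sum6 (hx : Hexdata a b H g η) (i : ZMod 6) :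
    η i + η (i+1) + η (i+2) + η (i+3) + η (i+4) + η (i+5) = 0 := by
  have hunit := hx.2.1
  have hstep := hx.2.2.1
  have h1 : g (i+1) = g i + psi a b (η i) := hstep i
  have h2 : g (i+2) = g (i+1) + psi a b (η (i+1)) := by
    have := hstep (i+1); rwa [show i+1+1 = i+2 by ring] at this
  have h3 : g (i+3) = g (i+2) + psi a b (η (i+2)) := by
    have := hstep (i+2); rwa [show i+2+1 = i+3 by ring] at this
  have h4 : g (i+4) = g (i+3) + psi a b (η (i+3)) := by
    have := hstep (i+3); rwa [show i+3+1 = i+4 by ring] at this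
  have h5 : g (i+5) = g (i+4) + psi a b (η (i+4)) := by
    have := hstep (i+4); rwa [show i+4+1 = i+5 by ring] at this
  have h6 : g i = g (i+5) + psi a b (η (i+5)) := by
    have := hstep (i+5); rwa [show i+5+1 = i+6 by ring, zmod6_6] at this
  have key : g i = g i + psi a b (η i + η (i+1) + η (i+2) + η (i+3) + η (i+4) + η (i+5)) := by
    rw [psi_add, psi_add, psi_add, psi_add, psi_add]
    calc g i = g (i+5) + psi a b (η (i+5)) := h6
    _ = g (i+4) + psi a b (η (i+4)) + psi a b (η (i+5)) := by rw [h5]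
    _ = g (i+3) + psi a b (η (i+3)) + psi a b (η (i+4)) + psi a b (η (i+5)) := by rw [h4]
    _ = g (i+2) + psi a b (η (i+2)) + psi a b (η (i+3)) + psi a b (η (i+4)) + psi a b (η (i+5)) := by rw [h3]
    _ = g (i+1) + psi a b (η (i+1)) + psi a b (η (i+2)) + psi a b (η (i+3)) + psi a b (η (i+4)) + psi a b (η (i+5)) := by rw [h2]
    _ = g i + psi a b (η i) + psi a b (η (i+1)) + psi a b (η (i+2)) + psi a b (η (i+3)) + psi a b (η (i+4)) + psi a b (η (i+5)) := by rw [h1]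
    _ = _ := by abel
  have hz : psi a b (η i + η (i+1) + η (i+2) + η (i+3) + η (i+4) + η (i+5)) = 0 :=
    left_eq_add.mp key
  refine (psi_zero_iff a b _ ?_ ?_).mp hz <;>
  · have b0 := unit_bound (hunit i); have b1 := unit_bound (hunit (i+1))
    have b2 := unit_bound (hunit (i+2)); have b3 := unit_bound (hunit (i+3))
    have b4 := unit_bound (hunit (i+4)); have b5 := unit_bound (hunit (i+5))
    simp only [Prod.fst_add, Prod.snd_add]
    omega

lemma hex_no_straight3 (hx : Hexdata a b H g η) (i : ZMod 6)
    (h1 : η i = η (i+1)) (h2 : η (i+1) = η (i+2)) : False := by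
  have hsum := hex_sum6 hx i
  have hunit := hx.2.1
  rw [h1, h2] at hsum
  have hx3 : η (i+3) = -η (i+2) := by
    have u2 := hunit (i+2); have u3 := hunit (i+3)
    have u4 := unit_bound (hunit (i+4)); have u5 := unit_bound (hunit (i+5))
    have c1 := congrArg Prod.fst hsum
    have c2 := congrArg Prod.snd hsum
    simp only [Prod.fst_add, Prod.snd_add, Prod.fst_zero, Prod.snd_zero] at c1 c2
    rw [Prod.ext_iff]
    simp only [Prod.fst_neg, Prod.snd_neg]
    unfold UnitVec at u2 u3 u4 u5
    constructor <;> omega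
  exact hex_backtrack hx (i+2) (by rwa [show i+2+1 = i+3 by ring])

lemma hex_straight2 (hx : Hexdata a b H g η) : ∃ i, η i = η (i+1) := by
  by_contra hc
  push_neg at hc
  have hperp : ∀ i : ZMod 6, ((η i).2 = 0 → (η (i+1)).1 = 0) ∧ ((η i).1 = 0 → (η (i+1)).2 = 0) := by
    intro i
    have u0 := hx.2.1 i
    have u1 := hx.2.1 (i+1)
    have hne : ¬((η i).1 = (η (i+1)).1 ∧ (η i).2 = (η (i+1)).2) := by
      rintro ⟨e1, e2⟩
      exact hc i (Prod.ext e1 e2)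
    have hnb : ¬((η (i+1)).1 = -(η i).1 ∧ (η (i+1)).2 = -(η i).2) := by
      rintro ⟨e1, e2⟩
      refine hex_backtrack hx i ?_
      rw [Prod.ext_iff]
      simp only [Prod.fst_neg, Prod.snd_neg]
      exact ⟨e1, e2⟩
    unfold UnitVec at u0 u1
    constructor <;> intro h0 <;> omega
  have hsum := hex_sum6 hx 0
  have u0 := hx.2.1 0; have u2 := hx.2.1 (0+2); have u4 := hx.2.1 (0+4)
  have p0 := hperp 0
  have p1 := hperp (0+1); rw [show (0:ZMod 6)+1+1 = 0+2 by ring] at p1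
  have p2 := hperp (0+2); rw [show (0:ZMod 6)+2+1 = 0+3 by ring] at p2
  have p3 := hperp (0+3); rw [show (0:ZMod 6)+3+1 = 0+4 by ring] at p3
  have p4 := hperp (0+4); rw [show (0:ZMod 6)+4+1 = 0+5 by ring] at p4
  have c1 := congrArg Prod.fst hsum
  have c2 := congrArg Prod.snd hsum
  simp only [Prod.fst_add, Prod.snd_add, Prod.fst_zero, Prod.snd_zero] at c1 c2
  unfold UnitVec at u0 u2 u4
  rcases u0 with ⟨a2, a1⟩ | ⟨a1, a2⟩
  · have q1 : (η (0+1)).1 = 0 := p0.1 a2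
    have q2 : (η (0+2)).2 = 0 := p1.2 q1
    have q3 : (η (0+3)).1 = 0 := p2.1 q2
    have q4 : (η (0+4)).2 = 0 := p3.2 q3
    have q5 : (η (0+5)).1 = 0 := p4.1 q4
    omega
  · have q1 : (η (0+1)).2 = 0 := p0.2 a1
    have q2 : (η (0+2)).1 = 0 := p1.1 q1
    have q3 : (η (0+3)).2 = 0 := p2.2 q2
    have q4 : (η (0+4)).1 = 0 := p3.1 q3
    have q5 : (η (0+5)).2 = 0 := p4.2 q4
    omega

lemma hex_at (hx : Hexdata a b H g η) {x : Pt a b} {j : ZMod 6}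
    (h : s(g j, x) ∈ H.edgeSet) : x = g (j+1) ∨ x = g (j+5) := by
  obtain ⟨i, hi⟩ := (hx.2.2.2 _).mp h
  rw [Sym2.eq_iff] at hi
  rcases hi with ⟨h1, h2⟩ | ⟨h1, h2⟩
  · left; rw [h2, hx.1 h1]
  · right
    have hj : j = i + 1 := hx.1 h1
    rw [h2, hj, show i+1+5 = i+6 by ring, zmod6_6]

lemma hex_reverse (hx : Hexdata a b H g η) :
    Hexdata a b H (fun i => g (-i)) (fun i => -η (-(i+1))) := by
  obtain ⟨hinj, hunit, hstep, hedge⟩ := hx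
  refine ⟨fun i j h => ?_, fun i => ?_, fun i => ?_, fun e => ?_⟩
  · simpa using hinj h
  · have := hunit (-(i+1))
    unfold UnitVec at *
    simp only [Prod.fst_neg, Prod.snd_neg]
    omega
  · show g (-(i+1)) = g (-i) + psi a b (-η (-(i+1)))
    have := hstep (-(i+1))
    rw [show -(i+1)+1 = -i by ring] at this
    rw [this, psi_neg]
    abel
  · rw [hedge]
    constructor
    · rintro ⟨i, rfl⟩
      refine ⟨-i - 1, ?_⟩
      simp only
      rw [show -(-i-1) = i+1 by ring, show -i-1+1 = -i by ring, show -(-i) = i by ring]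
      exact Sym2.eq_swap
    · rintro ⟨i, hi⟩
      refine ⟨-(i+1), ?_⟩
      simp only at hi
      rw [show -(i+1)+1 = -i by ring]
      rw [hi, Sym2.eq_swap]


lemma psi_unit_inj (a b : ℕ) {d e : ℤ × ℤ} (hd : UnitVec d) (he : UnitVec e)
    (h : psi a b d = psi a b e) : d = e := by
  have b1 := unit_bound hd; have b2 := unit_bound he
  exact psi_inj a b d e ⟨by omega, by omega⟩ ⟨by omega, by omega⟩ ⟨by omega, by omega⟩
    ⟨by omega, by omega⟩ h

lemma psi_unit_add_ne (a b : ℕ) {d e : ℤ × ℤ} (hd : UnitVec d) (he : UnitVec e) (hne : e ≠ -d)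
    (h : psi a b d + psi a b e = 0) : False := by
  rw [← psi_add] at h
  have b1 := unit_bound hd; have b2 := unit_bound he
  have h0 := (psi_zero_iff a b _ ⟨by simp [Prod.fst_add]; omega, by simp [Prod.fst_add]; omega⟩
    ⟨by simp [Prod.snd_add]; omega, by simp [Prod.snd_add]; omega⟩).mp h
  apply hne
  rw [Prod.ext_iff] at h0 ⊢
  simp only [Prod.fst_add, Prod.snd_add, Prod.fst_zero, Prod.snd_zero] at h0
  simp only [Prod.fst_neg, Prod.snd_neg]
  omega

lemma psi_unit_opp (a b : ℕ) {d e : ℤ × ℤ} (hd : UnitVec d) (he : UnitVec e)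
    (h : psi a b d + psi a b e = 0) : e = -d := by
  rw [← psi_add] at h
  have b1 := unit_bound hd; have b2 := unit_bound he
  have h0 := (psi_zero_iff a b _ ⟨by simp [Prod.fst_add]; omega, by simp [Prod.fst_add]; omega⟩
    ⟨by simp [Prod.snd_add]; omega, by simp [Prod.snd_add]; omega⟩).mp h
  rw [Prod.ext_iff] at h0 ⊢
  simp only [Prod.fst_add, Prod.snd_add, Prod.fst_zero, Prod.snd_zero] at h0
  simp only [Prod.fst_neg, Prod.snd_neg]
  omega

lemma unit_neg {d : ℤ × ℤ} (h : UnitVec d) : UnitVec (-d) := by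
  unfold UnitVec at *
  simp only [Prod.fst_neg, Prod.snd_neg]
  omega

lemma exists_perp {u : ℤ × ℤ} (hu : UnitVec u) : ∃ z, UnitVec z ∧ Perp z u := by
  rcases hu with ⟨h1, _⟩ | ⟨h1, _⟩
  · exact ⟨(0,1), Or.inr ⟨rfl, Or.inl rfl⟩, Or.inr ⟨rfl, h1⟩⟩
  · exact ⟨(1,0), Or.inl ⟨rfl, Or.inl rfl⟩, Or.inl ⟨rfl, h1⟩⟩

lemma unit_resolve {w z u : ℤ × ℤ} (hw : UnitVec w) (hz : UnitVec z) (hu : UnitVec u)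
    (hp : Perp z u) : w = z ∨ w = -z ∨ w = u ∨ w = -u := by
  unfold UnitVec Perp at *
  simp only [Prod.ext_iff, Prod.fst_neg, Prod.snd_neg]
  omega

lemma perp_ne {z u : ℤ × ℤ} (hz : UnitVec z) (hu : UnitVec u) (hp : Perp z u) :
    z ≠ u ∧ z ≠ -u ∧ u ≠ -z := by
  unfold UnitVec Perp at *
  refine ⟨fun h => ?_, fun h => ?_, fun h => ?_⟩
  · rw [Prod.ext_iff] at h; omega
  · rw [Prod.ext_iff] at h; simp only [Prod.fst_neg, Prod.snd_neg] at h; omega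
  · rw [Prod.ext_iff] at h; simp only [Prod.fst_neg, Prod.snd_neg] at h; omega

lemma perp_flip {z u u' : ℤ × ℤ} (hp : Perp z u) (h : u' = u ∨ u' = -u) :
    Perp (-u') (-z) := by
  unfold Perp at *
  rcases h with rfl | rfl <;> rcases hp with ⟨h1, h2⟩ | ⟨h1, h2⟩
  · right; constructor <;> simp [h1, h2]
  · left; constructor <;> simp [h1, h2]
  · right; constructor <;> simp [h1, h2]
  · left; constructor <;> simp [h1, h2]

-- context: a decomposition
variable {D : Set (G a b).Subgraph}
  (hiso : ∀ H ∈ D, Nonempty (H.coe ≃g cycleGraph 6))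
  (huni : ∀ e ∈ (G a b).edgeSet, ∃! H : D, e ∈ (H : (G a b).Subgraph).edgeSet)

include huni in
lemma edge_unique {H K : (G a b).Subgraph} (hH : H ∈ D) (hK : K ∈ D) {e : Sym2 (Pt a b)}
    (heH : e ∈ H.edgeSet) (heK : e ∈ K.edgeSet) : H = K := by
  have heG : e ∈ (G a b).edgeSet := H.edgeSet_subset heH
  obtain ⟨U, _, hu⟩ := huni e heG
  have h1 := hu ⟨H, hH⟩ heH
  have h2 := hu ⟨K, hK⟩ heK
  rw [← h2] at h1
  exact congrArg Subtype.val h1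

include huni in
lemma bigstep_core {B0 B : (G a b).Subgraph} (hB0 : B0 ∈ D) (hB : B ∈ D)
    {f : ZMod 6 → Pt a b} {δ : ZMod 6 → ℤ × ℤ} (hxf : Hexdata a b B0 f δ)
    {i : ZMod 6} (hstr : δ i = δ (i+1))
    {z : ℤ × ℤ} (hz : UnitVec z) (hperp : Perp z (δ i))
    {g : ZMod 6 → Pt a b} {η : ZMod 6 → ℤ × ℤ} (hxg : Hexdata a b B g η)
    {j0 : ZMod 6} (hgj : g j0 = f (i+1)) (hgj1 : g (j0+1) = f (i+1) + psi a b z) :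
    B ≠ B0 ∧ s(f (i+1), f (i+1) - psi a b z) ∈ B.edgeSet ∧
    ∃ j u', η j = -z ∧ η (j+1) = -z ∧ g (j+1) = f (i+1) + psi a b u' ∧
      (u' = δ i ∨ u' = -δ i) := by
  set u := δ i with hu
  set v := f (i+1) with hv
  have hufst := hxf.2.1 i
  have hstep := hxg.2.2.1
  have hfstep := hxf.2.2.1
  -- B0's two edges at v
  have hfi : f i = v - psi a b u := eq_sub_of_add_eq (hfstep i).symm
  have hfi2 : f (i+2) = v + psi a b u := by
    have := hfstep (i+1)
    rwa [show i+1+1 = i+2 by ring, ← hstr, ← hv] at this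
  have heL : s(f i, v) ∈ B0.edgeSet := (hxf.2.2.2 _).mpr ⟨i, rfl⟩
  have heR : s(v, f (i+2)) ∈ B0.edgeSet := by
    refine (hxf.2.2.2 _).mpr ⟨i+1, ?_⟩
    rw [show i+1+1 = i+2 by ring]
  -- step 1 : η j0 = z
  have hj0 : η j0 = z := by
    refine psi_unit_inj a b (hxg.2.1 j0) hz ?_
    have := hstep j0
    rw [hgj, hgj1] at this
    exact (add_left_cancel this.symm)
  -- step 2 : B ≠ B0
  have hpn := perp_ne hz hufst hperp
  have hBne : B ≠ B0 := by
    intro hEq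
    have he1 : s(v, v + psi a b z) ∈ B0.edgeSet := by
      rw [← hEq]
      have := (hxg.2.2.2 (s(g j0, g (j0+1)))).mpr ⟨j0, rfl⟩
      rwa [hgj, hgj1] at this
    rcases hex_at hxf he1 with h | h
    · rw [show i+1+1 = i+2 by ring, hfi2] at h
      exact hpn.1 (psi_unit_inj a b hz hufst (add_left_cancel h))
    · rw [show i+1+5 = i+6 by ring, zmod6_6, hfi] at h
      have h' : v + (psi a b z + psi a b u) = v := by
        rw [← add_assoc, h]
        abel
      have h'' := add_left_cancel (a := v) (b := psi a b z + psi a b u) (c := 0)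
        (by rw [add_zero]; exact h')
      exact psi_unit_add_ne a b hz hufst hpn.2.2 h''
  -- step 3 : η (j0+5) = z
  have hback : g j0 = g (j0+5) + psi a b (η (j0+5)) := by
    have := hstep (j0+5)
    rwa [show j0+5+1 = j0+6 by ring, zmod6_6] at this
  have hj5 : η (j0+5) = z := by
    rcases unit_resolve (hxg.2.1 (j0+5)) hz hufst hperp with h | h | h | h
    · exact h
    · exfalso
      have hg5 : g (j0+5) = v + psi a b z := by
        rw [hback, h, psi_neg] at hgj
        rw [← hgj]; abel
      have : j0 + 5 = j0 + 1 := hxg.1 (by rw [hg5, hgj1])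
      have h4 : (5 : ZMod 6) = 1 := by exact add_left_cancel this
      exact absurd h4 (by decide)
    · exfalso
      -- η (j0+5) = u : the edge s(g (j0+5), g j0) equals eL, forcing B = B0
      have hg5 : g (j0+5) = v - psi a b u := by
        rw [h] at hback
        rw [hgj] at hback
        exact eq_sub_of_add_eq hback.symm
      have hedge : s(g (j0+5), g (j0+5+1)) ∈ B.edgeSet := (hxg.2.2.2 _).mpr ⟨j0+5, rfl⟩
      rw [show j0+5+1 = j0+6 by ring, zmod6_6, hgj, hg5, ← hfi] at hedge
      exact hBne (edge_unique huni hB hB0 hedge heL)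
    · exfalso
      have hg5 : g (j0+5) = v + psi a b u := by
        rw [h, psi_neg] at hback
        rw [hgj] at hback
        have := eq_sub_of_add_eq hback.symm
        rw [this]; abel_nf; rfl
      have hedge : s(g (j0+5), g (j0+5+1)) ∈ B.edgeSet := (hxg.2.2.2 _).mpr ⟨j0+5, rfl⟩
      rw [show j0+5+1 = j0+6 by ring, zmod6_6, hgj, hg5, ← hfi2, Sym2.eq_swap] at hedge
      exact hBne (edge_unique huni hB hB0 hedge heR)
  -- edge s(v, v - psi z) ∈ B
  have hg5v : g (j0+5) = v - psi a b z := by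
    rw [hj5, hgj] at hback
    exact eq_sub_of_add_eq hback.symm
  have hBedge : s(v, v - psi a b z) ∈ B.edgeSet := by
    have hedge : s(g (j0+5), g (j0+5+1)) ∈ B.edgeSet := (hxg.2.2.2 _).mpr ⟨j0+5, rfl⟩
    rwa [show j0+5+1 = j0+6 by ring, zmod6_6, hgj, hg5v, Sym2.eq_swap] at hedge
  -- step 4 : η (j0+1) and η (j0+4) are horizontal (±u)
  have hj1 : η (j0+1) = u ∨ η (j0+1) = -u := by
    rcases unit_resolve (hxg.2.1 (j0+1)) hz hufst hperp with h | h | h | h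
    · exfalso
      refine hex_no_straight3 hxg (j0+5) ?_ ?_
      · rw [show j0+5+1 = j0+6 by ring, zmod6_6, hj5, hj0]
      · rw [show j0+5+1 = j0+6 by ring, zmod6_6, show j0+5+2 = j0+1 by
          rw [show j0+5+2 = j0+1+6 by ring, zmod6_6], hj0, h]
    · exact absurd (by rw [h, hj0]) (fun hh => hex_backtrack hxg j0 hh)
    · exact Or.inl h
    · exact Or.inr h
  have hj4 : η (j0+4) = u ∨ η (j0+4) = -u := by
    rcases unit_resolve (hxg.2.1 (j0+4)) hz hufst hperp with h | h | h | h
    · exfalso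
      refine hex_no_straight3 hxg (j0+4) ?_ ?_
      · rw [show j0+4+1 = j0+5 by ring, h, hj5]
      · rw [show j0+4+1 = j0+5 by ring, show j0+4+2 = j0+6 by ring, zmod6_6, hj5, hj0]
    · exfalso
      refine hex_backtrack hxg (j0+4) ?_
      rw [show j0+4+1 = j0+5 by ring, hj5, h]
      simp
    · exact Or.inl h
    · exact Or.inr h
  -- step 5 : sum relation forces middle steps
  have hsum := hex_sum6 hxg (j0+5)
  rw [show j0+5+1 = j0+6 by ring, zmod6_6,
      show j0+5+2 = j0+1 by rw [show j0+5+2 = j0+1+6 by ring, zmod6_6],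
      show j0+5+3 = j0+2 by rw [show j0+5+3 = j0+2+6 by ring, zmod6_6],
      show j0+5+4 = j0+3 by rw [show j0+5+4 = j0+3+6 by ring, zmod6_6],
      show j0+5+5 = j0+4 by rw [show j0+5+5 = j0+4+6 by ring, zmod6_6],
      hj5, hj0] at hsum
  have hu2 := hxg.2.1 (j0+2)
  have hu3 := hxg.2.1 (j0+3)
  have c1 := congrArg Prod.fst hsum
  have c2 := congrArg Prod.snd hsum
  simp only [Prod.fst_add, Prod.snd_add, Prod.fst_zero, Prod.snd_zero] at c1 c2
  have hmid : η (j0+2) = -z ∧ η (j0+3) = -z := by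
    constructor <;>
    · rw [Prod.ext_iff]
      simp only [Prod.fst_neg, Prod.snd_neg]
      unfold UnitVec at hz hufst hu2 hu3
      unfold Perp at hperp
      rcases hj1 with h | h <;> rcases hj4 with h' | h' <;>
        simp only [h, h', Prod.fst_neg, Prod.snd_neg] at c1 c2 <;>
        constructor <;> omega
  -- position of the far midpoint
  have hg1 : g (j0+1) = v + psi a b z := hgj1
  have hg2 : g (j0+2) = v + psi a b z + psi a b (η (j0+1)) := by
    have := hstep (j0+1)
    rwa [show j0+1+1 = j0+2 by ring, hg1] at this
  have hg3 : g (j0+3) = v + psi a b (η (j0+1)) := by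
    have := hstep (j0+2)
    rw [show j0+2+1 = j0+3 by ring, hg2, hmid.1, psi_neg] at this
    rw [this]; abel
  refine ⟨hBne, hBedge, j0+2, η (j0+1), hmid.1, ?_, ?_, hj1⟩
  · rw [show j0+2+1 = j0+3 by ring, hmid.2]
  · rw [show j0+2+1 = j0+3 by ring, hg3]

lemma unit_ne_neg_self {d : ℤ × ℤ} (h : UnitVec d) : d ≠ -d := by
  unfold UnitVec at h
  intro hc
  rw [Prod.ext_iff] at hc
  simp only [Prod.fst_neg, Prod.snd_neg] at hc
  omega

include hiso huni in
lemma bigstep {B0 B : (G a b).Subgraph} (hB0 : B0 ∈ D) (hB : B ∈ D)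
    {f : ZMod 6 → Pt a b} {δ : ZMod 6 → ℤ × ℤ} (hxf : Hexdata a b B0 f δ)
    {i : ZMod 6} (hstr : δ i = δ (i+1))
    {z : ℤ × ℤ} (hz : UnitVec z) (hperp : Perp z (δ i))
    (hmem : s(f (i+1), f (i+1) + psi a b z) ∈ B.edgeSet) :
    B ≠ B0 ∧ s(f (i+1), f (i+1) - psi a b z) ∈ B.edgeSet ∧
    ∃ (g : ZMod 6 → Pt a b) (η : ZMod 6 → ℤ × ℤ) (j : ZMod 6) (u' : ℤ × ℤ),
      Hexdata a b B g η ∧ η j = -z ∧ η (j+1) = -z ∧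
      g (j+1) = f (i+1) + psi a b u' ∧ (u' = δ i ∨ u' = -δ i) := by
  obtain ⟨g, η, hxg⟩ := exists_hex a b B (hiso B hB)
  obtain ⟨t, ht⟩ := (hxg.2.2.2 _).mp hmem
  rw [Sym2.eq_iff] at ht
  rcases ht with ⟨h1, h2⟩ | ⟨h1, h2⟩
  · obtain ⟨hne, hedge, j, u', h3, h4, h5, h6⟩ :=
      bigstep_core huni hB0 hB hxf hstr hz hperp hxg h1.symm h2.symm
    exact ⟨hne, hedge, g, η, j, u', hxg, h3, h4, h5, h6⟩
  · have hxg' := hex_reverse hxg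
    have hgj : (fun i => g (-i)) (-(t+1)) = f (i+1) := by simpa using h1.symm
    have hgj1 : (fun i => g (-i)) (-(t+1)+1) = f (i+1) + psi a b z := by
      rw [show -(t+1)+1 = -t by ring]
      simpa using h2.symm
    obtain ⟨hne, hedge, j, u', h3, h4, h5, h6⟩ :=
      bigstep_core huni hB0 hB hxf hstr hz hperp hxg' hgj hgj1
    exact ⟨hne, hedge, _, _, j, u', hxg', h3, h4, h5, h6⟩

include hiso huni in
lemma contradiction_main : False := by
  classical
  -- an initial edge and its cycle C
  have hadj : (G a b).Adj ((0 : Fin (a+7)), (0 : Fin (b+7)))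
      (((0 : Fin (a+7)), (0 : Fin (b+7))) + psi a b (1,0)) :=
    (adj_iff a b _ _).mpr ⟨(1,0), Or.inl ⟨rfl, Or.inl rfl⟩, rfl⟩
  obtain ⟨U, hU, -⟩ := huni _ (((G a b).mem_edgeSet).mpr hadj)
  obtain ⟨C, hC⟩ := U
  obtain ⟨f, δ, hxf⟩ := exists_hex a b C (hiso C hC)
  obtain ⟨i, hstr⟩ := hex_straight2 hxf
  obtain ⟨z, hz, hperp⟩ := exists_perp (hxf.2.1 i)
  -- the cycle B across the straight 2-path
  have he1G : s(f (i+1), f (i+1) + psi a b z) ∈ (G a b).edgeSet :=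
    ((G a b).mem_edgeSet).mpr ((adj_iff a b _ _).mpr ⟨z, hz, rfl⟩)
  obtain ⟨U1, hU1, -⟩ := huni _ he1G
  obtain ⟨B, hB⟩ := U1
  obtain ⟨hne1, hBedge, g, η, j, u', hxg, h3, h4, h5, h6⟩ :=
    bigstep hiso huni hC hB hxf hstr hz hperp hU1
  -- data for the second application
  have hstr2 : η j = η (j+1) := by rw [h3, h4]
  have hu'unit : UnitVec u' := by
    rcases h6 with rfl | rfl
    · exact hxf.2.1 i
    · exact unit_neg (hxf.2.1 i)
  have hz2 : UnitVec (-u') := unit_neg hu'unit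
  have hperp2 : Perp (-u') (η j) := by rw [h3]; exact perp_flip hperp h6
  have hfi2 : f (i+2) = f (i+1) + psi a b (δ i) := by
    have := hxf.2.2.1 (i+1)
    rw [show i+1+1 = i+2 by ring] at this
    rw [this, ← hstr]
  have hfi : f (i+1) = f i + psi a b (δ i) := hxf.2.2.1 i
  have hw : g (j+1) + psi a b (-u') = f (i+1) := by rw [h5, psi_neg]; abel
  have hmem2 : s(g (j+1), g (j+1) + psi a b (-u')) ∈ C.edgeSet := by
    rw [hw, h5]
    rcases h6 with rfl | rfl
    · rw [← hfi2]
      exact (hxf.2.2.2 _).mpr ⟨i+1, by rw [show i+1+1 = i+2 by ring, Sym2.eq_swap]⟩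
    · have hX : f (i+1) + psi a b (-δ i) = f i := by rw [psi_neg, hfi]; abel
      rw [hX]
      exact (hxf.2.2.2 _).mpr ⟨i, rfl⟩
  obtain ⟨hne2, hCedge, -⟩ := bigstep hiso huni hB hC hxg hstr2 hz2 hperp2 hmem2
  -- hCedge : s(g (j+1), g (j+1) - psi a b (-u')) ∈ C.edgeSet
  have hsub : g (j+1) - psi a b (-u') = f (i+1) + psi a b u' + psi a b u' := by
    rw [h5, psi_neg]; abel
  rw [hsub, h5] at hCedge
  -- final contradiction
  rcases h6 with rfl | rfl
  · -- u' = δ i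
    have hY : f (i+1) + psi a b (δ i) + psi a b (δ i) = f (i+2) + psi a b (δ i) := by
      rw [hfi2]
    rw [hY, ← hfi2] at hCedge
    rcases hex_at hxf hCedge with h | h
    · have hs := hxf.2.2.1 (i+2)
      rw [← h] at hs
      have hd : δ i = δ (i+2) :=
        psi_unit_inj a b (hxf.2.1 i) (hxf.2.1 (i+2)) (add_left_cancel hs)
      exact hex_no_straight3 hxf i hstr (by rw [← hstr]; exact hd)
    · rw [show i+2+5 = i+1 by rw [show i+2+5 = i+1+6 by ring, zmod6_6], hfi2] at h
      have : psi a b (δ i) + psi a b (δ i) = 0 := by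
        have h' := add_left_cancel (a := f (i+1)) (b := psi a b (δ i) + psi a b (δ i)) (c := 0)
          (by rw [add_zero, ← add_assoc]; exact h)
        exact h'
      exact psi_unit_add_ne a b (hxf.2.1 i) (hxf.2.1 i) (unit_ne_neg_self (hxf.2.1 i)) this
  · -- u' = -δ i
    have hX : f (i+1) + psi a b (-δ i) = f i := by rw [psi_neg, hfi]; abel
    rw [hX] at hCedge
    rcases hex_at hxf hCedge with h | h
    · rw [hfi] at h
      have : psi a b (-δ i) = psi a b (δ i) := add_left_cancel h
      have := psi_unit_inj a b (unit_neg (hxf.2.1 i)) (hxf.2.1 i) this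
      exact unit_ne_neg_self (hxf.2.1 i) this.symm
    · have hs := hxf.2.2.1 (i+5)
      rw [show i+5+1 = i+6 by ring, zmod6_6] at hs
      -- hs : f i = f (i+5) + psi a b (δ (i+5)), h : f i + psi (-δ i) = f (i+5)
      rw [← h] at hs
      have hcomb : f i + (psi a b (-δ i) + psi a b (δ (i+5))) = f i + 0 := by
        rw [add_zero, ← add_assoc]
        exact hs.symm
      have h0 := add_left_cancel hcomb
      have hd : δ (i+5) = δ i := by
        have := psi_unit_opp a b (unit_neg (hxf.2.1 i)) (hxf.2.1 (i+5)) h0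
        simpa using this
      refine hex_no_straight3 hxf (i+5) ?_ ?_
      · rw [show i+5+1 = i+6 by ring, zmod6_6, hd]
      · rw [show i+5+1 = i+6 by ring, zmod6_6, show i+5+2 = i+1 by
          rw [show i+5+2 = i+1+6 by ring, zmod6_6]]
        exact hstr


end NoC6Aux

theorem no_c6_decomposition_of_large_torus (m n : ℕ) (hm : 7 ≤ m) (hn : 7 ≤ n) :
    ¬ CycleDecomposes 6 (cycleGraph m □ cycleGraph n) := by
  obtain ⟨a, rfl⟩ : ∃ a, m = a + 7 := ⟨m - 7, by omega⟩
  obtain ⟨b, rfl⟩ : ∃ b, n = b + 7 := ⟨n - 7, by omega⟩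
  rintro ⟨D, hiso, huni⟩
  exact NoC6Aux.contradiction_main hiso huni
end

section
/- Let m and n be odd integers with 3 ≤ m ≤ n < 2m. Then C_n decomposes C_m □ C_n. -/
/-!
The rows `T, …, m - 1` of `C_m □ C_n`, where `T = n - m`, are `n`-cycles. All other edges (the
horizontal edges of the first `T` rows and all vertical edges) are covered by the `n` translates,
along the `C_n` factor, of a single zigzag: it descends rows `0, …, T - 1` alternating a horizontal
and a vertical step between two neighbouring columns, which brings it back to its starting column
because `T` is even, and then runs straight down rows `T, …, m - 1` back to row `0`, for a length of
`2T + (m - T) = n`. These `(m - T) + n = 2m` cycles of length `n` cover every edge of the torus;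
since the 4-regular torus has exactly `2mn` edges, they cover each edge exactly once.
-/

open SimpleGraph

namespace SimpleGraph

variable {V ι : Type*} {G : SimpleGraph V}

theorem isCycleDecomposition_range_toSubgraph {k : ℕ} (f : ι → Copy (cycleGraph k) G)
    (hf : Function.Bijective fun p : ι × (cycleGraph k).edgeSet => (f p.1).mapEdgeSet p.2) :
    IsCycleDecomposition G k (Set.range fun i => (f i).toSubgraph) := by
  refine ⟨?_, fun e he => ?_⟩
  · rintro _ ⟨i, rfl⟩
    exact ⟨(f i).isoToSubgraph.symm⟩
  obtain ⟨⟨i, c⟩, hc⟩ := hf.2 ⟨e, he⟩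
  have mem_iff : ∀ i, e ∈ (f i).toSubgraph.edgeSet ↔
      ∃ c : (cycleGraph k).edgeSet, ((f i).mapEdgeSet c : Sym2 V) = e := by
    intro i
    simp [Copy.toSubgraph, Copy.mapEdgeSet, Hom.mapEdgeSet]
  refine ⟨⟨_, i, rfl⟩, (mem_iff i).2 ⟨c, congrArg Subtype.val hc⟩, ?_⟩
  rintro ⟨_, i', rfl⟩ he'
  obtain ⟨c', hc'⟩ := (mem_iff i').1 he'
  obtain rfl : i' = i := congrArg Prod.fst <| @hf.1 (i', c') (i, c)
    (Subtype.ext (hc'.trans (congrArg Subtype.val hc).symm))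
  rfl

theorem cycleGraph_adj_add_one_s14 {n : ℕ} [NeZero n] (hn : 2 ≤ n) (k : Fin n) :
    (cycleGraph n).Adj k (k + 1) := by
  obtain ⟨n, rfl⟩ := Nat.exists_eq_add_of_le' hn
  exact cycleGraph_adj.2 (Or.inr (add_sub_cancel_left k 1))

theorem eq_add_one_or_eq_add_one_of_cycleGraph_adj {n : ℕ} [NeZero n] {u v : Fin n}
    (h : (cycleGraph n).Adj u v) : v = u + 1 ∨ u = v + 1 := by
  obtain _ | _ | n := n
  · exact u.elim0
  · exact (cycleGraph_one_adj h).elim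
  rw [cycleGraph_adj, sub_eq_iff_eq_add', sub_eq_iff_eq_add'] at h
  exact h.symm

def cycleGraphHom {n : ℕ} [NeZero n] (f : Fin n → V) (hf : ∀ k, G.Adj (f k) (f (k + 1))) :
    cycleGraph n →g G where
  toFun := f
  map_rel' hab := by
    rcases eq_add_one_or_eq_add_one_of_cycleGraph_adj hab with rfl | rfl
    exacts [hf _, (hf _).symm]

theorem exists_eq_of_mem_edgeSet_boxProd_cycleGraph {m n : ℕ} [NeZero m] [NeZero n]
    {e : Sym2 (Fin m × Fin n)} (he : e ∈ (cycleGraph m □ cycleGraph n).edgeSet) :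
    ∃ x, e = s(x, x + (1, 0)) ∨ e = s(x, x + (0, 1)) := by
  induction e using Sym2.ind with | _ a b => ?_
  obtain ⟨a₁, a₂⟩ := a
  obtain ⟨b₁, b₂⟩ := b
  rcases boxProd_adj.1 he with ⟨h : (cycleGraph m).Adj a₁ b₁, rfl : a₂ = b₂⟩ |
      ⟨h : (cycleGraph n).Adj a₂ b₂, rfl : a₁ = b₁⟩
  · rcases eq_add_one_or_eq_add_one_of_cycleGraph_adj h with rfl | rfl
    · exact ⟨(a₁, a₂), .inl (by simp)⟩
    · exact ⟨(b₁, a₂), .inl (by rw [Sym2.eq_swap]; simp)⟩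
  · rcases eq_add_one_or_eq_add_one_of_cycleGraph_adj h with rfl | rfl
    · exact ⟨(a₁, a₂), .inr (by simp)⟩
    · exact ⟨(a₁, b₂), .inr (by rw [Sym2.eq_swap]; simp)⟩

theorem IsRegularOfDegree.two_mul_natCard_edgeSet [Fintype V] [G.LocallyFinite] {d : ℕ}
    (h : G.IsRegularOfDegree d) : 2 * Nat.card G.edgeSet = d * Nat.card V := by
  classical
  rw [Nat.card_eq_fintype_card, card_edgeSet, ← sum_degrees_eq_twice_card_edges,
    Finset.sum_eq_card_nsmul fun v _ => by convert h.degree_eq v, Nat.card_eq_fintype_card,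
    smul_eq_mul, Finset.card_univ, mul_comm]

theorem IsRegularOfDegree.boxProd {W : Type*} {H : SimpleGraph W} [G.LocallyFinite]
    [H.LocallyFinite] {d e : ℕ} (hG : G.IsRegularOfDegree d) (hH : H.IsRegularOfDegree e) :
    (G □ H).IsRegularOfDegree (d + e) := fun x => by
  rw [degree_boxProd, hG.degree_eq, hH.degree_eq]

theorem cycleGraph_isRegularOfDegree {n : ℕ} (hn : 3 ≤ n) :
    (cycleGraph n).IsRegularOfDegree 2 := by
  obtain ⟨n, rfl⟩ := Nat.exists_eq_add_of_le' hn
  exact fun _ => cycleGraph_degree_three_le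

end SimpleGraph

open Fin.NatCast

-- Row and column offset of the `k`-th vertex of the zigzag: `(0, 0), (0, 1), (1, 1), (1, 0),
-- (2, 0), (2, 1), …` up to row `T - 1`, then `(T, 0), (T + 1, 0), …, (m - 1, 0)`.
def zigzagRow (T k : ℕ) : ℕ := if k < 2 * T then k / 2 else k - T

def zigzagShift (T k : ℕ) : ℕ := if k < 2 * T then (k + 1) / 2 % 2 else 0

theorem zigzagRow_lt {m T k : ℕ} (hTm : T ≤ m) (hk : k < m + T) : zigzagRow T k < m := by
  unfold zigzagRow; split_ifs <;> omega

theorem zigzagShift_le_one (T k : ℕ) : zigzagShift T k ≤ 1 := by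
  unfold zigzagShift; split_ifs <;> omega

theorem eq_of_zigzagRow_eq_of_zigzagShift_eq {T k k' : ℕ}
    (hrow : zigzagRow T k = zigzagRow T k') (hshift : zigzagShift T k = zigzagShift T k') :
    k = k' := by
  unfold zigzagRow zigzagShift at *; split_ifs at * <;> omega

def zigzag (m n T : ℕ) [NeZero m] [NeZero n] (j k : Fin n) : Fin m × Fin n :=
  ((zigzagRow T k : Fin m), j + (zigzagShift T k : Fin n))

section zigzag

variable {m n T : ℕ} [NeZero m] [NeZero n]

theorem zigzag_natCast (hn : m + T = n) (hTm : T ≤ m) {k : ℕ} (hk : k ≤ n) (j : Fin n) :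
    zigzag m n T j k = ((zigzagRow T k : Fin m), j + (zigzagShift T k : Fin n)) := by
  rcases hk.lt_or_eq with hk | hk
  · simp [zigzag, Fin.val_cast_of_lt hk]
  -- position `n` is `0` in `Fin n`, and row `m` is `0` in `Fin m`
  · have hrow : zigzagRow T k = m := by unfold zigzagRow; split_ifs <;> omega
    have hshift : zigzagShift T k = 0 := by unfold zigzagShift; split_ifs <;> omega
    rw [hrow, hshift, hk, Fin.natCast_self]
    simp [zigzag, zigzagRow, zigzagShift]

theorem zigzag_two_mul (hn : m + T = n) (hT : Even T) (hTm : T ≤ m) {r : ℕ} (hr : r ≤ T)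
    (j : Fin n) : zigzag m n T j (2 * r : ℕ) = ((r : Fin m), j + (r % 2 : ℕ)) := by
  rw [zigzag_natCast hn hTm (by omega)]
  obtain ⟨t, rfl⟩ := hT
  congr 3 <;> simp only [zigzagRow, zigzagShift] <;> split_ifs <;> omega

theorem zigzag_two_mul_add_one (hn : m + T = n) (hTm : T ≤ m) {r : ℕ} (hr : r < T)
    (j : Fin n) : zigzag m n T j (2 * r + 1 : ℕ) = ((r : Fin m), j + ((r + 1) % 2 : ℕ)) := by
  rw [zigzag_natCast hn hTm (by omega)]
  congr 3 <;> simp only [zigzagRow, zigzagShift] <;> split_ifs <;> omega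

theorem zigzag_add (hn : m + T = n) {r : ℕ} (hTr : T ≤ r) (hr : r ≤ m) (j : Fin n) :
    zigzag m n T j (r + T : ℕ) = ((r : Fin m), j) := by
  rw [zigzag_natCast hn (by omega) (by omega)]
  have hrow : zigzagRow T (r + T) = r := by unfold zigzagRow; split_ifs <;> omega
  have hshift : zigzagShift T (r + T) = 0 := by unfold zigzagShift; split_ifs <;> omega
  simp [hrow, hshift]

variable (hn : m + T = n) (hTm : T ≤ m)
include hn hTm

theorem zigzag_injective (hm : 2 ≤ m) (j : Fin n) : Function.Injective (zigzag m n T j) := by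
  intro k k' h
  simp only [zigzag, Prod.mk.injEq, add_right_inj, Fin.ext_iff, Fin.val_natCast] at h
  rw [Nat.mod_eq_of_lt (zigzagRow_lt hTm (hn ▸ k.isLt)),
    Nat.mod_eq_of_lt (zigzagRow_lt hTm (hn ▸ k'.isLt)),
    Nat.mod_eq_of_lt (by have := zigzagShift_le_one T k; omega),
    Nat.mod_eq_of_lt (by have := zigzagShift_le_one T k'; omega)] at h
  exact Fin.ext (eq_of_zigzagRow_eq_of_zigzagShift_eq h.1 h.2)

variable (hT : Even T)
include hT

theorem exists_zigzag_edge_eq_horizontal {x : Fin m × Fin n} (hx : x.1.val < T) :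
    ∃ j k, s(zigzag m n T j k, zigzag m n T j (k + 1)) = s(x, x + (0, 1)) := by
  refine ⟨x.2, (2 * x.1.val : ℕ), ?_⟩
  rw [← Nat.cast_add_one, zigzag_two_mul hn hT hTm hx.le, zigzag_two_mul_add_one hn hTm hx,
    Fin.cast_val_eq_self]
  rcases Nat.mod_two_eq_zero_or_one x.1.val with h | h
  · rw [h, show (x.1.val + 1) % 2 = 1 by omega]
    simp [Prod.ext_iff]
  · rw [h, show (x.1.val + 1) % 2 = 0 by omega, Sym2.eq_swap]
    simp [Prod.ext_iff]

theorem exists_zigzag_edge_eq_vertical (x : Fin m × Fin n) :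
    ∃ j k, s(zigzag m n T j k, zigzag m n T j (k + 1)) = s(x, x + (1, 0)) := by
  rcases Nat.lt_or_ge x.1.val T with hx | hx
  · refine ⟨x.2 - ((x.1.val + 1) % 2 : ℕ), (2 * x.1.val + 1 : ℕ), ?_⟩
    rw [← Nat.cast_add_one, show 2 * x.1.val + 1 + 1 = 2 * (x.1.val + 1) by ring,
      zigzag_two_mul_add_one hn hTm hx, zigzag_two_mul hn hT hTm hx]
    simp [Prod.ext_iff]
  · refine ⟨x.2, (x.1.val + T : ℕ), ?_⟩
    rw [← Nat.cast_add_one, show x.1.val + T + 1 = x.1.val + 1 + T by ring,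
      zigzag_add hn hx x.1.isLt.le, zigzag_add hn (by omega) x.1.isLt]
    simp [Prod.ext_iff]

theorem zigzag_adj (hm : 2 ≤ m) (j k : Fin n) :
    (cycleGraph m □ cycleGraph n).Adj (zigzag m n T j k) (zigzag m n T j (k + 1)) := by
  obtain ⟨K, hK, rfl⟩ : ∃ K < n, (K : Fin n) = k := ⟨k, k.isLt, Fin.cast_val_eq_self k⟩
  rw [← Nat.cast_add_one]
  obtain ⟨r, hr, rfl | rfl⟩ | ⟨r, hTr, hrm, rfl⟩ :
      (∃ r < T, K = 2 * r ∨ K = 2 * r + 1) ∨ ∃ r, T ≤ r ∧ r < m ∧ K = r + T := by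
    by_cases hK : K < 2 * T
    · exact .inl ⟨K / 2, by omega, by omega⟩
    · exact .inr ⟨K - T, by omega, by omega, by omega⟩
  · rw [zigzag_two_mul hn hT hTm hr.le, zigzag_two_mul_add_one hn hTm hr]
    refine boxProd_adj_right.2 ?_
    rcases Nat.mod_two_eq_zero_or_one r with h | h
    · rw [h, show (r + 1) % 2 = 1 by omega, Nat.cast_zero, add_zero, Nat.cast_one]
      exact cycleGraph_adj_add_one_s14 (by omega) j
    · rw [h, show (r + 1) % 2 = 0 by omega, Nat.cast_zero, add_zero, Nat.cast_one]
      exact (cycleGraph_adj_add_one_s14 (by omega) j).symm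
  · rw [show 2 * r + 1 + 1 = 2 * (r + 1) by ring, zigzag_two_mul_add_one hn hTm hr,
      zigzag_two_mul hn hT hTm hr, Nat.cast_add_one]
    exact boxProd_adj_left.2 (cycleGraph_adj_add_one_s14 hm _)
  · rw [show r + T + 1 = r + 1 + T by ring, zigzag_add hn hTr hrm.le,
      zigzag_add hn (by omega) hrm, Nat.cast_add_one]
    exact boxProd_adj_left.2 (cycleGraph_adj_add_one_s14 hm _)

end zigzag

section torus

variable {m n T : ℕ} [NeZero m] [NeZero n]

def torusCycle (hn : m + T = n) (hTm : T ≤ m) (hT : Even T) (hm : 2 ≤ m) :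
    Fin (m - T) ⊕ Fin n → Copy (cycleGraph n) (cycleGraph m □ cycleGraph n)
  | .inl r => ((cycleGraph m).boxProdRight (cycleGraph n) ((T + r : ℕ) : Fin m)).toCopy
  | .inr j => (cycleGraphHom (zigzag m n T j) (zigzag_adj hn hTm hT hm j)).toCopy
      (zigzag_injective hn hTm hm j)

variable (hn : m + T = n) (hTm : T ≤ m) (hT : Even T)
include hn hTm hT

theorem torusCycle_mapEdgeSet_surjective (hm : 2 ≤ m) :
    Function.Surjective fun p : (Fin (m - T) ⊕ Fin n) × (cycleGraph n).edgeSet =>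
      (torusCycle hn hTm hT hm p.1).mapEdgeSet p.2 := by
  have edge_mem : ∀ i k, ∃ p : (Fin (m - T) ⊕ Fin n) × (cycleGraph n).edgeSet,
      ((torusCycle hn hTm hT hm p.1).mapEdgeSet p.2 : Sym2 _) =
        s(torusCycle hn hTm hT hm i k, torusCycle hn hTm hT hm i (k + 1)) :=
    fun i k => ⟨(i, ⟨s(k, k + 1), cycleGraph_adj_add_one_s14 (by omega) k⟩), rfl⟩
  rintro ⟨e, he⟩
  obtain ⟨x, rfl | rfl⟩ := exists_eq_of_mem_edgeSet_boxProd_cycleGraph he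
  · obtain ⟨j, k, h⟩ := exists_zigzag_edge_eq_vertical hn hTm hT x
    obtain ⟨p, hp⟩ := edge_mem (.inr j) k
    exact ⟨p, Subtype.ext (hp.trans h)⟩
  rcases Nat.lt_or_ge x.1.val T with hx | hx
  · obtain ⟨j, k, h⟩ := exists_zigzag_edge_eq_horizontal hn hTm hT hx
    obtain ⟨p, hp⟩ := edge_mem (.inr j) k
    exact ⟨p, Subtype.ext (hp.trans h)⟩
  · obtain ⟨p, hp⟩ := edge_mem (.inl ⟨x.1 - T, by omega⟩) x.2
    refine ⟨p, Subtype.ext (hp.trans ?_)⟩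
    simp [torusCycle, Nat.add_sub_cancel' hx, Prod.ext_iff]

theorem torusCycle_mapEdgeSet_bijective (hm : 3 ≤ m) :
    Function.Bijective fun p : (Fin (m - T) ⊕ Fin n) × (cycleGraph n).edgeSet =>
      (torusCycle hn hTm hT (by omega) p.1).mapEdgeSet p.2 := by
  refine (torusCycle_mapEdgeSet_surjective hn hTm hT _).bijective_of_nat_card_le ?_
  have hcycle := (cycleGraph_isRegularOfDegree (n := n) (by omega)).two_mul_natCard_edgeSet
  have htorus := ((cycleGraph_isRegularOfDegree hm).boxProd
    (cycleGraph_isRegularOfDegree (n := n) (by omega))).two_mul_natCard_edgeSet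
  rw [Nat.card_prod, Nat.card_sum, Nat.card_fin, Nat.card_fin]
  rw [Nat.card_prod, Nat.card_fin, Nat.card_fin] at htorus
  rw [Nat.card_fin] at hcycle
  rw [show Nat.card (cycleGraph n).edgeSet = n by omega, show m - T + n = 2 * m by omega]
  linarith

end torus

theorem cn_decomposes_torus_of_odd (m n : ℕ) (hmo : Odd m) (hno : Odd n)
    (hm : 3 ≤ m) (hmn : m ≤ n) (hn2m : n < 2 * m) :
    CycleDecomposes n (cycleGraph m □ cycleGraph n) := by
  have : NeZero m := ⟨by omega⟩
  have : NeZero n := ⟨by omega⟩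
  obtain ⟨T, hn⟩ : ∃ T, m + T = n := ⟨n - m, by omega⟩
  have hT : Even T := (Nat.odd_add.1 (hn ▸ hno)).1 hmo
  exact ⟨_, isCycleDecomposition_range_toSubgraph _
    (torusCycle_mapEdgeSet_bijective hn (by omega) hT hm)⟩
end

section
/- Let k be an odd integer with k ≥ 3, and let m and n be integers with m > k and n > k. Then C_k does not decompose C_m □ C_n. -/
open SimpleGraph Finset


open Fin.CommRing in
lemma no_cycle_hom (k m n : ℕ) (hk : 2 ≤ k) (hko : Odd k) (hm : k < m) (hn : k < n)
    (φ : cycleGraph k →g (cycleGraph m □ cycleGraph n)) : False := by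
  obtain ⟨k, rfl⟩ : ∃ k', k = k' + 2 := ⟨k - 2, by omega⟩
  obtain ⟨m, rfl⟩ : ∃ m', m = m' + 2 := ⟨m - 2, by omega⟩
  obtain ⟨n, rfl⟩ : ∃ n', n = n' + 2 := ⟨n - 2, by omega⟩
  have key : ∀ i : Fin (k + 2), ∃ p : ℤ × ℤ,
      ((|p.1| = 1 ∧ p.2 = 0) ∨ (p.1 = 0 ∧ |p.2| = 1)) ∧
      (φ (i + 1)).1 = (φ i).1 + ((p.1 : ℤ) : Fin (m + 2)) ∧
      (φ (i + 1)).2 = (φ i).2 + ((p.2 : ℤ) : Fin (n + 2)) := by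
    intro i
    have hadj := φ.map_adj (show (cycleGraph (k + 2)).Adj i (i + 1) by
      rw [cycleGraph_adj]; right; exact add_sub_cancel_left i 1)
    rw [boxProd_adj] at hadj
    rcases hadj with ⟨h1, h2⟩ | ⟨h1, h2⟩
    · rw [cycleGraph_adj] at h1
      rcases h1 with h | h
      · exact ⟨(-1, 0), Or.inl ⟨by norm_num, rfl⟩,
          by push_cast; rw [← h]; ring, by push_cast; rw [h2, add_zero]⟩
      · exact ⟨(1, 0), Or.inl ⟨by norm_num, rfl⟩,
          by push_cast; rw [← h]; ring, by push_cast; rw [h2, add_zero]⟩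
    · rw [cycleGraph_adj] at h1
      rcases h1 with h | h
      · exact ⟨(0, -1), Or.inr ⟨rfl, by norm_num⟩,
          by push_cast; rw [h2, add_zero], by push_cast; rw [← h]; ring⟩
      · exact ⟨(0, 1), Or.inr ⟨rfl, by norm_num⟩,
          by push_cast; rw [h2, add_zero], by push_cast; rw [← h]; ring⟩
  choose p hp hx hy using key
  set Sx : ℤ := ∑ i : Fin (k + 2), (p i).1 with hSx
  set Sy : ℤ := ∑ i : Fin (k + 2), (p i).2 with hSy
  set A : ℤ := ∑ i : Fin (k + 2), |(p i).1| with hA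
  set B : ℤ := ∑ i : Fin (k + 2), |(p i).2| with hB
  -- telescoping
  have telx : ((Sx : ℤ) : Fin (m + 2)) = 0 := by
    rw [hSx]; push_cast
    have : ∀ i : Fin (k + 2), ((p i).1 : Fin (m + 2)) = (φ (i + 1)).1 - (φ i).1 := by
      intro i; rw [hx i]; ring
    rw [Finset.sum_congr rfl (fun i _ => this i), Finset.sum_sub_distrib, sub_eq_zero]
    exact (Fintype.sum_equiv (Equiv.addRight (1 : Fin (k+2)))
      (fun i => (φ (i + 1)).1) (fun i => (φ i).1) (fun i => rfl))
  have tely : ((Sy : ℤ) : Fin (n + 2)) = 0 := by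
    rw [hSy]; push_cast
    have : ∀ i : Fin (k + 2), ((p i).2 : Fin (n + 2)) = (φ (i + 1)).2 - (φ i).2 := by
      intro i; rw [hy i]; ring
    rw [Finset.sum_congr rfl (fun i _ => this i), Finset.sum_sub_distrib, sub_eq_zero]
    exact (Fintype.sum_equiv (Equiv.addRight (1 : Fin (k+2)))
      (fun i => (φ (i + 1)).2) (fun i => (φ i).2) (fun i => rfl))
  have hAB : A + B = (k + 2 : ℤ) := by
    rw [hA, hB, ← Finset.sum_add_distrib]
    have : ∀ i : Fin (k + 2), |(p i).1| + |(p i).2| = 1 := by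
      intro i
      rcases hp i with ⟨h1, h2⟩ | ⟨h1, h2⟩
      · rw [h1, h2]; simp
      · rw [h1, h2]; simp
    rw [Finset.sum_congr rfl (fun i _ => this i)]
    simp
  have habs : ∀ S C : ℤ, S = Sx ∧ C = A ∨ S = Sy ∧ C = B → |S| ≤ C := by
    intro S C h
    rcases h with ⟨rfl, rfl⟩ | ⟨rfl, rfl⟩
    · exact Finset.abs_sum_le_sum_abs _ _
    · exact Finset.abs_sum_le_sum_abs _ _
  have hA0 : 0 ≤ A := Finset.sum_nonneg fun i _ => abs_nonneg _
  have hB0 : 0 ≤ B := Finset.sum_nonneg fun i _ => abs_nonneg _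
  have hSx0 : Sx = 0 := by
    have hdvd : ((m + 2 : ℕ) : ℤ) ∣ Sx :=
      (CharP.intCast_eq_zero_iff (Fin (m + 2)) (m + 2) Sx).mp telx
    refine Int.eq_zero_of_abs_lt_dvd hdvd ?_
    have := habs Sx A (Or.inl ⟨rfl, rfl⟩)
    have : |Sx| ≤ A + B := by linarith
    rw [hAB] at this
    push_cast
    omega
  have hSy0 : Sy = 0 := by
    have hdvd : ((n + 2 : ℕ) : ℤ) ∣ Sy :=
      (CharP.intCast_eq_zero_iff (Fin (n + 2)) (n + 2) Sy).mp tely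
    refine Int.eq_zero_of_abs_lt_dvd hdvd ?_
    have := habs Sy B (Or.inr ⟨rfl, rfl⟩)
    have : |Sy| ≤ A + B := by linarith
    rw [hAB] at this
    push_cast
    omega
  -- parity
  have evenA : Even A := by
    have : A = ∑ i : Fin (k + 2), (|(p i).1| - (p i).1) := by
      rw [Finset.sum_sub_distrib, ← hA, ← hSx, hSx0, sub_zero]
    rw [this]
    refine Finset.even_sum _ fun i _ => ?_
    rcases abs_choice ((p i).1) with h | h
    · rw [h, sub_self]; exact Even.zero
    · rw [h]; exact ⟨-(p i).1, by ring⟩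
  have evenB : Even B := by
    have : B = ∑ i : Fin (k + 2), (|(p i).2| - (p i).2) := by
      rw [Finset.sum_sub_distrib, ← hB, ← hSy, hSy0, sub_zero]
    rw [this]
    refine Finset.even_sum _ fun i _ => ?_
    rcases abs_choice ((p i).2) with h | h
    · rw [h, sub_self]; exact Even.zero
    · rw [h]; exact ⟨-(p i).2, by ring⟩
  have hev : Even (A + B) := evenA.add evenB
  rw [hAB] at hev
  obtain ⟨t, ht⟩ := hev
  obtain ⟨s, hs⟩ := hko
  omega


theorem no_odd_cycle_decomposition_of_large_torus (k m n : ℕ) (hk : 3 ≤ k)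
    (hko : Odd k) (hm : k < m) (hn : k < n) :
    ¬ CycleDecomposes k (cycleGraph m □ cycleGraph n) := by
  rintro ⟨D, hiso, hcov⟩
  obtain ⟨m, rfl⟩ : ∃ m', m = m' + 2 := ⟨m - 2, by omega⟩
  obtain ⟨n, rfl⟩ : ∃ n', n = n' + 2 := ⟨n - 2, by omega⟩
  have hadj : (cycleGraph (m + 2) □ cycleGraph (n + 2)).Adj (0, 0) (1, 0) := by
    rw [boxProd_adj]
    left
    exact ⟨by rw [cycleGraph_adj]; right; simp, rfl⟩
  obtain ⟨H, hH, -⟩ := hcov s((0, 0), (1, 0)) ((mem_edgeSet _).mpr hadj)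
  obtain ⟨e⟩ := hiso H H.2
  exact no_cycle_hom k (m + 2) (n + 2) (by omega) hko hm hn
    ((H : (cycleGraph (m + 2) □ cycleGraph (n + 2)).Subgraph).hom.comp e.symm.toHom)
end
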